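/- arXiv:2201.11013 — 8 statements merged into one kernel-verified Lean document; each statement's English description precedes it below -/
import Mathlib

section
/- Duality relation for I_n^σ: Let K ≥ 2 be an integer, α, γ ∈ ℝ^K with α_i > 0 and γ_i > 0, σ > 0, and let n be a nonnegative integer. Then ∫_{S_K} (∑_{k=1}^K γ_k y_k^σ)^n · ∏_{i=1}^K y_i^{α_i − 1} d^{K−1}y = σ^{−(K−1)} · (∏_{l=1}^K γ_l^{−α_l/σ}) · ∫_{S_K} (∑_{j=1}^K (x_j/γ_j)^{1/σ})^{−(α_+ + σ n)} · ∏_{i=1}^K x_i^{α_i/σ − 1} d^{K−1}x. -/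
open MeasureTheory Real

/-- Integral over the simplex `S_K`: the Lebesgue integral over the open set
`Δ_K = {(y_1,…,y_{K-1}) : y_i > 0, y_1+…+y_{K-1} < 1}` of the map that feeds
`(y_1,…,y_{K-1}, 1 - y_1 - … - y_{K-1})` to `g`. -/
noncomputable def simplexIntegral (K : ℕ) (g : (Fin K → ℝ) → ℝ) : ℝ :=
  ∫ y in {y : Fin (K - 1) → ℝ | (∀ i, 0 < y i) ∧ ∑ i, y i < 1},
    g (fun i => if h : (i : ℕ) < K - 1 then y ⟨(i : ℕ), h⟩ else 1 - ∑ j, y j)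

open Finset

namespace InSigma

noncomputable section

variable {m : ℕ}

def ext (y : Fin (m + 1) → ℝ) : Fin (m + 2) → ℝ :=
  fun i => if h : (i : ℕ) < m + 1 then y ⟨(i : ℕ), h⟩ else 1 - ∑ j, y j

def Dlt (m : ℕ) : Set (Fin (m + 1) → ℝ) := {y | (∀ i, 0 < y i) ∧ ∑ i, y i < 1}

variable (σ : ℝ) (γ : Fin (m + 2) → ℝ)

def S (y : Fin (m + 1) → ℝ) : ℝ := ∑ i, γ i * ext y i ^ σ

def Φ (y : Fin (m + 1) → ℝ) : Fin (m + 1) → ℝ :=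
  fun j => γ j.castSucc * y j ^ σ / S σ γ y

variable {σ γ}

lemma ext_castSucc (y : Fin (m + 1) → ℝ) (j : Fin (m + 1)) : ext y j.castSucc = y j := by
  simp [ext, j.isLt]

lemma ext_last (y : Fin (m + 1) → ℝ) : ext y (Fin.last (m + 1)) = 1 - ∑ j, y j := by
  simp [ext]

lemma sum_ext (y : Fin (m + 1) → ℝ) : ∑ i, ext y i = 1 := by
  rw [Fin.sum_univ_castSucc]
  simp [ext_castSucc, ext_last]

lemma ext_pos {y : Fin (m + 1) → ℝ} (hy : y ∈ Dlt m) (i : Fin (m + 2)) : 0 < ext y i := by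
  induction i using Fin.lastCases with
  | last => rw [ext_last]; linarith [hy.2]
  | cast j => rw [ext_castSucc]; exact hy.1 j

lemma S_pos (hγ : ∀ i, 0 < γ i) {y : Fin (m + 1) → ℝ} (hy : y ∈ Dlt m) : 0 < S σ γ y :=
  Finset.sum_pos (fun i _ => mul_pos (hγ i) (rpow_pos_of_pos (ext_pos hy i) σ)) ⟨0, mem_univ 0⟩

lemma S_eq : S σ γ = fun y => (∑ i : Fin (m + 1), γ i.castSucc * y i ^ σ)
    + γ (Fin.last (m + 1)) * (1 - ∑ i, y i) ^ σ := by
  funext y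
  rw [S, Fin.sum_univ_castSucc]
  simp [ext_castSucc, ext_last]

lemma ext_Φ (hγ : ∀ i, 0 < γ i) {y : Fin (m + 1) → ℝ} (hy : y ∈ Dlt m) (i : Fin (m + 2)) :
    ext (Φ σ γ y) i = γ i * ext y i ^ σ / S σ γ y := by
  have hS := S_pos hγ hy (σ := σ)
  induction i using Fin.lastCases with
  | last =>
      rw [ext_last, ext_last]
      rw [show (∑ j, Φ σ γ y j) = (∑ j : Fin (m + 1), γ j.castSucc * y j ^ σ) / S σ γ y by
        rw [Finset.sum_div]; rfl]
      have h2 : (∑ i : Fin (m + 1), γ i.castSucc * y i ^ σ)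
          = S σ γ y - γ (Fin.last (m + 1)) * (1 - ∑ i, y i) ^ σ := by
        rw [S_eq]; ring
      rw [h2]
      field_simp
      ring
  | cast j => rw [ext_castSucc, ext_castSucc]; rfl


open ContinuousLinearMap
variable {m : ℕ} (σ : ℝ) (γ : Fin (m + 2) → ℝ)

def dd (y : Fin (m+1) → ℝ) : Fin (m+1) → ℝ := fun j => σ * γ j.castSucc * y j ^ (σ-1) / S σ γ y
def uu (y : Fin (m+1) → ℝ) : Fin (m+1) → ℝ := fun j => γ j.castSucc * y j ^ σ / (S σ γ y)^2
def vv (y : Fin (m+1) → ℝ) : Fin (m+1) → ℝ :=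
  fun i => σ * γ i.castSucc * y i ^ (σ-1) - σ * γ (Fin.last (m+1)) * (1 - ∑ k, y k) ^ (σ-1)

def A (y : Fin (m+1) → ℝ) : Matrix (Fin (m+1)) (Fin (m+1)) ℝ :=
  Matrix.diagonal (dd σ γ y) - Matrix.replicateCol Unit (uu σ γ y) * Matrix.replicateRow Unit (vv σ γ y)

def Φ' (y : Fin (m+1) → ℝ) : (Fin (m+1) → ℝ) →L[ℝ] (Fin (m+1) → ℝ) :=
  LinearMap.toContinuousLinearMap (Matrix.toLin' (A σ γ y))

variable {σ γ}

lemma A_apply (y : Fin (m+1) → ℝ) (j i : Fin (m+1)) :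
    A σ γ y j i = (if j = i then dd σ γ y j else 0) - uu σ γ y j * vv σ γ y i := by
  simp [A, Matrix.diagonal_apply, Matrix.replicateCol, Matrix.replicateRow, Matrix.mul_apply]

lemma Φ'_apply (y : Fin (m+1) → ℝ) (w : Fin (m+1) → ℝ) (j : Fin (m+1)) :
    Φ' σ γ y w j = dd σ γ y j * w j - uu σ γ y j * ∑ i, vv σ γ y i * w i := by
  show (Matrix.toLin' (A σ γ y)) w j = _
  rw [Matrix.toLin'_apply]
  show ∑ i, A σ γ y j i * w i = _
  simp only [A_apply, sub_mul, ite_mul, zero_mul, Finset.sum_sub_distrib,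
    Finset.sum_ite_eq, Finset.mem_univ, if_true]
  congr 1
  rw [Finset.mul_sum]
  exact Finset.sum_congr rfl fun i _ => by ring

lemma hasFDerivAt_sum_coords (y : Fin (m+1) → ℝ) :
    HasFDerivAt (fun y : Fin (m+1) → ℝ => ∑ i, y i) (∑ i, proj (R := ℝ) (φ := fun _ : Fin (m+1) => ℝ) i) y :=
  HasFDerivAt.fun_sum fun i _ => hasFDerivAt_apply i y

lemma hasFDerivAt_S (hσ : 0 < σ) {y : Fin (m+1) → ℝ} (hy : y ∈ Dlt m) :
    HasFDerivAt (S σ γ)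
      ((∑ i, (γ i.castSucc) • ((σ * y i ^ (σ-1)) • proj (R := ℝ) (φ := fun _ : Fin (m+1) => ℝ) i)) +
        (γ (Fin.last (m+1))) • ((σ * (1 - ∑ k, y k) ^ (σ-1)) • (-(∑ i, proj (R := ℝ) (φ := fun _ : Fin (m+1) => ℝ) i)))) y := by
  rw [S_eq]
  have h1 : ∀ i : Fin (m+1), HasFDerivAt (fun y : Fin (m+1) → ℝ => γ i.castSucc * y i ^ σ)
      ((γ i.castSucc) • ((σ * y i ^ (σ-1)) • proj (R := ℝ) (φ := fun _ : Fin (m+1) => ℝ) i)) y := by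
    intro i
    have hp : HasFDerivAt (fun y : Fin (m+1) → ℝ => y i ^ σ) ((σ * y i ^ (σ-1)) • proj (R := ℝ) (φ := fun _ : Fin (m+1) => ℝ) i) y :=
      by have := (Real.hasDerivAt_rpow_const (p := σ) (Or.inl (hy.1 i).ne')).comp_hasFDerivAt y
          (hasFDerivAt_apply (𝕜 := ℝ) (F' := fun _ : Fin (m+1) => ℝ) i y); exact this
    exact hp.const_mul _
  have h0 : (1 : ℝ) - ∑ k, y k ≠ 0 := by have := hy.2; intro h; linarith [h]
  have h2 : HasFDerivAt (fun y : Fin (m+1) → ℝ => γ (Fin.last (m+1)) * (1 - ∑ k, y k) ^ σ)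
      ((γ (Fin.last (m+1))) • ((σ * (1 - ∑ k, y k) ^ (σ-1)) • (-(∑ i, proj (R := ℝ) (φ := fun _ : Fin (m+1) => ℝ) i)))) y := by
    have hp : HasFDerivAt (fun y : Fin (m+1) → ℝ => (1 - ∑ k, y k) ^ σ)
        ((σ * (1 - ∑ k, y k) ^ (σ-1)) • (-(∑ i, proj (R := ℝ) (φ := fun _ : Fin (m+1) => ℝ) i))) y :=
      by have := (Real.hasDerivAt_rpow_const (p := σ) (Or.inl h0)).comp_hasFDerivAt y
          ((hasFDerivAt_sum_coords y).const_sub 1); exact this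
    exact hp.const_mul _
  exact (HasFDerivAt.fun_sum fun i _ => h1 i).add h2

lemma hasFDerivAt_Φ (hσ : 0 < σ) (hγ : ∀ i, 0 < γ i) {y : Fin (m+1) → ℝ} (hy : y ∈ Dlt m) :
    HasFDerivAt (Φ σ γ) (Φ' σ γ y) y := by
  have hS := S_pos hγ hy (σ := σ)
  apply hasFDerivAt_pi''
  intro j
  have hnum : HasFDerivAt (fun y : Fin (m+1) → ℝ => γ j.castSucc * y j ^ σ)
      ((γ j.castSucc) • ((σ * y j ^ (σ-1)) • proj (R := ℝ) (φ := fun _ : Fin (m+1) => ℝ) j)) y := by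
    have hp : HasFDerivAt (fun y : Fin (m+1) → ℝ => y j ^ σ) ((σ * y j ^ (σ-1)) • proj (R := ℝ) (φ := fun _ : Fin (m+1) => ℝ) j) y :=
      by have := (Real.hasDerivAt_rpow_const (p := σ) (Or.inl (hy.1 j).ne')).comp_hasFDerivAt y
          (hasFDerivAt_apply (𝕜 := ℝ) (F' := fun _ : Fin (m+1) => ℝ) j y); exact this
    exact hp.const_mul _
  have hinv : HasFDerivAt (fun y : Fin (m+1) → ℝ => (S σ γ y)⁻¹)
      ((-((S σ γ y) ^ 2)⁻¹) • ((∑ i, (γ i.castSucc) • ((σ * y i ^ (σ-1)) • proj (R := ℝ) (φ := fun _ : Fin (m+1) => ℝ) i)) +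
        (γ (Fin.last (m+1))) • ((σ * (1 - ∑ k, y k) ^ (σ-1)) • (-(∑ i, proj (R := ℝ) (φ := fun _ : Fin (m+1) => ℝ) i))))) y :=
    (hasDerivAt_inv hS.ne').comp_hasFDerivAt y (hasFDerivAt_S hσ hy)
  have heq : (fun x => Φ σ γ x j) = fun y => (γ j.castSucc * y j ^ σ) * (S σ γ y)⁻¹ := by
    funext z; rw [Φ, div_eq_mul_inv]
  rw [heq]
  have hdiv := hnum.mul hinv
  refine hdiv.congr_fderiv ?_
  ext w
  simp only [coe_comp', Function.comp_apply, proj_apply]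
  rw [Φ'_apply]
  simp only [ContinuousLinearMap.sub_apply, ContinuousLinearMap.smul_apply,
    ContinuousLinearMap.add_apply, ContinuousLinearMap.sum_apply, proj_apply,
    ContinuousLinearMap.neg_apply, smul_eq_mul]
  have hv : ∑ i, vv σ γ y i * w i
      = (∑ i, γ i.castSucc * (σ * y i ^ (σ-1) * w i))
        - γ (Fin.last (m+1)) * (σ * (1 - ∑ k, y k) ^ (σ-1)) * ∑ i, w i := by
    simp only [vv, sub_mul, Finset.sum_sub_distrib, ← Finset.mul_sum]
    congr 1
    · exact Finset.sum_congr rfl fun i _ => by ring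
    · ring
  rw [hv, dd, uu]
  field_simp
  ring_nf
  rw [Finset.sum_congr rfl fun x _ => (by ring : γ x.castSucc * σ * y x ^ (-1 + σ) * w x = σ * γ x.castSucc * y x ^ (-1 + σ) * w x)]

lemma dd_pos (hσ : 0 < σ) (hγ : ∀ i, 0 < γ i) {y : Fin (m+1) → ℝ} (hy : y ∈ Dlt m) (j : Fin (m+1)) :
    0 < dd σ γ y j :=
  div_pos (mul_pos (mul_pos hσ (hγ _)) (rpow_pos_of_pos (hy.1 j) _)) (S_pos hγ hy)

lemma det_A (hσ : 0 < σ) (hγ : ∀ i, 0 < γ i) {y : Fin (m+1) → ℝ} (hy : y ∈ Dlt m) :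
    (A σ γ y).det = σ ^ (m+1) * (∏ i, γ i * ext y i ^ (σ-1)) / S σ γ y ^ (m+2) := by
  have hS := S_pos hγ hy (σ := σ)
  have hdd := dd_pos hσ hγ hy
  have hAeq : A σ γ y = Matrix.diagonal (dd σ γ y) *
      (1 + Matrix.replicateCol Unit (fun j => -(uu σ γ y j / dd σ γ y j)) * Matrix.replicateRow Unit (vv σ γ y)) := by
    ext j i
    rw [Matrix.mul_apply]
    simp only [Matrix.add_apply, Matrix.mul_apply, Matrix.replicateCol_apply, Matrix.replicateRow_apply,
      Matrix.one_apply, Matrix.diagonal_apply, A_apply, Finset.sum_singleton,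
      Finset.sum_ite_eq, Finset.mem_univ, if_true, mul_ite, mul_one, mul_zero, ite_mul, zero_mul,
      Finset.sum_ite_eq', mul_neg, Fintype.sum_unique]
    rcases eq_or_ne j i with rfl | hne
    · simp only [if_pos rfl, if_pos trivial]
      have hd := (hdd j).ne'
      field_simp
      ring
    · simp only [if_neg hne]
      have hd := (hdd j).ne'
      field_simp
      ring
  rw [hAeq, Matrix.det_mul, Matrix.det_diagonal, Matrix.det_one_add_replicateCol_mul_replicateRow]
  have hyl : (0:ℝ) < 1 - ∑ k, y k := by have := hy.2; linarith
  have hratio : ∀ i, uu σ γ y i / dd σ γ y i = y i / (σ * S σ γ y) := by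
    intro i
    have hyp : y i ^ σ = y i ^ (σ - 1) * y i := by
      rw [← Real.rpow_add_one (hy.1 i).ne' (σ - 1), sub_add_cancel]
    rw [uu, dd, hyp]
    have h1 := hS.ne'
    have h2 := (Real.rpow_pos_of_pos (hy.1 i) (σ-1)).ne'
    have h3 := (hγ i.castSucc).ne'
    have h4 := hσ.ne'
    field_simp
  have hls : (1 - ∑ k, y k) ^ σ = (1 - ∑ k, y k) ^ (σ-1) * (1 - ∑ k, y k) := by
    rw [← Real.rpow_add_one hyl.ne' (σ - 1), sub_add_cancel]
  have hsum1 : ∑ i, vv σ γ y i * y i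
      = σ * S σ γ y - σ * γ (Fin.last (m+1)) * (1 - ∑ k, y k) ^ (σ-1) := by
    have hys : ∀ i : Fin (m+1), y i ^ (σ - 1) * y i = y i ^ σ := by
      intro i; rw [← Real.rpow_add_one (hy.1 i).ne' (σ - 1), sub_add_cancel]
    have : ∀ i : Fin (m+1), vv σ γ y i * y i
        = σ * (γ i.castSucc * y i ^ σ)
          - σ * γ (Fin.last (m+1)) * (1 - ∑ k, y k) ^ (σ-1) * y i := by
      intro i; rw [vv, ← hys i]; ring
    rw [Finset.sum_congr rfl fun i _ => this i, Finset.sum_sub_distrib, ← Finset.mul_sum,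
      ← Finset.mul_sum]
    have h2 : ∑ i, γ i.castSucc * y i ^ σ
        = S σ γ y - γ (Fin.last (m+1)) * (1 - ∑ k, y k) ^ σ := by
      simp only [S_eq]; ring
    rw [h2, hls]
    ring
  have hdot : (dotProduct (vv σ γ y) fun j => -(uu σ γ y j / dd σ γ y j))
      = -(1 - γ (Fin.last (m+1)) * (1 - ∑ k, y k) ^ (σ - 1) / S σ γ y) := by
    rw [dotProduct]
    have hterm : ∀ i : Fin (m+1), vv σ γ y i * -(uu σ γ y i / dd σ γ y i)
        = -(vv σ γ y i * y i) / (σ * S σ γ y) := by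
      intro i; rw [hratio i]; ring
    rw [Finset.sum_congr rfl fun i _ => hterm i]
    simp only [neg_div, Finset.sum_neg_distrib, ← Finset.sum_div]
    rw [hsum1]
    field_simp
  rw [hdot]
  have hprod : ∏ j, dd σ γ y j
      = σ ^ (m+1) * ((∏ j : Fin (m+1), γ j.castSucc) * ∏ j : Fin (m+1), y j ^ (σ-1))
        / S σ γ y ^ (m+1) := by
    simp only [dd]
    rw [Finset.prod_div_distrib, Finset.prod_const, Finset.card_univ, Fintype.card_fin]
    congr 1
    rw [Finset.prod_mul_distrib, Finset.prod_mul_distrib, Finset.prod_const, Finset.card_univ,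
      Fintype.card_fin]
    ring
  have hsplit : (∏ i : Fin (m+2), γ i * ext y i ^ (σ-1))
      = ((∏ j : Fin (m+1), γ j.castSucc) * ∏ j : Fin (m+1), y j ^ (σ-1))
        * (γ (Fin.last (m+1)) * (1 - ∑ k, y k) ^ (σ-1)) := by
    rw [Fin.prod_univ_castSucc]
    simp only [ext_castSucc, ext_last]
    rw [Finset.prod_mul_distrib]
  rw [hprod, hsplit]
  have hSne := hS.ne'
  field_simp
  ring

variable (σ γ)

def T (x : Fin (m+1) → ℝ) : ℝ := ∑ i, (ext x i / γ i) ^ (1/σ)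

def Ψ (x : Fin (m+1) → ℝ) : Fin (m+1) → ℝ :=
  fun j => (x j / γ j.castSucc) ^ (1/σ) / T σ γ x

variable {σ γ}

lemma term_Φ (hσ : 0 < σ) (hγ : ∀ i, 0 < γ i) {y : Fin (m+1) → ℝ} (hy : y ∈ Dlt m)
    (i : Fin (m+2)) :
    (ext (Φ σ γ y) i / γ i) ^ (1/σ) = ext y i * (S σ γ y) ^ (-(1/σ)) := by
  have hS := S_pos hγ hy (σ := σ)
  have he := ext_pos hy i
  rw [ext_Φ hγ hy i, mul_div_assoc, mul_div_cancel_left₀ _ (hγ i).ne',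
    Real.div_rpow (Real.rpow_nonneg he.le σ) hS.le, ← Real.rpow_mul he.le,
    mul_one_div_cancel hσ.ne', Real.rpow_one, Real.rpow_neg hS.le, div_eq_mul_inv]

lemma T_Φ (hσ : 0 < σ) (hγ : ∀ i, 0 < γ i) {y : Fin (m+1) → ℝ} (hy : y ∈ Dlt m) :
    T σ γ (Φ σ γ y) = (S σ γ y) ^ (-(1/σ)) := by
  rw [T]
  rw [Finset.sum_congr rfl fun i _ => term_Φ hσ hγ hy i, ← Finset.sum_mul, sum_ext, one_mul]

lemma Ψ_Φ (hσ : 0 < σ) (hγ : ∀ i, 0 < γ i) {y : Fin (m+1) → ℝ} (hy : y ∈ Dlt m) :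
    Ψ σ γ (Φ σ γ y) = y := by
  have hS := S_pos hγ hy (σ := σ)
  funext j
  have h1 : (Φ σ γ y j / γ j.castSucc) ^ (1/σ) = y j * (S σ γ y) ^ (-(1/σ)) := by
    have := term_Φ hσ hγ hy j.castSucc
    rw [ext_castSucc, ext_castSucc] at this
    exact this
  rw [Ψ, h1, T_Φ hσ hγ hy, mul_div_assoc,
    div_self (Real.rpow_pos_of_pos hS _).ne', mul_one]

lemma injOn_Φ (hσ : 0 < σ) (hγ : ∀ i, 0 < γ i) : Set.InjOn (Φ σ γ) (Dlt m) := by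
  intro y1 h1 y2 h2 heq
  rw [← Ψ_Φ hσ hγ h1, ← Ψ_Φ hσ hγ h2, heq]

lemma image_Φ (hσ : 0 < σ) (hγ : ∀ i, 0 < γ i) : Φ σ γ '' (Dlt m) = Dlt m := by
  apply Set.Subset.antisymm
  · rintro x ⟨y, hy, rfl⟩
    have hS := S_pos hγ hy (σ := σ)
    constructor
    · intro j
      exact div_pos (mul_pos (hγ _) (Real.rpow_pos_of_pos (hy.1 j) σ)) hS
    · have h := ext_Φ (σ := σ) hγ hy (Fin.last (m+1))
      rw [ext_last] at h
      have hpos : 0 < γ (Fin.last (m+1)) * ext y (Fin.last (m+1)) ^ σ / S σ γ y :=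
        div_pos (mul_pos (hγ _) (Real.rpow_pos_of_pos (ext_pos hy _) σ)) hS
      linarith [h ▸ hpos]
  · intro x hx
    set t : Fin (m+2) → ℝ := fun i => (ext x i / γ i) ^ (1/σ) with ht_def
    have ht : ∀ i, 0 < t i := fun i =>
      Real.rpow_pos_of_pos (div_pos (ext_pos hx i) (hγ i)) _
    have hT : 0 < T σ γ x := Finset.sum_pos (fun i _ => ht i) ⟨0, Finset.mem_univ 0⟩
    have hTsplit : T σ γ x = (∑ j : Fin (m+1), t j.castSucc) + t (Fin.last (m+1)) := by
      rw [T, Fin.sum_univ_castSucc]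
    have hΨ : ∀ j : Fin (m+1), Ψ σ γ x j = t j.castSucc / T σ γ x := by
      intro j
      show Ψ σ γ x j = (ext x j.castSucc / γ j.castSucc) ^ (1/σ) / T σ γ x
      rw [ext_castSucc]
      rfl
    have hΨsum : ∑ j, Ψ σ γ x j = (∑ j : Fin (m+1), t j.castSucc) / T σ γ x := by
      rw [Finset.sum_div]
      exact Finset.sum_congr rfl fun j _ => hΨ j
    have hy : Ψ σ γ x ∈ Dlt m := by
      constructor
      · intro j; rw [hΨ j]; exact div_pos (ht j.castSucc) hT
      · rw [hΨsum, div_lt_one hT, hTsplit]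
        linarith [ht (Fin.last (m+1))]
    refine ⟨Ψ σ γ x, hy, ?_⟩
    · have hexty : ∀ i, ext (Ψ σ γ x) i = t i / T σ γ x := by
        intro i
        induction i using Fin.lastCases with
        | last =>
            rw [ext_last, hΨsum, hTsplit]
            have hD : (∑ j : Fin (m+1), t j.castSucc) + t (Fin.last (m+1)) ≠ 0 := by
              rw [← hTsplit]; exact hT.ne'
            field_simp
            ring
        | cast j => rw [ext_castSucc, hΨ j]
      have htσ : ∀ i, γ i * t i ^ σ = ext x i := by
        intro i
        have hd : (0:ℝ) < ext x i / γ i := div_pos (ext_pos hx i) (hγ i)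
        show γ i * ((ext x i / γ i) ^ (1/σ)) ^ σ = ext x i
        rw [← Real.rpow_mul hd.le, one_div_mul_cancel hσ.ne', Real.rpow_one,
          mul_div_assoc', mul_div_cancel_left₀ _ (hγ i).ne']
      have hSy : S σ γ (Ψ σ γ x) = ((T σ γ x) ^ σ)⁻¹ := by
        rw [S]
        rw [Finset.sum_congr rfl fun i _ => by
          rw [hexty i, Real.div_rpow (ht i).le hT.le, mul_div_assoc', htσ i]]
        rw [← Finset.sum_div, sum_ext, one_div]
      funext j
      rw [Φ]
      have hj : Ψ σ γ x j = t j.castSucc / T σ γ x := by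
        rw [← ext_castSucc (Ψ σ γ x) j, hexty]
      rw [hj, Real.div_rpow (ht _).le hT.le, mul_div_assoc', htσ, hSy, ext_castSucc]
      field_simp

lemma rpow_sum {x : ℝ} (hx : 0 < x) {ι : Type*} (s : Finset ι) (f : ι → ℝ) :
    x ^ (∑ i ∈ s, f i) = ∏ i ∈ s, x ^ f i := by
  classical
  induction s using Finset.induction with
  | empty => simp
  | insert _ _ hnot ih =>
      rw [Finset.sum_insert hnot, Finset.prod_insert hnot, Real.rpow_add hx, ih]

lemma det_Φ' (y : Fin (m+1) → ℝ) : (Φ' σ γ y).det = (A σ γ y).det := by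
  rw [Φ']
  rw [ContinuousLinearMap.det]
  rw [LinearMap.coe_toContinuousLinearMap]
  exact LinearMap.det_toLin' _

lemma key_pointwise (hσ : 0 < σ) (hγ : ∀ i, 0 < γ i) (α : Fin (m+2) → ℝ) (n : ℕ)
    {y : Fin (m+1) → ℝ} (hy : y ∈ Dlt m) :
    |(Φ' σ γ y).det| * ((∑ j, (ext (Φ σ γ y) j / γ j) ^ (1/σ)) ^ (-((∑ i, α i) + σ*n)) *
        ∏ i, (ext (Φ σ γ y) i) ^ (α i/σ - 1))
      = (σ^(m+1) * ∏ l, γ l ^ (α l / σ)) * ((S σ γ y) ^ n * ∏ i, (ext y i) ^ (α i - 1)) := by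
  have hS := S_pos hγ hy (σ := σ)
  have he := ext_pos hy
  have habs : |(Φ' σ γ y).det|
      = σ ^ (m+1) * (∏ i, γ i * ext y i ^ (σ-1)) / S σ γ y ^ (m+2) := by
    rw [det_Φ', det_A hσ hγ hy]
    apply abs_of_pos
    apply div_pos
    · apply mul_pos (pow_pos hσ _)
      exact Finset.prod_pos fun i _ => mul_pos (hγ i) (Real.rpow_pos_of_pos (he i) _)
    · exact pow_pos hS _
  have hsum : (∑ j, (ext (Φ σ γ y) j / γ j) ^ (1/σ)) = (S σ γ y) ^ (-(1/σ)) :=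
    T_Φ hσ hγ hy
  have hpow1 : ((S σ γ y) ^ (-(1/σ))) ^ (-((∑ i, α i) + σ*n))
      = S σ γ y ^ ((∑ i, α i)/σ) * S σ γ y ^ (n:ℝ) := by
    rw [← Real.rpow_mul hS.le, ← Real.rpow_add hS]
    congr 1
    field_simp
  have hprod : (∏ i, (ext (Φ σ γ y) i) ^ (α i/σ - 1))
      = (∏ i, γ i ^ (α i/σ - 1) * ext y i ^ (α i - σ)) *
          S σ γ y ^ ((m+2 : ℝ) - (∑ i, α i)/σ) := by
    have hexp : ((m+2 : ℝ) - (∑ i, α i)/σ) = ∑ i : Fin (m+2), (1 - α i/σ) := by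
      rw [Finset.sum_sub_distrib, Finset.sum_const, Finset.card_univ, Fintype.card_fin,
        ← Finset.sum_div]
      push_cast
      ring
    rw [hexp, rpow_sum hS, ← Finset.prod_mul_distrib]
    refine Finset.prod_congr rfl fun i _ => ?_
    rw [ext_Φ hγ hy i]
    have h1 : (0:ℝ) ≤ γ i * ext y i ^ σ := (mul_pos (hγ i) (Real.rpow_pos_of_pos (he i) σ)).le
    rw [Real.div_rpow h1 hS.le, Real.mul_rpow (hγ i).le (Real.rpow_nonneg (he i).le σ),
      ← Real.rpow_mul (he i).le, div_eq_mul_inv, ← Real.rpow_neg hS.le,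
      show σ * (α i/σ - 1) = α i - σ by field_simp,
      show -(α i/σ - 1) = 1 - α i/σ by ring]
  have hprodmerge : (∏ i, γ i * ext y i ^ (σ-1)) *
        (∏ i, γ i ^ (α i/σ - 1) * ext y i ^ (α i - σ))
      = (∏ l, γ l ^ (α l/σ)) * ∏ i, ext y i ^ (α i - 1) := by
    rw [← Finset.prod_mul_distrib, ← Finset.prod_mul_distrib]
    refine Finset.prod_congr rfl fun i _ => ?_
    rw [show (α i/σ) = 1 + (α i/σ - 1) by ring, Real.rpow_add (hγ i), Real.rpow_one,
      show (α i - 1) = (σ - 1) + (α i - σ) by ring, Real.rpow_add (he i)]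
    ring
  rw [habs, hsum, hpow1, hprod]
  have h1 : S σ γ y ^ ((∑ i, α i)/σ) * S σ γ y ^ ((m+2 : ℝ) - (∑ i, α i)/σ)
      = S σ γ y ^ (m+2) := by
    rw [← Real.rpow_add hS,
      show (∑ i, α i)/σ + ((m+2 : ℝ) - (∑ i, α i)/σ) = ((m+2 : ℕ) : ℝ) by push_cast; ring,
      Real.rpow_natCast]
  have h2 : S σ γ y ^ ((n:ℕ):ℝ) = S σ γ y ^ n := Real.rpow_natCast _ n
  have hSpowne : S σ γ y ^ (m+2) ≠ 0 := (pow_pos hS _).ne'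
  calc σ ^ (m+1) * (∏ i, γ i * ext y i ^ (σ-1)) / S σ γ y ^ (m+2) *
        ((S σ γ y ^ ((∑ i, α i)/σ) * S σ γ y ^ ((n:ℕ):ℝ)) *
          ((∏ i, γ i ^ (α i/σ - 1) * ext y i ^ (α i - σ)) *
            S σ γ y ^ ((m+2 : ℝ) - (∑ i, α i)/σ)))
      = ((∏ i, γ i * ext y i ^ (σ-1)) * (∏ i, γ i ^ (α i/σ - 1) * ext y i ^ (α i - σ))) *
          (S σ γ y ^ ((∑ i, α i)/σ) * S σ γ y ^ ((m+2 : ℝ) - (∑ i, α i)/σ)) *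
          S σ γ y ^ ((n:ℕ):ℝ) * σ ^ (m+1) / S σ γ y ^ (m+2) := by ring
    _ = ((∏ l, γ l ^ (α l/σ)) * ∏ i, ext y i ^ (α i - 1)) * S σ γ y ^ (m+2) *
          S σ γ y ^ n * σ ^ (m+1) / S σ γ y ^ (m+2) := by rw [hprodmerge, h1, h2]
    _ = (σ^(m+1) * ∏ l, γ l ^ (α l / σ)) * ((S σ γ y) ^ n * ∏ i, (ext y i) ^ (α i - 1)) := by
        field_simp

lemma isOpen_Dlt : IsOpen (Dlt m) := by
  have h1 : IsOpen {y : Fin (m+1) → ℝ | ∀ i, 0 < y i} := by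
    rw [Set.setOf_forall]
    exact isOpen_iInter_of_finite fun i => isOpen_lt continuous_const (continuous_apply i)
  have h2 : IsOpen {y : Fin (m+1) → ℝ | ∑ i, y i < 1} :=
    isOpen_lt (continuous_finset_sum _ fun i _ => continuous_apply i) continuous_const
  exact h1.inter h2

end
end InSigma

/-- Duality relation for `I_n^σ`. -/
theorem In_sigma_duality (K : ℕ) (hK : 2 ≤ K) (α γ : Fin K → ℝ)
    (hα : ∀ i, 0 < α i) (hγ : ∀ i, 0 < γ i) (σ : ℝ) (hσ : 0 < σ) (n : ℕ) :
    simplexIntegral K (fun y => (∑ k, γ k * y k ^ σ) ^ n * ∏ i, y i ^ (α i - 1)) =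
      (σ ^ (K - 1))⁻¹ * (∏ l, γ l ^ (-(α l / σ))) *
        simplexIntegral K (fun x =>
          (∑ j, (x j / γ j) ^ (1 / σ)) ^ (-((∑ i, α i) + σ * n)) *
            ∏ i, x i ^ (α i / σ - 1)) := by
  obtain ⟨m, rfl⟩ : ∃ m, K = m + 2 := ⟨K - 2, by omega⟩
  have hmeas : MeasurableSet (InSigma.Dlt m) := InSigma.isOpen_Dlt.measurableSet
  have key := integral_image_eq_integral_abs_det_fderiv_smul (volume) hmeas
    (fun y hy => (InSigma.hasFDerivAt_Φ hσ hγ hy).hasFDerivWithinAt)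
    (InSigma.injOn_Φ hσ hγ)
    (fun x => (∑ j, (InSigma.ext x j / γ j) ^ (1 / σ)) ^ (-((∑ i, α i) + σ * n)) *
        ∏ i, (InSigma.ext x i) ^ (α i / σ - 1))
  rw [InSigma.image_Φ hσ hγ] at key
  have hR : simplexIntegral (m+2) (fun x =>
        (∑ j, (x j / γ j) ^ (1 / σ)) ^ (-((∑ i, α i) + σ * n)) * ∏ i, x i ^ (α i / σ - 1))
      = ∫ x in InSigma.Dlt m,
          (∑ j, (InSigma.ext x j / γ j) ^ (1 / σ)) ^ (-((∑ i, α i) + σ * n)) *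
            ∏ i, (InSigma.ext x i) ^ (α i / σ - 1) := rfl
  have hL : simplexIntegral (m+2) (fun y => (∑ k, γ k * y k ^ σ) ^ n * ∏ i, y i ^ (α i - 1))
      = ∫ y in InSigma.Dlt m,
          (∑ k, γ k * InSigma.ext y k ^ σ) ^ n * ∏ i, (InSigma.ext y i) ^ (α i - 1) := rfl
  have hcongr : (∫ y in InSigma.Dlt m, |(InSigma.Φ' σ γ y).det| •
        ((∑ j, (InSigma.ext (InSigma.Φ σ γ y) j / γ j) ^ (1 / σ)) ^ (-((∑ i, α i) + σ * n)) *
          ∏ i, (InSigma.ext (InSigma.Φ σ γ y) i) ^ (α i / σ - 1)))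
      = ∫ y in InSigma.Dlt m, (σ^(m+1) * ∏ l, γ l ^ (α l / σ)) *
          ((∑ k, γ k * InSigma.ext y k ^ σ) ^ n * ∏ i, (InSigma.ext y i) ^ (α i - 1)) := by
    apply setIntegral_congr_fun hmeas
    intro y hy
    simp only [smul_eq_mul]
    exact InSigma.key_pointwise hσ hγ α n hy
  rw [hL, hR, key, hcongr, integral_const_mul]
  have hγprod : ∏ l, (γ l ^ (-(α l/σ)) * γ l ^ (α l/σ)) = 1 :=
    Finset.prod_eq_one fun l _ => by
      rw [← Real.rpow_add (hγ l), neg_add_cancel, Real.rpow_zero]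
  rw [show m + 2 - 1 = m + 1 from rfl, ← mul_assoc,
    show ((σ:ℝ)^(m+1))⁻¹ * (∏ l, γ l ^ (-(α l/σ))) * (σ^(m+1) * ∏ l, γ l ^ (α l/σ))
      = (((σ:ℝ)^(m+1))⁻¹ * σ^(m+1)) * ∏ l, (γ l ^ (-(α l/σ)) * γ l ^ (α l/σ)) from by
        rw [Finset.prod_mul_distrib]; ring,
    hγprod, inv_mul_cancel₀ (pow_ne_zero _ hσ.ne'), mul_one, one_mul]
end

section
/- Differential recurrence for I_n^1: Let K ≥ 2 be an integer and α ∈ ℝ^K with α_i > 0. For γ ∈ (0,∞)^K and a nonnegative integer n, set J_n(γ) = ∫_{S_K} (∑_{k=1}^K γ_k y_k)^n · ∏_{i=1}^K y_i^{α_i − 1} d^{K−1}y. Then for every n, each partial derivative ∂J_n/∂γ_i exists on (0,∞)^K and J_{n+1}(γ) = (1/(α_+ + n)) · ∑_{i=1}^K ( γ_i^2 · ∂J_n/∂γ_i (γ) + α_i γ_i · J_n(γ) ). -/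
open MeasureTheory Real

section DirichletAux
open ENNReal

lemma beta_intervalIntegrable {a b c : ℝ} (ha : 0 < a) (hb : 0 < b) (hc : 0 < c) :
    IntervalIntegrable (fun x => x ^ (a-1) * (c - x) ^ (b-1)) volume 0 c := by
  have h1 : IntervalIntegrable (fun x => x ^ (a-1) * (c - x) ^ (b-1)) volume 0 (c/2) := by
    apply (intervalIntegral.intervalIntegrable_rpow' (by linarith : (-1:ℝ) < a - 1)).mul_continuousOn
    apply ContinuousOn.rpow_const (by fun_prop)
    intro x hx
    rw [Set.uIcc_of_le (by linarith)] at hx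
    left; nlinarith [hx.2]
  have h2 : IntervalIntegrable (fun x => x ^ (a-1) * (c - x) ^ (b-1)) volume (c/2) c := by
    have hI : IntervalIntegrable (fun x => (c - x) ^ (b-1)) volume (c/2) c := by
      have := (intervalIntegral.intervalIntegrable_rpow' (by linarith : (-1:ℝ) < b - 1)
        (a := 0) (b := c/2)).comp_sub_left c
      rw [show c - c/2 = c/2 by ring] at this
      simpa using this.symm
    apply hI.continuousOn_mul
    apply ContinuousOn.rpow_const (by fun_prop)
    intro x hx
    rw [Set.uIcc_of_le (by linarith)] at hx
    left; nlinarith [hx.1]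
  exact h1.trans h2

lemma beta_integral_value {a b c : ℝ} (ha : 0 < a) (hb : 0 < b) (hc : 0 < c) :
    ∫ x in (0:ℝ)..c, x ^ (a-1) * (c - x) ^ (b-1)
      = c ^ (a + b - 1) * (Gamma a * Gamma b / Gamma (a+b)) := by
  have h := Complex.Gamma_mul_Gamma_eq_betaIntegral
    (s := (a:ℂ)) (t := (b:ℂ)) (by simpa using ha) (by simpa using hb)
  have hne : Complex.Gamma ((a:ℂ) + b) ≠ 0 :=
    Complex.Gamma_ne_zero_of_re_pos (by simpa using add_pos ha hb)
  have hB : Complex.betaIntegral a b =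
      ((Gamma a * Gamma b / Gamma (a+b) : ℝ) : ℂ) := by
    have h2 : Complex.betaIntegral a b
        = Complex.Gamma a * Complex.Gamma b / Complex.Gamma ((a:ℂ)+b) := by
      rw [eq_div_iff hne, mul_comm, ← h]
    rw [h2, ← Complex.ofReal_add, Complex.Gamma_ofReal, Complex.Gamma_ofReal,
      Complex.Gamma_ofReal, ← Complex.ofReal_mul, ← Complex.ofReal_div]
  have hs := Complex.betaIntegral_scaled (a:ℂ) (b:ℂ) hc
  have hcongr : (∫ x in (0:ℝ)..c, (x:ℂ) ^ ((a:ℂ)-1) * ((c:ℂ) - x) ^ ((b:ℂ)-1))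
      = ((∫ x in (0:ℝ)..c, x ^ (a-1) * (c - x) ^ (b-1) : ℝ) : ℂ) := by
    rw [← intervalIntegral.integral_ofReal]
    apply intervalIntegral.integral_congr
    intro x hx
    rw [Set.uIcc_of_le hc.le] at hx
    push_cast
    rw [Complex.ofReal_cpow hx.1, Complex.ofReal_cpow (by linarith [hx.2] : (0:ℝ) ≤ c - x)]
    push_cast; ring_nf
  rw [hcongr, hB] at hs
  have hcc : ((c:ℂ)) ^ ((a:ℂ) + b - 1) = ((c ^ (a+b-1) : ℝ) : ℂ) := by
    rw [Complex.ofReal_cpow hc.le]; push_cast; ring_nf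
  rw [hcc, ← Complex.ofReal_mul] at hs
  exact_mod_cast hs

lemma beta_lintegral {a b c : ℝ} (ha : 0 < a) (hb : 0 < b) (hc : 0 < c) :
    ∫⁻ x in Set.Ioo 0 c, ENNReal.ofReal (x ^ (a-1) * (c - x) ^ (b-1))
      = ENNReal.ofReal (c ^ (a + b - 1) * (Gamma a * Gamma b / Gamma (a+b))) := by
  have hint : IntegrableOn (fun x => x ^ (a-1) * (c - x) ^ (b-1)) (Set.Ioo 0 c) :=
    (beta_intervalIntegrable ha hb hc).1.mono_set Set.Ioo_subset_Ioc_self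
  have hnn : 0 ≤ᵐ[volume.restrict (Set.Ioo 0 c)]
      (fun x => x ^ (a-1) * (c - x) ^ (b-1)) := by
    filter_upwards [ae_restrict_mem measurableSet_Ioo] with x hx
    have h1 : (0:ℝ) ≤ x ^ (a-1) := rpow_nonneg hx.1.le _
    have h2 : (0:ℝ) ≤ (c - x) ^ (b-1) := rpow_nonneg (by linarith [hx.2]) _
    positivity
  rw [← ofReal_integral_eq_lintegral_ofReal hint hnn]
  congr 1
  rw [← beta_integral_value ha hb hc, intervalIntegral.integral_of_le hc.le]
  exact setIntegral_congr_set MeasureTheory.Ioo_ae_eq_Ioc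
def DSet (d : ℕ) : Set (Fin d → ℝ) := {y | (∀ i, 0 < y i) ∧ ∑ i, y i < 1}

noncomputable def ext (d : ℕ) (y : Fin d → ℝ) : Fin (d+1) → ℝ :=
  fun i => if h : (i:ℕ) < d then y ⟨i, h⟩ else 1 - ∑ j, y j

lemma measurableSet_DSet (d : ℕ) : MeasurableSet (DSet d) := by
  have : DSet d = (⋂ i, {y : Fin d → ℝ | 0 < y i}) ∩ {y | ∑ i, y i < 1} := by
    ext y; simp [DSet, Set.mem_iInter]
  rw [this]
  exact (MeasurableSet.iInter fun i =>
      measurableSet_lt measurable_const (measurable_pi_apply i)).inter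
    (measurableSet_lt (by fun_prop) measurable_const)

lemma measurable_ext (d : ℕ) (i : Fin (d+1)) : Measurable (fun y => ext d y i) := by
  unfold ext
  by_cases h : (i:ℕ) < d <;> simp only [h, dif_pos, dif_neg, not_false_iff] <;> fun_prop

lemma ext_pos {d : ℕ} {y : Fin d → ℝ} (hy : y ∈ DSet d) (i : Fin (d+1)) : 0 < ext d y i := by
  unfold ext
  by_cases h : (i:ℕ) < d <;> simp only [h, dif_pos, dif_neg, not_false_iff]
  · exact hy.1 _
  · linarith [hy.2]

lemma measurable_prod_ext (d : ℕ) (β : Fin (d+1) → ℝ) :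
    Measurable (fun y => ∏ i, (ext d y i) ^ (β i - 1)) :=
  Finset.measurable_prod _ fun i _ => by have := measurable_ext d i; fun_prop

lemma cons_mem_DSet {d : ℕ} (x : ℝ) (z : Fin d → ℝ) :
    Fin.cons x z ∈ DSet (d+1) ↔ z ∈ DSet d ∧ x ∈ Set.Ioo 0 (1 - ∑ j, z j) := by
  simp only [DSet, Set.mem_setOf_eq, Fin.forall_fin_succ, Fin.cons_zero, Fin.cons_succ,
    Fin.sum_cons, Set.mem_Ioo]
  constructor
  · rintro ⟨⟨hx, hz⟩, hs⟩
    have hzs : 0 < ∑ j, z j ∨ (0:ℝ) ≤ ∑ j, z j := Or.inr (Finset.sum_nonneg fun j _ => (hz j).le)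
    refine ⟨⟨hz, ?_⟩, hx, by linarith⟩
    linarith
  · rintro ⟨⟨hz, hs⟩, hx, hxs⟩
    exact ⟨⟨hx, hz⟩, by linarith⟩

theorem dirichlet_lint (d : ℕ) : ∀ (β : Fin (d+1) → ℝ), (∀ i, 0 < β i) →
    ∫⁻ y in DSet d, ENNReal.ofReal (∏ i, (ext d y i) ^ (β i - 1))
      = ENNReal.ofReal ((∏ i, Gamma (β i)) / Gamma (∑ i, β i)) := by
  induction d with
  | zero =>
    intro β hβ
    have h1 : DSet 0 = Set.univ := by
      ext y; simp [DSet]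
    have h2 : ∀ y : Fin 0 → ℝ, (∏ i, (ext 0 y i) ^ (β i - 1)) = 1 := by
      intro y
      rw [Fin.prod_univ_one]
      simp [ext]
    simp only [h1, h2, Measure.restrict_univ, lintegral_const]
    rw [show (volume : Measure (Fin 0 → ℝ)) Set.univ = 1 by
      rw [MeasureTheory.volume_pi, Measure.pi_univ]; simp]
    rw [Fin.sum_univ_one, Fin.prod_univ_one, div_self (Gamma_pos_of_pos (hβ 0)).ne']
    simp
  | succ d IH =>
    intro β hβ
    set bl : ℝ := β (Fin.last (d+1)) with hbl
    set βm : Fin (d+1) → ℝ :=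
      fun j => if h : (j:ℕ) < d then β ⟨(j:ℕ)+1, by omega⟩ else β 0 + bl with hβm
    have hβm_pos : ∀ j, 0 < βm j := by
      intro j; rw [hβm]; dsimp only
      split
      · exact hβ _
      · exact add_pos (hβ 0) (hβ _)
    set B : ℝ := Gamma (β 0) * Gamma bl / Gamma (β 0 + bl) with hB
    have hBpos : 0 < B := by
      apply div_pos (mul_pos (Gamma_pos_of_pos (hβ 0)) (Gamma_pos_of_pos (hβ _)))
        (Gamma_pos_of_pos (add_pos (hβ 0) (hβ _)))
    -- pointwise formula for the integrand composed with `Fin.cons`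
    have haveP : ∀ (x:ℝ) (z : Fin d → ℝ),
        (∏ i, ext (d+1) (Fin.cons x z) i ^ (β i - 1))
        = (x ^ (β 0 - 1) * ((1 - ∑ j, z j) - x) ^ (bl - 1)) *
            ∏ j : Fin d, z j ^ (β ⟨(j:ℕ)+1, by omega⟩ - 1) := by
      intro x z
      rw [Fin.prod_univ_succ, Fin.prod_univ_castSucc]
      have h0 : ext (d+1) (Fin.cons x z) 0 = x := by
        simp [ext]
      have hlast : ext (d+1) (Fin.cons x z) (Fin.last d).succ = (1 - ∑ j, z j) - x := by
        rw [Fin.succ_last]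
        simp [ext, Fin.sum_cons]
        ring
      have hmid : ∀ jj : Fin d,
          ext (d+1) (Fin.cons x z) (jj.castSucc).succ = z jj := by
        intro jj
        have hv : ((jj.castSucc).succ : ℕ) < d + 1 := by simp
        simp only [ext, hv, dif_pos]
        have : (⟨((jj.castSucc).succ : ℕ), hv⟩ : Fin (d+1)) = Fin.succ ⟨(jj:ℕ), jj.2⟩ := by
          apply Fin.ext; simp
        rw [this, Fin.cons_succ]
      have hblx : β ((Fin.last d).succ) = bl := by rw [Fin.succ_last, hbl]
      rw [h0, hlast, hblx]
      have : ∀ jj : Fin d, ext (d+1) (Fin.cons x z) (jj.castSucc).succ ^ (β (jj.castSucc).succ - 1)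
          = z jj ^ (β ⟨(jj:ℕ)+1, by omega⟩ - 1) := by
        intro jj
        rw [hmid jj]
        congr 2
      rw [Finset.prod_congr rfl fun jj _ => this jj]
      ring
    have hprodm : ∀ z : Fin d → ℝ,
        (∏ k, ext d z k ^ (βm k - 1))
        = (∏ j : Fin d, z j ^ (β ⟨(j:ℕ)+1, by omega⟩ - 1)) *
            (1 - ∑ j, z j) ^ (β 0 + bl - 1) := by
      intro z
      rw [Fin.prod_univ_castSucc]
      congr 1
      · apply Finset.prod_congr rfl; intro jj _
        have hv : ((jj.castSucc : Fin (d+1)) : ℕ) < d := jj.2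
        have h1 : ext d z jj.castSucc = z jj := by
          simp only [ext, hv, dif_pos]
          congr 1
        have h2 : βm jj.castSucc = β ⟨(jj:ℕ)+1, by omega⟩ := by
          rw [hβm]; dsimp only; rw [dif_pos hv]
          congr 1
        rw [h1, h2]
      · have h1 : ext d z (Fin.last d) = 1 - ∑ j, z j := by
          simp [ext]
        have h2 : βm (Fin.last d) = β 0 + bl := by
          rw [hβm]; dsimp only; rw [dif_neg (by simp)]
        rw [h1, h2]
    set f : (Fin (d+1) → ℝ) → ℝ≥0∞ :=
      fun y => ENNReal.ofReal (∏ i, ext (d+1) y i ^ (β i - 1)) with hf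
    have hfm : Measurable f := ENNReal.measurable_ofReal.comp (measurable_prod_ext (d+1) β)
    have inner : ∀ z : Fin d → ℝ,
        (∫⁻ x, (DSet (d+1)).indicator f (Fin.cons x z))
        = (DSet d).indicator (fun z => ENNReal.ofReal B *
            ENNReal.ofReal (∏ k, ext d z k ^ (βm k - 1))) z := by
      intro z
      by_cases hz : z ∈ DSet d
      · have hc : 0 < 1 - ∑ j, z j := by
          have h2 : ∑ j, z j < 1 := hz.2
          linarith
        set c : ℝ := 1 - ∑ j, z j with hcc
        set K : ℝ := ∏ j : Fin d, z j ^ (β ⟨(j:ℕ)+1, by omega⟩ - 1) with hK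
        have hKnn : 0 ≤ K :=
          Finset.prod_nonneg fun j _ => rpow_nonneg (hz.1 j).le _
        have hind : ∀ x : ℝ, (DSet (d+1)).indicator f (Fin.cons x z)
            = (Set.Ioo (0:ℝ) c).indicator
                (fun x => ENNReal.ofReal ((x ^ (β 0 - 1) * (c - x) ^ (bl - 1)) * K)) x := by
          intro x
          by_cases hx : x ∈ Set.Ioo (0:ℝ) c
          · rw [Set.indicator_of_mem hx,
              Set.indicator_of_mem ((cons_mem_DSet x z).2 ⟨hz, hx⟩)]
            show ENNReal.ofReal (∏ i, ext (d+1) (Fin.cons x z) i ^ (β i - 1)) = _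
            rw [haveP x z, hcc, hK]
          · rw [Set.indicator_of_notMem hx,
              Set.indicator_of_notMem (fun hmem => hx ((cons_mem_DSet x z).1 hmem).2)]
        simp_rw [hind]
        rw [lintegral_indicator measurableSet_Ioo]
        have step1 : ∫⁻ x in Set.Ioo (0:ℝ) c,
            ENNReal.ofReal ((x ^ (β 0 - 1) * (c - x) ^ (bl - 1)) * K)
            = (∫⁻ x in Set.Ioo (0:ℝ) c,
                ENNReal.ofReal (x ^ (β 0 - 1) * (c - x) ^ (bl - 1))) * ENNReal.ofReal K := by
          rw [← lintegral_mul_const _ (by fun_prop)]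
          apply setLIntegral_congr_fun measurableSet_Ioo
          intro x hx
          dsimp only
          rw [ENNReal.ofReal_mul]
          have h1 : (0:ℝ) ≤ x ^ (β 0 - 1) := rpow_nonneg hx.1.le _
          have h2 : (0:ℝ) ≤ (c - x) ^ (bl - 1) := rpow_nonneg (by linarith [hx.2]) _
          positivity
        rw [step1, beta_lintegral (hβ 0) (hβ (Fin.last (d+1))) hc,
          Set.indicator_of_mem hz, hprodm z]
        have hnn : 0 ≤ c ^ (β 0 + β (Fin.last (d+1)) - 1) *
            (Gamma (β 0) * Gamma (β (Fin.last (d+1))) / Gamma (β 0 + β (Fin.last (d+1)))) :=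
          mul_nonneg (rpow_nonneg hc.le _) (le_of_lt (div_pos
            (mul_pos (Gamma_pos_of_pos (hβ 0)) (Gamma_pos_of_pos (hβ _)))
            (Gamma_pos_of_pos (add_pos (hβ 0) (hβ _)))))
        rw [← ENNReal.ofReal_mul hnn, ← ENNReal.ofReal_mul hBpos.le]
        congr 1
        rw [hB, hbl, hcc, hK]
        ring
      · rw [Set.indicator_of_notMem hz]
        have h0 : ∀ x : ℝ, (DSet (d+1)).indicator f (Fin.cons x z) = 0 := by
          intro x
          exact Set.indicator_of_notMem
            (fun hmem => hz ((cons_mem_DSet x z).1 hmem).1) f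
        simp_rw [h0, lintegral_zero]
    have hsum : ∑ k, βm k = ∑ i, β i := by
      rw [Fin.sum_univ_castSucc, Fin.sum_univ_succ (f := β), Fin.sum_univ_castSucc]
      have e1 : ∀ jj : Fin d, βm jj.castSucc = β ⟨(jj:ℕ)+1, by omega⟩ := by
        intro jj
        have hv : ((jj.castSucc : Fin (d+1)) : ℕ) < d := jj.2
        rw [hβm]; dsimp only; rw [dif_pos hv]
        congr 1
      have e2 : βm (Fin.last d) = β 0 + bl := by
        rw [hβm]; dsimp only; rw [dif_neg (by simp)]
      have e3 : ∀ jj : Fin d, β ((jj.castSucc : Fin (d+1)).succ) = β ⟨(jj:ℕ)+1, by omega⟩ := by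
        intro jj; congr 1
      have e4 : β ((Fin.last d).succ) = bl := by rw [Fin.succ_last, hbl]
      rw [Finset.sum_congr rfl fun jj _ => e1 jj, e2,
        Finset.sum_congr rfl fun jj _ => e3 jj, e4]
      ring
    have hprodG : (∏ k, Gamma (βm k)) =
        (∏ jj : Fin d, Gamma (β ⟨(jj:ℕ)+1, by omega⟩)) * Gamma (β 0 + bl) := by
      rw [Fin.prod_univ_castSucc]
      congr 1
      · apply Finset.prod_congr rfl; intro jj _
        have hv : ((jj.castSucc : Fin (d+1)) : ℕ) < d := jj.2
        congr 1
        rw [hβm]; dsimp only; rw [dif_pos hv]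
        congr 1
      · congr 1
        rw [hβm]; dsimp only; rw [dif_neg (by simp)]
    have hprodB : (∏ i, Gamma (β i)) =
        Gamma (β 0) * (∏ jj : Fin d, Gamma (β ⟨(jj:ℕ)+1, by omega⟩)) * Gamma bl := by
      rw [Fin.prod_univ_succ, Fin.prod_univ_castSucc]
      have e3 : ∀ jj : Fin d, Gamma (β ((jj.castSucc : Fin (d+1)).succ))
          = Gamma (β ⟨(jj:ℕ)+1, by omega⟩) := by
        intro jj; congr 2
      have e4 : Gamma (β ((Fin.last d).succ)) = Gamma bl := by rw [Fin.succ_last, hbl]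
      rw [Finset.prod_congr rfl fun jj _ => e3 jj, e4]
      ring
    -- main computation
    set e := MeasurableEquiv.piFinSuccAbove (fun _ : Fin (d+1) => ℝ) 0 with he
    have hmp : MeasurePreserving e.symm
        ((volume : Measure ℝ).prod (volume : Measure (Fin d → ℝ)))
        (volume : Measure (Fin (d+1) → ℝ)) := by
      have h1 := MeasureTheory.volume_preserving_piFinSuccAbove (fun _ : Fin (d+1) => ℝ) 0
      have h2 := h1.symm e
      rwa [Measure.volume_eq_prod] at h2
    calc
      ∫⁻ y in DSet (d+1), f y
          = ∫⁻ y, (DSet (d+1)).indicator f y := by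
            rw [lintegral_indicator (measurableSet_DSet _)]
      _ = ∫⁻ p : ℝ × (Fin d → ℝ), (DSet (d+1)).indicator f (e.symm p)
            ∂((volume : Measure ℝ).prod (volume : Measure (Fin d → ℝ))) := by
            rw [hmp.lintegral_comp (hfm.indicator (measurableSet_DSet _))]
      _ = ∫⁻ z, ∫⁻ x, (DSet (d+1)).indicator f (e.symm (x, z)) := by
            apply MeasureTheory.lintegral_prod_symm
            exact ((hfm.indicator (measurableSet_DSet _)).comp e.symm.measurable).aemeasurable
      _ = ∫⁻ z, (DSet d).indicator (fun z => ENNReal.ofReal B *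
            ENNReal.ofReal (∏ k, ext d z k ^ (βm k - 1))) z := by
            apply lintegral_congr
            intro z
            rw [← inner z]
            apply lintegral_congr
            intro x
            congr 1
            rw [he]
            rw [MeasurableEquiv.piFinSuccAbove_symm_apply]
            exact Fin.insertNth_zero' x z
      _ = ∫⁻ z in DSet d, ENNReal.ofReal B *
            ENNReal.ofReal (∏ k, ext d z k ^ (βm k - 1)) := by
            rw [lintegral_indicator (measurableSet_DSet _)]
      _ = ENNReal.ofReal B * ∫⁻ z in DSet d,
            ENNReal.ofReal (∏ k, ext d z k ^ (βm k - 1)) := by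
            rw [lintegral_const_mul _ (measurable_prod_ext d βm).ennreal_ofReal]
      _ = ENNReal.ofReal B * ENNReal.ofReal ((∏ k, Gamma (βm k)) / Gamma (∑ k, βm k)) := by
            rw [IH βm hβm_pos]
      _ = ENNReal.ofReal ((∏ i, Gamma (β i)) / Gamma (∑ i, β i)) := by
            rw [← ENNReal.ofReal_mul hBpos.le]
            congr 1
            rw [hsum, hprodG, hprodB, hB]
            have h1 : Gamma (β 0 + bl) ≠ 0 :=
              (Gamma_pos_of_pos (add_pos (hβ 0) (hβ _))).ne'
            have hs : Gamma (∑ i, β i) ≠ 0 := by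
              apply (Gamma_pos_of_pos _).ne'
              exact Finset.sum_pos (fun i _ => hβ i) Finset.univ_nonempty
            field_simp

theorem dirichlet_integrable (d : ℕ) (β : Fin (d+1) → ℝ) (hβ : ∀ i, 0 < β i) :
    IntegrableOn (fun y => ∏ i, (ext d y i) ^ (β i - 1)) (DSet d) := by
  constructor
  · exact (measurable_prod_ext d β).aestronglyMeasurable
  · have hnn : 0 ≤ᵐ[volume.restrict (DSet d)] (fun y => ∏ i, (ext d y i) ^ (β i - 1)) := by
      filter_upwards [ae_restrict_mem (measurableSet_DSet d)] with y hy
      exact Finset.prod_nonneg fun i _ => rpow_nonneg (ext_pos hy i).le _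
    rw [hasFiniteIntegral_iff_ofReal hnn, dirichlet_lint d β hβ]
    exact ENNReal.ofReal_lt_top

theorem dirichlet_value (d : ℕ) (β : Fin (d+1) → ℝ) (hβ : ∀ i, 0 < β i) :
    ∫ y in DSet d, ∏ i, (ext d y i) ^ (β i - 1)
      = (∏ i, Gamma (β i)) / Gamma (∑ i, β i) := by
  have hnn : 0 ≤ᵐ[volume.restrict (DSet d)] (fun y => ∏ i, (ext d y i) ^ (β i - 1)) := by
    filter_upwards [ae_restrict_mem (measurableSet_DSet d)] with y hy
    exact Finset.prod_nonneg fun i _ => rpow_nonneg (ext_pos hy i).le _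
  rw [integral_eq_lintegral_of_nonneg_ae hnn
    (measurable_prod_ext d β).aestronglyMeasurable, dirichlet_lint d β hβ,
    ENNReal.toReal_ofReal]
  exact div_nonneg (Finset.prod_nonneg fun i _ => (Gamma_pos_of_pos (hβ i)).le)
    (Gamma_pos_of_pos (Finset.sum_pos (fun i _ => hβ i) Finset.univ_nonempty)).le

theorem expand_integral (m : ℕ) (α : Fin (m+1) → ℝ) (hα : ∀ i, 0 < α i)
    (δ : Fin (m+1) → ℕ) (n : ℕ) (γ : Fin (m+1) → ℝ) :
    IntegrableOn (fun y => (∏ k, ext m y k ^ δ k) * (∑ k, γ k * ext m y k) ^ n *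
        ∏ i, ext m y i ^ (α i - 1)) (DSet m) ∧
    ∫ y in DSet m, (∏ k, ext m y k ^ δ k) * (∑ k, γ k * ext m y k) ^ n *
        ∏ i, ext m y i ^ (α i - 1)
      = ∑ c ∈ Finset.piAntidiag Finset.univ n,
          (Nat.multinomial Finset.univ c : ℝ) * (∏ k, γ k ^ c k) *
            ((∏ i, Gamma (α i + δ i + c i)) / Gamma (∑ i, (α i + δ i + c i))) := by
  have hpos : ∀ c : Fin (m+1) → ℕ, ∀ i, 0 < α i + δ i + c i := by
    intro c i
    have := hα i
    positivity
  have key : ∀ y ∈ DSet m, (∏ k, ext m y k ^ δ k) * (∑ k, γ k * ext m y k) ^ n *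
        (∏ i, ext m y i ^ (α i - 1))
      = ∑ c ∈ Finset.piAntidiag Finset.univ n,
          (Nat.multinomial Finset.univ c : ℝ) * (∏ k, γ k ^ c k) *
            ∏ i, ext m y i ^ ((α i + δ i + c i) - 1) := by
    intro y hy
    have hw : ∀ i, 0 < ext m y i := ext_pos hy
    rw [Finset.sum_pow_eq_sum_piAntidiag, Finset.mul_sum, Finset.sum_mul]
    apply Finset.sum_congr rfl
    intro c hc
    have h1 : ∏ k, (γ k * ext m y k) ^ c k
        = (∏ k, γ k ^ c k) * ∏ k, ext m y k ^ c k := by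
      rw [← Finset.prod_mul_distrib]
      apply Finset.prod_congr rfl
      intros; rw [mul_pow]
    have h2 : (∏ i, ext m y i ^ ((α i + δ i + c i) - 1))
        = (∏ k, ext m y k ^ δ k) * (∏ k, ext m y k ^ c k) *
            ∏ i, ext m y i ^ (α i - 1) := by
      rw [← Finset.prod_mul_distrib, ← Finset.prod_mul_distrib]
      apply Finset.prod_congr rfl
      intro i _
      rw [← rpow_natCast (ext m y i) (δ i), ← rpow_natCast (ext m y i) (c i),
        ← rpow_add (hw i), ← rpow_add (hw i)]
      congr 1
      ring
    rw [h1, h2]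
    ring
  have hInt : ∀ c ∈ Finset.piAntidiag Finset.univ n,
      IntegrableOn (fun y => (Nat.multinomial Finset.univ c : ℝ) * (∏ k, γ k ^ c k) *
        ∏ i, ext m y i ^ ((α i + δ i + c i) - 1)) (DSet m) := by
    intro c _
    exact (dirichlet_integrable m (fun i => α i + δ i + c i) (hpos c)).const_mul _
  have hIntSum : IntegrableOn (fun y => ∑ c ∈ Finset.piAntidiag Finset.univ n,
      (Nat.multinomial Finset.univ c : ℝ) * (∏ k, γ k ^ c k) *
        ∏ i, ext m y i ^ ((α i + δ i + c i) - 1)) (DSet m) :=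
    integrable_finset_sum _ hInt
  constructor
  · exact hIntSum.congr_fun (fun y hy => (key y hy).symm) (measurableSet_DSet m)
  · rw [setIntegral_congr_fun (measurableSet_DSet m) key,
      integral_finset_sum _ hInt]
    apply Finset.sum_congr rfl
    intro c _
    rw [MeasureTheory.integral_const_mul, dirichlet_value m (fun i => α i + δ i + c i) (hpos c)]

lemma M_step (m : ℕ) (α : Fin (m+1) → ℝ) (hα : ∀ i, 0 < α i) (c : Fin (m+1) → ℕ)
    (i : Fin (m+1)) :
    (∏ k, Gamma (α k + ((if k = i then 1 else 0 : ℕ):ℝ) + c k)) /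
        Gamma (∑ k, (α k + ((if k = i then 1 else 0 : ℕ):ℝ) + c k))
      = ((α i + c i) / (∑ k, (α k + c k))) *
          ((∏ k, Gamma (α k + c k)) / Gamma (∑ k, (α k + c k))) := by
  have hb : ∀ k, 0 < α k + (c k:ℝ) := fun k => by have := hα k; positivity
  have hS : 0 < ∑ k, (α k + (c k:ℝ)) := Finset.sum_pos (fun k _ => hb k) Finset.univ_nonempty
  have hsum : ∑ k, (α k + ((if k = i then 1 else 0 : ℕ):ℝ) + c k)
      = (∑ k, (α k + (c k:ℝ))) + 1 := by
    have : ∀ k, α k + ((if k = i then 1 else 0 : ℕ):ℝ) + c k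
        = (α k + (c k:ℝ)) + (if k = i then (1:ℝ) else 0) := by
      intro k; by_cases hk : k = i <;> simp [hk] <;> ring
    rw [Finset.sum_congr rfl fun k _ => this k, Finset.sum_add_distrib]
    simp
  have hprod : (∏ k, Gamma (α k + ((if k = i then 1 else 0 : ℕ):ℝ) + c k))
      = Gamma ((α i + c i) + 1) * ∏ k ∈ Finset.univ.erase i, Gamma (α k + c k) := by
    rw [← Finset.mul_prod_erase Finset.univ
      (fun k => Gamma (α k + ((if k = i then 1 else 0 : ℕ):ℝ) + c k)) (Finset.mem_univ i)]
    congr 1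
    · congr 1; simp; ring
    · apply Finset.prod_congr rfl
      intro k hk
      congr 1
      simp [Finset.ne_of_mem_erase hk]
  have hprod2 : (∏ k, Gamma (α k + (c k:ℝ)))
      = Gamma (α i + c i) * ∏ k ∈ Finset.univ.erase i, Gamma (α k + c k) :=
    (Finset.mul_prod_erase Finset.univ _ (Finset.mem_univ i)).symm
  rw [hsum, hprod, hprod2, Real.Gamma_add_one (hb i).ne', Real.Gamma_add_one hS.ne']
  have h1 : Gamma (∑ k, (α k + (c k:ℝ))) ≠ 0 := (Gamma_pos_of_pos hS).ne'
  field_simp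

lemma simplexIntegral_eq (m : ℕ) (g : (Fin (m+1) → ℝ) → ℝ) :
    simplexIntegral (m+1) g = ∫ y in DSet m, g (ext m y) := rfl


end DirichletAux

/-- Differential recurrence for `I_n^1`: the partial derivatives of
`J_n(γ) = ∫_{S_K} (∑ γ_k y_k)^n ∏ y_i^{α_i−1}` exist on `(0,∞)^K` and satisfy
`J_{n+1}(γ) = (1/(α_+ + n)) ∑_i (γ_i² ∂J_n/∂γ_i + α_i γ_i J_n(γ))`. -/
theorem In1_differential_recurrence (K : ℕ) (hK : 2 ≤ K) (α : Fin K → ℝ)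
    (hα : ∀ i, 0 < α i)
    (J : ℕ → (Fin K → ℝ) → ℝ)
    (hJ : ∀ n γ, J n γ =
      simplexIntegral K (fun y => (∑ k, γ k * y k) ^ n * ∏ i, y i ^ (α i - 1)))
    (n : ℕ) (γ : Fin K → ℝ) (hγ : ∀ i, 0 < γ i) :
    ∃ D : Fin K → ℝ,
      (∀ i, HasDerivAt (fun t => J n (Function.update γ i t)) (D i) (γ i)) ∧
        J (n + 1) γ = (1 / ((∑ i, α i) + n)) *
          ∑ i, (γ i ^ 2 * D i + α i * γ i * J n γ) := by
  obtain ⟨m, rfl⟩ : ∃ m, K = m + 1 := ⟨K - 1, by omega⟩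
  set A : Finset (Fin (m+1) → ℕ) := Finset.piAntidiag Finset.univ n with hA
  have hsum_c : ∀ c ∈ A, ∑ k, (α k + (c k:ℝ)) = (∑ i, α i) + n := by
    intro c hc
    have h1 : ∑ k, ((c k:ℝ)) = (n:ℝ) := by
      exact_mod_cast congrArg (Nat.cast (R := ℝ)) (Finset.mem_piAntidiag.mp hc).1
    rw [Finset.sum_add_distrib, h1]
  -- expansion of J n
  have hexp0 : ∀ γ' : Fin (m+1) → ℝ, J n γ' =
      ∑ c ∈ A, (Nat.multinomial Finset.univ c : ℝ) * (∏ k, γ' k ^ c k) *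
        ((∏ i, Gamma (α i + c i)) / Gamma (∑ i, (α i + (c i:ℝ)))) := by
    intro γ'
    rw [hJ n γ', simplexIntegral_eq]
    have h := (expand_integral m α hα (fun _ => 0) n γ').2
    simp only [pow_zero, Finset.prod_const_one, one_mul, Nat.cast_zero, add_zero] at h
    exact h
  -- expansion of J (n+1)
  have hexp1 : J (n+1) γ = ∑ i, γ i *
      ∑ c ∈ A, (Nat.multinomial Finset.univ c : ℝ) * (∏ k, γ k ^ c k) *
        ((∏ k, Gamma (α k + ((if k = i then 1 else 0 : ℕ):ℝ) + c k)) /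
          Gamma (∑ k, (α k + ((if k = i then 1 else 0 : ℕ):ℝ) + c k))) := by
    rw [hJ (n+1) γ, simplexIntegral_eq]
    have hpt : ∀ y : Fin m → ℝ,
        (∑ k, γ k * ext m y k) ^ (n+1) * ∏ i, ext m y i ^ (α i - 1)
        = ∑ i, γ i * ((∏ k, ext m y k ^ (if k = i then 1 else 0 : ℕ)) *
            (∑ k, γ k * ext m y k) ^ n * ∏ i, ext m y i ^ (α i - 1)) := by
      intro y
      have hone : ∀ i, (∏ k, ext m y k ^ (if k = i then 1 else 0 : ℕ)) = ext m y i := by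
        intro i
        simp [pow_ite, pow_one, pow_zero, Finset.prod_ite_eq', Finset.mem_univ]
      rw [pow_succ, Finset.mul_sum, Finset.sum_mul]
      apply Finset.sum_congr rfl
      intro i _
      rw [hone i]
      ring
    rw [setIntegral_congr_fun (measurableSet_DSet m) (fun y _ => hpt y),
      integral_finset_sum _ (fun i _ =>
        ((expand_integral m α hα (fun k => if k = i then 1 else 0) n γ).1.const_mul (γ i)))]
    apply Finset.sum_congr rfl
    intro i _
    rw [MeasureTheory.integral_const_mul,
      (expand_integral m α hα (fun k => if k = i then 1 else 0) n γ).2]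
  -- the update expansion
  have hupdate : ∀ (i : Fin (m+1)) (t : ℝ), J n (Function.update γ i t)
      = ∑ c ∈ A, ((Nat.multinomial Finset.univ c : ℝ) *
          ((∏ i, Gamma (α i + c i)) / Gamma (∑ i, (α i + (c i:ℝ)))) *
          ∏ k ∈ Finset.univ.erase i, γ k ^ c k) * t ^ c i := by
    intro i t
    rw [hexp0 (Function.update γ i t)]
    apply Finset.sum_congr rfl
    intro c _
    have hfun : (fun k => Function.update γ i t k ^ c k)
        = Function.update (fun k => γ k ^ c k) i (t ^ c i) := by
      funext k
      by_cases hk : k = i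
      · subst hk; simp
      · simp [Function.update_of_ne hk]
    have : ∏ k, Function.update γ i t k ^ c k
        = t ^ c i * ∏ k ∈ Finset.univ.erase i, γ k ^ c k := by
      rw [hfun, Finset.prod_update_of_mem (Finset.mem_univ i), Finset.erase_eq]
    rw [this]
    ring
  refine ⟨fun i => ∑ c ∈ A, ((Nat.multinomial Finset.univ c : ℝ) *
      ((∏ i, Gamma (α i + c i)) / Gamma (∑ i, (α i + (c i:ℝ)))) *
      ∏ k ∈ Finset.univ.erase i, γ k ^ c k) * ((c i : ℝ) * γ i ^ (c i - 1)), ?_, ?_⟩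
  · intro i
    have hd : HasDerivAt (fun t : ℝ => ∑ c ∈ A, ((Nat.multinomial Finset.univ c : ℝ) *
        ((∏ i, Gamma (α i + c i)) / Gamma (∑ i, (α i + (c i:ℝ)))) *
        ∏ k ∈ Finset.univ.erase i, γ k ^ c k) * t ^ c i)
        (∑ c ∈ A, ((Nat.multinomial Finset.univ c : ℝ) *
        ((∏ i, Gamma (α i + c i)) / Gamma (∑ i, (α i + (c i:ℝ)))) *
        ∏ k ∈ Finset.univ.erase i, γ k ^ c k) * ((c i : ℝ) * γ i ^ (c i - 1))) (γ i) := by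
      apply HasDerivAt.fun_sum
      intro c _
      simpa [mul_assoc] using (hasDerivAt_pow (c i) (γ i)).const_mul
        ((Nat.multinomial Finset.univ c : ℝ) *
        ((∏ i, Gamma (α i + c i)) / Gamma (∑ i, (α i + (c i:ℝ)))) *
        ∏ k ∈ Finset.univ.erase i, γ k ^ c k)
    exact hd.congr_of_eventuallyEq (Filter.Eventually.of_forall fun t => hupdate i t)
  · -- the recurrence
    have hS : (0:ℝ) < (∑ i, α i) + n := by
      have : (0:ℝ) < ∑ i, α i := Finset.sum_pos (fun i _ => hα i) Finset.univ_nonempty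
      positivity
    rw [hexp1, hexp0 γ, Finset.mul_sum]
    apply Finset.sum_congr rfl
    intro i _
    rw [Finset.mul_sum, Finset.mul_sum, Finset.mul_sum, ← Finset.sum_add_distrib,
      Finset.mul_sum]
    apply Finset.sum_congr rfl
    intro c hc
    rw [M_step m α hα c i, hsum_c c hc]
    have hsplit : ∏ k, γ k ^ c k = γ i ^ c i * ∏ k ∈ Finset.univ.erase i, γ k ^ c k :=
      (Finset.mul_prod_erase Finset.univ _ (Finset.mem_univ i)).symm
    have hpow : ((c i : ℝ)) * (γ i ^ 2 * γ i ^ (c i - 1)) = ((c i : ℝ)) * (γ i * γ i ^ c i) := by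
      cases hci : c i with
      | zero => simp
      | succ p => push_cast; rw [pow_succ]; ring
    rw [hsplit]
    linear_combination (-((Nat.multinomial Finset.univ c : ℝ) *
      (∏ k ∈ Finset.univ.erase i, γ k ^ c k) * (∏ k, Gamma (α k + (c k:ℝ))) /
      Gamma ((∑ i, α i) + n) / ((∑ i, α i) + n))) * hpow
end

section
/- Cauchy–Schwarz inequality for complete homogeneous symmetric means of real degree: Let K ≥ 2 be an integer and X ∈ ℝ^K with X_i > 0 for all i. For real z define q_z(X) = (K−1)! · ∫_{S_K} (∑_{j=1}^K X_j y_j)^z d^{K−1}y. Then for all real r and s, q_{(r+s)/2}(X)^2 ≤ q_r(X) · q_s(X), with equality if and only if r = s or all the X_i are equal. -/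
open MeasureTheory Real

section
variable (n : ℕ) (X : Fin (n+2) → ℝ)

def Del : Set (Fin (n+1) → ℝ) := {y | (∀ i, 0 < y i) ∧ ∑ i, y i < 1}

noncomputable def w (y : Fin (n+1) → ℝ) (j : Fin (n+2)) : ℝ :=
  if h : (j : ℕ) < n + 1 then y ⟨(j : ℕ), h⟩ else 1 - ∑ i, y i

noncomputable def F (y : Fin (n+1) → ℝ) : ℝ := ∑ j, X j * w n y j

lemma Del_open : IsOpen (Del n) := by
  have : Del n = (⋂ i, {y : Fin (n+1) → ℝ | 0 < y i}) ∩ {y | ∑ i, y i < 1} := by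
    ext y; simp [Del, Set.mem_iInter]
  rw [this]
  exact (isOpen_iInter_of_finite fun i =>
      isOpen_lt continuous_const (continuous_apply i)).inter
    (isOpen_lt (continuous_finset_sum _ fun i _ => continuous_apply i) continuous_const)

lemma Del_meas : MeasurableSet (Del n) := (Del_open n).measurableSet

lemma center_mem : (fun _ => 1 / (n+2 : ℝ)) ∈ Del n := by
  constructor
  · intro i; positivity
  · rw [Finset.sum_const, Finset.card_univ, Fintype.card_fin, nsmul_eq_mul]
    push_cast
    rw [mul_one_div, div_lt_one (by positivity)]
    linarith

lemma Del_nonempty : (Del n).Nonempty := ⟨_, center_mem n⟩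

lemma Del_vol_lt_top : volume (Del n) < ⊤ := by
  have hsub : Del n ⊆ Set.univ.pi (fun _ : Fin (n+1) => Set.Ioo (0:ℝ) 1) := by
    intro y hy
    intro i _
    refine ⟨hy.1 i, ?_⟩
    calc y i ≤ ∑ j, y j := Finset.single_le_sum (fun j _ => (hy.1 j).le) (Finset.mem_univ i)
    _ < 1 := hy.2
  calc volume (Del n) ≤ volume (Set.univ.pi (fun _ : Fin (n+1) => Set.Ioo (0:ℝ) 1)) :=
        measure_mono hsub
    _ = ∏ _i : Fin (n+1), volume (Set.Ioo (0:ℝ) 1) := volume_pi_pi _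
    _ < ⊤ := by simp

lemma Del_vol_pos : 0 < volume (Del n) :=
  (Del_open n).measure_pos volume (Del_nonempty n)

lemma w_pos {y} (hy : y ∈ Del n) (j : Fin (n+2)) : 0 < w n y j := by
  unfold w; split
  · exact hy.1 _
  · have := hy.2; linarith

lemma w_sum (y : Fin (n+1) → ℝ) : ∑ j, w n y j = 1 := by
  rw [Fin.sum_univ_castSucc]
  have h1 : ∀ j : Fin (n+1), w n y j.castSucc = y j := by
    intro j
    unfold w
    rw [dif_pos (by simp [Fin.castSucc, Fin.is_lt]; have := j.is_lt; omega : ((j.castSucc : Fin (n+2)) : ℕ) < n + 1)]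
    congr 1
  have h2 : w n y (Fin.last (n+1)) = 1 - ∑ i, y i := by
    unfold w; rw [dif_neg (by simp)]
  simp only [h1, h2]; ring

lemma F_cont : Continuous (F n X) := by
  unfold F
  refine continuous_finset_sum _ fun j _ => continuous_const.mul ?_
  unfold w
  split
  · exact continuous_apply _
  · exact continuous_const.sub (continuous_finset_sum _ fun i _ => continuous_apply i)

noncomputable def mlo : ℝ := Finset.univ.inf' Finset.univ_nonempty X
noncomputable def Mhi : ℝ := Finset.univ.sup' Finset.univ_nonempty X

lemma mlo_pos (hX : ∀ i, 0 < X i) : 0 < mlo n X := by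
  rw [mlo, Finset.lt_inf'_iff]
  exact fun i _ => hX i

lemma F_ge {y} (hy : y ∈ Del n) : mlo n X ≤ F n X y := by
  have : mlo n X = ∑ j, mlo n X * w n y j := by
    rw [← Finset.mul_sum, w_sum, mul_one]
  rw [this, F]
  exact Finset.sum_le_sum fun j _ =>
    mul_le_mul_of_nonneg_right (Finset.inf'_le X (Finset.mem_univ j)) (w_pos n hy j).le

lemma F_le {y} (hy : y ∈ Del n) : F n X y ≤ Mhi n X := by
  have : Mhi n X = ∑ j, Mhi n X * w n y j := by
    rw [← Finset.mul_sum, w_sum, mul_one]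
  rw [this, F]
  exact Finset.sum_le_sum fun j _ =>
    mul_le_mul_of_nonneg_right (Finset.le_sup' X (Finset.mem_univ j)) (w_pos n hy j).le

lemma F_pos (hX : ∀ i, 0 < X i) {y} (hy : y ∈ Del n) : 0 < F n X y :=
  lt_of_lt_of_le (mlo_pos n X hX) (F_ge n X hy)

lemma rpow_bound (hX : ∀ i, 0 < X i) (z : ℝ) {y} (hy : y ∈ Del n) :
    F n X y ^ z ≤ mlo n X ^ z + Mhi n X ^ z := by
  have hm := mlo_pos n X hX
  have h1 := F_ge n X hy
  have h2 := F_le n X hy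
  rcases le_total 0 z with hz | hz
  · have : F n X y ^ z ≤ Mhi n X ^ z := Real.rpow_le_rpow (by linarith) h2 hz
    have h0 : (0:ℝ) ≤ mlo n X ^ z := Real.rpow_nonneg hm.le z
    linarith
  · have : F n X y ^ z ≤ mlo n X ^ z := Real.rpow_le_rpow_of_nonpos hm h1 hz
    have h0 : (0:ℝ) ≤ Mhi n X ^ z := Real.rpow_nonneg (by linarith) z
    linarith

lemma rpow_lbound (hX : ∀ i, 0 < X i) (z : ℝ) {y} (hy : y ∈ Del n) :
    min (mlo n X ^ z) (Mhi n X ^ z) ≤ F n X y ^ z := by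
  have hm := mlo_pos n X hX
  have h1 := F_ge n X hy
  have h2 := F_le n X hy
  rcases le_total 0 z with hz | hz
  · exact le_trans (min_le_left _ _) (Real.rpow_le_rpow hm.le h1 hz)
  · exact le_trans (min_le_right _ _) (Real.rpow_le_rpow_of_nonpos (by linarith) h2 hz)

lemma intOn (hX : ∀ i, 0 < X i) (z : ℝ) :
    IntegrableOn (fun y => F n X y ^ z) (Del n) volume := by
  have hmeas : Measurable (fun y => F n X y ^ z) :=
    (F_cont n X).measurable.pow measurable_const
  refine Integrable.mono' (g := fun _ => mlo n X ^ z + Mhi n X ^ z)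
    (integrableOn_const (Del_vol_lt_top n).ne) hmeas.aestronglyMeasurable ?_
  rw [ae_restrict_iff' (Del_meas n)]
  filter_upwards with y hy
  rw [Real.norm_eq_abs, abs_of_nonneg (Real.rpow_nonneg (F_pos n X hX hy).le z)]
  exact rpow_bound n X hX z hy

noncomputable def Iz (z : ℝ) : ℝ := ∫ y in Del n, F n X y ^ z

lemma Iz_pos (hX : ∀ i, 0 < X i) (z : ℝ) : 0 < Iz n X z := by
  have hm := mlo_pos n X hX
  have hM : 0 < Mhi n X := lt_of_lt_of_le hm
    (le_trans (Finset.inf'_le X (Finset.mem_univ 0)) (Finset.le_sup' X (Finset.mem_univ 0)))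
  have hl : 0 < min (mlo n X ^ z) (Mhi n X ^ z) :=
    lt_min (Real.rpow_pos_of_pos hm z) (Real.rpow_pos_of_pos hM z)
  have hconst : IntegrableOn (fun _ : Fin (n+1) → ℝ => min (mlo n X ^ z) (Mhi n X ^ z))
      (Del n) volume := integrableOn_const (Del_vol_lt_top n).ne
  have h1 : (∫ _y in Del n, min (mlo n X ^ z) (Mhi n X ^ z)) ≤ Iz n X z :=
    setIntegral_mono_on hconst (intOn n X hX z) (Del_meas n)
      (fun y hy => rpow_lbound n X hX z hy)
  have h2 : (∫ _y in Del n, min (mlo n X ^ z) (Mhi n X ^ z))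
      = (volume (Del n)).toReal * min (mlo n X ^ z) (Mhi n X ^ z) := by
    rw [setIntegral_const, smul_eq_mul]
    rfl
  have hV : 0 < (volume (Del n)).toReal :=
    ENNReal.toReal_pos (Del_vol_pos n).ne' (Del_vol_lt_top n).ne
  nlinarith

lemma key_ptwise (hX : ∀ i, 0 < X i) (r s t : ℝ) {y} (hy : y ∈ Del n) :
    (t * F n X y ^ (r/2) - F n X y ^ (s/2))^2
      = t^2 * F n X y ^ r - 2*t*(F n X y ^ ((r+s)/2)) + F n X y ^ s := by
  have h0 := F_pos n X hX hy
  have e1 : F n X y ^ (r/2) * F n X y ^ (r/2) = F n X y ^ r := by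
    rw [← Real.rpow_add h0]; ring_nf
  have e2 : F n X y ^ (r/2) * F n X y ^ (s/2) = F n X y ^ ((r+s)/2) := by
    rw [← Real.rpow_add h0]; ring_nf
  have e3 : F n X y ^ (s/2) * F n X y ^ (s/2) = F n X y ^ s := by
    rw [← Real.rpow_add h0]; ring_nf
  linear_combination t^2 * e1 - 2*t*e2 + e3

lemma E_eq (hX : ∀ i, 0 < X i) (r s t : ℝ) :
    ∫ y in Del n, (t * F n X y ^ (r/2) - F n X y ^ (s/2))^2
      = t^2 * Iz n X r - 2*t*(Iz n X ((r+s)/2)) + Iz n X s := by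
  have hcong : ∫ y in Del n, (t * F n X y ^ (r/2) - F n X y ^ (s/2))^2
      = ∫ y in Del n, (t^2 * F n X y ^ r - 2*t*(F n X y ^ ((r+s)/2)) + F n X y ^ s) := by
    refine setIntegral_congr_fun (Del_meas n) fun y hy => key_ptwise n X hX r s t hy
  have ha : IntegrableOn (fun y => t^2 * F n X y ^ r) (Del n) volume :=
    (intOn n X hX r).const_mul _
  have hb : IntegrableOn (fun y => 2*t*(F n X y ^ ((r+s)/2))) (Del n) volume :=
    (intOn n X hX _).const_mul _
  have hab : IntegrableOn (fun y => t^2 * F n X y ^ r - 2*t*(F n X y ^ ((r+s)/2)))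
      (Del n) volume := ha.sub hb
  rw [hcong, integral_add hab (intOn n X hX s), integral_sub ha hb,
    integral_const_mul, integral_const_mul]
  rfl

lemma sq_int (hX : ∀ i, 0 < X i) (r s t : ℝ) :
    IntegrableOn (fun y => (t * F n X y ^ (r/2) - F n X y ^ (s/2))^2) (Del n) volume := by
  have hcomb : IntegrableOn
      (fun y => t^2 * F n X y ^ r - 2*t*(F n X y ^ ((r+s)/2)) + F n X y ^ s) (Del n) volume :=
    (((intOn n X hX r).const_mul _).sub ((intOn n X hX _).const_mul _)).add (intOn n X hX s)
  exact hcomb.congr_fun (fun y hy => (key_ptwise n X hX r s t hy).symm) (Del_meas n)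

lemma CS_ineq (hX : ∀ i, 0 < X i) (r s : ℝ) :
    Iz n X ((r+s)/2) ^ 2 ≤ Iz n X r * Iz n X s := by
  have hA := Iz_pos n X hX r
  set A := Iz n X r
  set B := Iz n X ((r+s)/2)
  set C := Iz n X s
  have hE0 : 0 ≤ ∫ y in Del n, ((B/A) * F n X y ^ (r/2) - F n X y ^ (s/2))^2 :=
    integral_nonneg fun y => sq_nonneg _
  rw [E_eq n X hX r s (B/A)] at hE0
  have h1 : (B/A)^2 * A = B^2/A := by field_simp
  have h2 : 2*(B/A)*B = 2*(B^2/A) := by field_simp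
  rw [h1, h2] at hE0
  have : B^2/A ≤ C := by linarith
  calc B^2 = (B^2/A) * A := by field_simp
  _ ≤ C * A := mul_le_mul_of_nonneg_right this hA.le
  _ = A * C := mul_comm _ _

lemma F_const (hc : ∀ i j, X i = X j) {y} (hy : y ∈ Del n) : F n X y = X 0 := by
  have : ∀ j, X j * w n y j = X 0 * w n y j := fun j => by rw [hc j 0]
  rw [F, Finset.sum_congr rfl fun j _ => this j, ← Finset.mul_sum, w_sum, mul_one]

lemma Iz_const (hc : ∀ i j, X i = X j) (z : ℝ) :
    Iz n X z = (volume (Del n)).toReal * (X 0 ^ z) := by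
  rw [Iz, setIntegral_congr_fun (Del_meas n) (fun y hy => by rw [F_const n X hc hy]),
    setIntegral_const, smul_eq_mul]
  rfl

lemma contOn_phi (hX : ∀ i, 0 < X i) (t a : ℝ) :
    ContinuousOn (fun y => t * F n X y ^ a) (Del n) := by
  intro y hy
  exact (((Real.continuousAt_rpow_const _ _ (Or.inl (F_pos n X hX hy).ne')).comp
    (F_cont n X).continuousAt).const_smul t).continuousWithinAt

lemma sum_ite_val (v : Fin (n+2)) (ε : ℝ) :
    ∑ k : Fin (n+1), (if (k:ℕ) = (v:ℕ) then ε else 0)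
      = if (v:ℕ) < n+1 then ε else 0 := by
  by_cases hv : (v:ℕ) < n+1
  · rw [if_pos hv, Finset.sum_eq_single (⟨(v:ℕ), hv⟩ : Fin (n+1))]
    · simp
    · intro k _ hk
      rw [if_neg]
      exact fun h => hk (Fin.ext h)
    · intro h; exact absurd (Finset.mem_univ _) h
  · rw [if_neg hv]
    apply Finset.sum_eq_zero
    intro k _
    rw [if_neg]
    exact fun h => hv (h ▸ k.is_lt)

lemma perturb (a b : Fin (n+2)) (hab : a ≠ b) :
    ∃ y1 y2, y1 ∈ Del n ∧ y2 ∈ Del n ∧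
      F n X y2 = F n X y1 + (1/(2*(n+2 : ℝ))) * (X a - X b) := by
  set c : ℝ := 1/(n+2 : ℝ) with hcdef
  have hc : 0 < c := by positivity
  have hn2 : (n : ℝ) + 2 ≠ 0 := by positivity
  have hc1 : (n+1 : ℝ) * c + c = 1 := by
    rw [hcdef]; field_simp; ring
  set ε : ℝ := c/2 with hεdef
  have hε : 0 < ε := by positivity
  have hsum : ∑ k : Fin (n+1), (c + (if (k:ℕ) = (a:ℕ) then ε else 0)
      - (if (k:ℕ) = (b:ℕ) then ε else 0))
      = (n+1 : ℝ) * c + (if (a:ℕ) < n+1 then ε else 0)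
        - (if (b:ℕ) < n+1 then ε else 0) := by
    rw [Finset.sum_sub_distrib, Finset.sum_add_distrib, sum_ite_val, sum_ite_val,
      Finset.sum_const, Finset.card_univ, Fintype.card_fin, nsmul_eq_mul]
    push_cast; ring
  refine ⟨fun _ => c, fun k => c + (if (k:ℕ) = (a:ℕ) then ε else 0)
      - (if (k:ℕ) = (b:ℕ) then ε else 0), center_mem n, ?_, ?_⟩
  · constructor
    · intro k
      dsimp only
      split_ifs <;> linarith
    · rw [hsum]
      split_ifs <;> linarith
  · have hW : ∀ j : Fin (n+2),
        w n (fun k => c + (if (k:ℕ) = (a:ℕ) then ε else 0)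
          - (if (k:ℕ) = (b:ℕ) then ε else 0)) j
        = w n (fun _ => c) j + (if j = a then ε else 0) - (if j = b then ε else 0) := by
      intro j
      unfold w
      by_cases hj : (j:ℕ) < n+1
      · rw [dif_pos hj, dif_pos hj]
        have ea : ((⟨(j:ℕ), hj⟩ : Fin (n+1)) : ℕ) = (a:ℕ) ↔ j = a := by
          constructor
          · intro h; exact Fin.ext h
          · intro h; subst h; rfl
        have eb : ((⟨(j:ℕ), hj⟩ : Fin (n+1)) : ℕ) = (b:ℕ) ↔ j = b := by
          constructor
          · intro h; exact Fin.ext h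
          · intro h; subst h; rfl
        dsimp only
        rw [if_congr ea rfl rfl, if_congr eb rfl rfl]
      · rw [dif_neg hj, dif_neg hj]
        have hsum1 : ∑ _k : Fin (n+1), c = (n+1 : ℝ) * c := by
          rw [Finset.sum_const, Finset.card_univ, Fintype.card_fin, nsmul_eq_mul]
          push_cast; ring
        have hjv : (j:ℕ) = n+1 := by have := j.is_lt; omega
        have hja : (j = a) ↔ ¬ ((a:ℕ) < n+1) := by
          constructor
          · intro h; rw [← h, hjv]; omega
          · intro h
            have : (a:ℕ) = n+1 := by have := a.is_lt; omega
            exact Fin.ext (by rw [hjv, this])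
        have hjb : (j = b) ↔ ¬ ((b:ℕ) < n+1) := by
          constructor
          · intro h; rw [← h, hjv]; omega
          · intro h
            have : (b:ℕ) = n+1 := by have := b.is_lt; omega
            exact Fin.ext (by rw [hjv, this])
        have e1 : (if j = a then ε else 0) = (if (a:ℕ) < n+1 then 0 else ε) := by
          by_cases h : (a:ℕ) < n+1
          · rw [if_neg (fun hh => (hja.mp hh) h), if_pos h]
          · rw [if_pos (hja.mpr h), if_neg h]
        have e2 : (if j = b then ε else 0) = (if (b:ℕ) < n+1 then 0 else ε) := by
          by_cases h : (b:ℕ) < n+1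
          · rw [if_neg (fun hh => (hjb.mp hh) h), if_pos h]
          · rw [if_pos (hjb.mpr h), if_neg h]
        rw [hsum, hsum1, e1, e2]
        split_ifs <;> ring
    have hFF : F n X (fun k => c + (if (k:ℕ) = (a:ℕ) then ε else 0)
        - (if (k:ℕ) = (b:ℕ) then ε else 0))
        = F n X (fun _ => c) + ∑ j, X j * (if j = a then ε else 0)
          - ∑ j, X j * (if j = b then ε else 0) := by
      rw [F, F]
      calc ∑ j, X j * w n (fun k => c + (if (k:ℕ) = (a:ℕ) then ε else 0)
              - (if (k:ℕ) = (b:ℕ) then ε else 0)) j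
          = ∑ j, (X j * w n (fun _ => c) j + X j * (if j = a then ε else 0)
              - X j * (if j = b then ε else 0)) :=
            Finset.sum_congr rfl fun j _ => by rw [hW j]; ring
        _ = _ := by rw [Finset.sum_sub_distrib, Finset.sum_add_distrib]
    rw [hFF]
    have ha' : ∑ j, X j * (if j = a then ε else 0) = X a * ε := by
      rw [Finset.sum_congr rfl fun j _ => (show X j * (if j = a then ε else 0)
          = (if j = a then X j * ε else 0) by split_ifs <;> ring)]
      rw [Finset.sum_ite_eq' Finset.univ a (fun j => X j * ε)]
      simp
    have hb' : ∑ j, X j * (if j = b then ε else 0) = X b * ε := by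
      rw [Finset.sum_congr rfl fun j _ => (show X j * (if j = b then ε else 0)
          = (if j = b then X j * ε else 0) by split_ifs <;> ring)]
      rw [Finset.sum_ite_eq' Finset.univ b (fun j => X j * ε)]
      simp
    rw [ha', hb', hεdef, hcdef]
    field_simp
    ring

lemma contOn_pow (hX : ∀ i, 0 < X i) (a : ℝ) :
    ContinuousOn (fun y => F n X y ^ a) (Del n) := by
  intro y hy
  exact (((Real.continuousAt_rpow_const _ _ (Or.inl (F_pos n X hX hy).ne')).comp
    (F_cont n X).continuousAt)).continuousWithinAt

lemma eq_case_forward (hX : ∀ i, 0 < X i) (r s : ℝ) (hrs : r ≠ s)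
    (heq : Iz n X ((r+s)/2)^2 = Iz n X r * Iz n X s) : ∀ i j, X i = X j := by
  by_contra hcon
  push_neg at hcon
  obtain ⟨a, b, hab⟩ := hcon
  have hA := Iz_pos n X hX r
  have hB := Iz_pos n X hX ((r+s)/2)
  set A := Iz n X r with hAdef
  set B := Iz n X ((r+s)/2) with hBdef
  set C := Iz n X s with hCdef
  set t : ℝ := B / A with htdef
  have ht : 0 < t := div_pos hB hA
  have hEzero : ∫ y in Del n, (t * F n X y ^ (r/2) - F n X y ^ (s/2))^2 = 0 := by
    rw [E_eq n X hX r s t]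
    rw [← hAdef, ← hBdef, ← hCdef]
    have h1 : t^2 * A = B^2/A := by rw [htdef]; field_simp
    have h2 : 2*t*B = 2*(B^2/A) := by rw [htdef]; field_simp
    have h3 : B^2/A = C := by rw [heq]; field_simp
    rw [h1, h2, h3]; ring
  have hae : (fun y => (t * F n X y ^ (r/2) - F n X y ^ (s/2))^2)
      =ᵐ[volume.restrict (Del n)] 0 :=
    (integral_eq_zero_iff_of_nonneg_ae
      (Filter.Eventually.of_forall fun y => sq_nonneg _) (sq_int n X hX r s t)).mp hEzero
  have hae' : (fun y => t * F n X y ^ (r/2) - F n X y ^ (s/2))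
      =ᵐ[volume.restrict (Del n)] 0 := by
    filter_upwards [hae] with y hy
    have : (t * F n X y ^ (r/2) - F n X y ^ (s/2))^2 = 0 := hy
    exact pow_eq_zero_iff two_ne_zero |>.mp this
  have hφcont : ContinuousOn (fun y => t * F n X y ^ (r/2) - F n X y ^ (s/2)) (Del n) :=
    (continuousOn_const.mul (contOn_pow n X hX (r/2))).sub (contOn_pow n X hX (s/2))
  have hEqOn : Set.EqOn (fun y => t * F n X y ^ (r/2) - F n X y ^ (s/2)) 0 (Del n) :=
    Measure.eqOn_of_ae_eq hae' hφcont continuousOn_const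
      (by rw [(Del_open n).interior_eq]; exact subset_closure)
  obtain ⟨y1, y2, hy1, hy2, hF12⟩ := perturb n X a b (fun h => hab (by rw [h]))
  have hp1 := F_pos n X hX hy1
  have hp2 := F_pos n X hX hy2
  have hpt1 : t * F n X y1 ^ (r/2) = F n X y1 ^ (s/2) := by
    have := hEqOn hy1; simp only [Pi.zero_apply] at this; linarith
  have hpt2 : t * F n X y2 ^ (r/2) = F n X y2 ^ (s/2) := by
    have := hEqOn hy2; simp only [Pi.zero_apply] at this; linarith
  have ht1 : t = F n X y1 ^ ((s-r)/2) := by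
    rw [show (s-r)/2 = s/2 - r/2 by ring, Real.rpow_sub hp1,
      eq_div_iff (Real.rpow_pos_of_pos hp1 _).ne']
    linarith
  have ht2 : t = F n X y2 ^ ((s-r)/2) := by
    rw [show (s-r)/2 = s/2 - r/2 by ring, Real.rpow_sub hp2,
      eq_div_iff (Real.rpow_pos_of_pos hp2 _).ne']
    linarith
  have hu : (s-r)/2 ≠ 0 := by
    intro h; apply hrs; field_simp at h; linarith
  have hlog : (s-r)/2 * Real.log (F n X y1) = (s-r)/2 * Real.log (F n X y2) := by
    rw [← Real.log_rpow hp1, ← Real.log_rpow hp2, ← ht1, ← ht2]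
  have hll : Real.log (F n X y1) = Real.log (F n X y2) := mul_left_cancel₀ hu hlog
  have hpp : F n X y1 = F n X y2 := by
    rw [← Real.exp_log hp1, ← Real.exp_log hp2, hll]
  have hne : (1/(2*(n+2 : ℝ))) * (X a - X b) ≠ 0 :=
    mul_ne_zero (by positivity) (sub_ne_zero.mpr hab)
  apply hne
  linarith [hF12, hpp]

end

/-- Cauchy–Schwarz inequality for complete homogeneous symmetric means of real degree,
with the equality condition. -/
theorem q_cauchy_schwarz (K : ℕ) (hK : 2 ≤ K) (X : Fin K → ℝ) (hX : ∀ i, 0 < X i)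
    (q : ℝ → ℝ)
    (hq : ∀ z, q z = ((K - 1).factorial : ℝ) *
      simplexIntegral K (fun y => (∑ j, X j * y j) ^ z))
    (r s : ℝ) :
    q ((r + s) / 2) ^ 2 ≤ q r * q s ∧
      (q ((r + s) / 2) ^ 2 = q r * q s ↔ r = s ∨ ∀ i j, X i = X j) := by
  obtain ⟨n, rfl⟩ : ∃ n, K = n + 2 := ⟨K - 2, by omega⟩
  have hq' : ∀ z, q z = ((n+1).factorial : ℝ) * Iz n X z := by
    intro z; rw [hq z]; rfl
  have hcpos : (0:ℝ) < ((n+1).factorial : ℝ) := by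
    exact_mod_cast (n+1).factorial_pos
  set cnum := ((n+1).factorial : ℝ) with hcnum
  have hA := Iz_pos n X hX r
  have hB := Iz_pos n X hX ((r+s)/2)
  have hC := Iz_pos n X hX s
  set A := Iz n X r with hAdef
  set B := Iz n X ((r+s)/2) with hBdef
  set C := Iz n X s with hCdef
  have hCS : B^2 ≤ A*C := CS_ineq n X hX r s
  refine ⟨?_, ?_, ?_⟩
  · rw [hq', hq', hq']
    calc (cnum * B)^2 = cnum^2 * B^2 := by ring
    _ ≤ cnum^2 * (A*C) := by nlinarith
    _ = cnum * A * (cnum * C) := by ring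
  · intro hEq
    rw [hq', hq', hq'] at hEq
    have h2 : cnum^2 * B^2 = cnum^2 * (A*C) := by linear_combination hEq
    have hBAC : B^2 = A*C := mul_left_cancel₀ (by positivity) h2
    by_cases hrs : r = s
    · exact Or.inl hrs
    · exact Or.inr (eq_case_forward n X hX r s hrs hBAC)
  · intro h
    rcases h with hrs | hconst
    · subst hrs
      rw [show (r+r)/2 = r by ring]
      ring
    · have hIzc : ∀ z, Iz n X z = (volume (Del n)).toReal * (X 0 ^ z) :=
        Iz_const n X hconst
      rw [hq', hq', hq', hIzc, hIzc, hIzc]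
      have hX0 : 0 < X 0 := hX 0
      have hh : X 0 ^ ((r+s)/2) * X 0 ^ ((r+s)/2) = X 0 ^ r * X 0 ^ s := by
        rw [← Real.rpow_add hX0, ← Real.rpow_add hX0]; ring_nf
      linear_combination (cnum^2 * ((volume (Del n)).toReal)^2) * hh
end

section
/- Van Laarhoven–Kalker identity: Let K ≥ 1 be an integer, α, γ ∈ ℝ^K, and let n be a nonnegative integer. Then ∑_{(n_1,…,n_K) ∈ ℕ^K, n_1+…+n_K = n} ∏_{i=1}^K ( (α_i)_{n_i} · γ_i^{n_i} / n_i! ) = h_n(α, γ). -/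
open Real

/-- Deformed power sums `p_d(α, γ) = ∑_j α_j γ_j^d`. -/
noncomputable def pSum (K : ℕ) (α γ : Fin K → ℝ) (d : ℕ) : ℝ := ∑ j, α j * γ j ^ d

/-- α-deformed complete homogeneous symmetric polynomials, defined by `h_0 = 1` and
the Newton recurrence `h_n = (1/n) ∑_{m=1}^n p_m h_{n−m}`. -/
noncomputable def hDef (K : ℕ) (α γ : Fin K → ℝ) : ℕ → ℝ
  | 0 => 1
  | n + 1 =>
    (1 / (n + 1 : ℝ)) *
      ∑ m ∈ Finset.range (n + 1), pSum K α γ (m + 1) * hDef K α γ (n - m)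
  decreasing_by exact Nat.lt_succ_of_le (Nat.sub_le n m)

namespace VLK

open PowerSeries

/-- Single-variable coefficients. -/
noncomputable def b (a c : ℝ) (m : ℕ) : ℝ :=
  (ascPochhammer ℝ m).eval a * c ^ m / (m.factorial : ℝ)

noncomputable def f (a c : ℝ) : ℝ⟦X⟧ := PowerSeries.mk (b a c)

noncomputable def P (a c : ℝ) : ℝ⟦X⟧ := PowerSeries.mk fun m => a * c ^ (m + 1)

set_option linter.deprecated false in
lemma coeff_derivativeFun' (g : ℝ⟦X⟧) (n : ℕ) :
    PowerSeries.coeff n g.derivativeFun = PowerSeries.coeff (n + 1) g * (n + 1) :=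
  PowerSeries.coeff_derivative g n

lemma poch_rec (a : ℝ) (n : ℕ) :
    (n + 1 : ℝ) * ((ascPochhammer ℝ (n + 1)).eval a / ((n + 1).factorial : ℝ)) =
      a * ∑ u ∈ Finset.range (n + 1),
        (ascPochhammer ℝ (n - u)).eval a / ((n - u).factorial : ℝ) := by
  induction n with
  | zero => simp [ascPochhammer_one]
  | succ n ih =>
    rw [Finset.sum_range_succ']
    simp only [Nat.succ_sub_succ, Nat.sub_zero]
    rw [mul_add, ← ih]
    have hpoch : (ascPochhammer ℝ (n + 2)).eval a
        = (ascPochhammer ℝ (n + 1)).eval a * (a + (n + 1)) := by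
      rw [show n + 2 = (n + 1) + 1 from rfl, ascPochhammer_succ_right]
      push_cast
      simp [Polynomial.eval_mul]
    have hfac : ((n + 2).factorial : ℝ) = (n + 2) * ((n + 1).factorial : ℝ) := by
      rw [show n + 2 = (n + 1) + 1 from rfl, Nat.factorial_succ]
      push_cast
      ring
    have hf1 : ((n + 1).factorial : ℝ) ≠ 0 := Nat.cast_ne_zero.2 (Nat.factorial_ne_zero _)
    have h2 : (n + 2 : ℝ) ≠ 0 := by positivity
    rw [hpoch, hfac]
    push_cast
    field_simp
    ring

lemma deriv_f (a c : ℝ) : (f a c).derivativeFun = P a c * f a c := by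
  ext n
  rw [coeff_derivativeFun', PowerSeries.coeff_mul,
    Finset.Nat.sum_antidiagonal_eq_sum_range_succ_mk]
  simp only [f, P, PowerSeries.coeff_mk]
  have h1 : ∀ u ∈ Finset.range (n + 1),
      a * c ^ (u + 1) * b a c (n - u)
        = c ^ (n + 1) * (a * ((ascPochhammer ℝ (n - u)).eval a / ((n - u).factorial : ℝ))) := by
    intro u hu
    have hun : u ≤ n := Nat.lt_succ_iff.mp (Finset.mem_range.mp hu)
    have hc : c ^ (u + 1) * c ^ (n - u) = c ^ (n + 1) := by
      rw [← pow_add]; congr 1; omega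
    unfold b
    rw [← hc]
    ring
  rw [Finset.sum_congr rfl h1, ← Finset.mul_sum, ← Finset.mul_sum, ← poch_rec]
  unfold b
  ring

lemma deriv_prod {K : ℕ} (s : Finset (Fin K)) (F Q : Fin K → ℝ⟦X⟧)
    (h : ∀ i, (F i).derivativeFun = Q i * F i) :
    (∏ i ∈ s, F i).derivativeFun = (∑ i ∈ s, Q i) * ∏ i ∈ s, F i := by
  classical
  induction s using Finset.induction with
  | empty => simp [PowerSeries.derivativeFun_one]
  | insert _ _ hx ih =>
    rename_i a s
    rw [Finset.prod_insert hx, Finset.sum_insert hx, PowerSeries.derivativeFun_mul, ih, h a]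
    simp only [smul_eq_mul]
    ring

lemma coeff_prod_tuple {K : ℕ} (α γ : Fin K → ℝ) (n : ℕ) :
    PowerSeries.coeff n (∏ i, f (α i) (γ i)) =
      ∑ v ∈ Finset.Nat.antidiagonalTuple K n, ∏ i, b (α i) (γ i) (v i) := by
  classical
  rw [PowerSeries.coeff_prod]
  simp only [f, PowerSeries.coeff_mk]
  refine Finset.sum_nbij' (fun l => ⇑l) (fun v => Finsupp.equivFunOnFinite.symm v) ?_ ?_ ?_ ?_ ?_
  · intro l hl
    rw [Finset.mem_finsuppAntidiag] at hl
    rw [Finset.Nat.mem_antidiagonalTuple]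
    exact hl.1
  · intro v hv
    rw [Finset.Nat.mem_antidiagonalTuple] at hv
    rw [Finset.mem_finsuppAntidiag]
    constructor
    · rw [← hv]
      exact Finset.sum_congr rfl fun i _ => by simp
    · exact Finset.subset_univ _
  · intro l _
    exact Finsupp.equivFunOnFinite.symm_apply_apply l
  · intro v _
    rfl
  · intro l _
    rfl

lemma coeff_sumP {K : ℕ} (α γ : Fin K → ℝ) (u : ℕ) :
    PowerSeries.coeff u (∑ i, P (α i) (γ i)) = pSum K α γ (u + 1) := by
  rw [map_sum]
  simp [P, pSum]

lemma key {K : ℕ} (α γ : Fin K → ℝ) : ∀ n,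
    PowerSeries.coeff n (∏ i, f (α i) (γ i)) = hDef K α γ n := by
  intro n
  induction n using Nat.strong_induction_on with
  | _ n ih =>
    match n with
    | 0 =>
      rw [coeff_prod_tuple, Finset.Nat.antidiagonalTuple_zero_right, hDef]
      simp [b]
    | (m + 1) =>
      have hD := congrArg (PowerSeries.coeff m)
        (deriv_prod Finset.univ (fun i => f (α i) (γ i)) (fun i => P (α i) (γ i))
          (fun i => deriv_f (α i) (γ i)))
      rw [coeff_derivativeFun', PowerSeries.coeff_mul,
        Finset.Nat.sum_antidiagonal_eq_sum_range_succ_mk] at hD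
      have hsum : ∀ u ∈ Finset.range (m + 1),
          PowerSeries.coeff u (∑ i, P (α i) (γ i)) *
              PowerSeries.coeff (m - u) (∏ i, f (α i) (γ i))
            = pSum K α γ (u + 1) * hDef K α γ (m - u) := by
        intro u hu
        rw [coeff_sumP, ih (m - u) (Nat.lt_succ_of_le (Nat.sub_le m u))]
      rw [Finset.sum_congr rfl hsum] at hD
      have hm : ((m : ℝ) + 1) ≠ 0 := by positivity
      rw [hDef, ← hD]
      push_cast
      field_simp

end VLK

/-- Van Laarhoven–Kalker identity: the multinomial sum of Pochhammer products equals the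
α-deformed complete homogeneous symmetric polynomial. -/
theorem van_laarhoven_kalker (K : ℕ) (hK : 1 ≤ K) (α γ : Fin K → ℝ) (n : ℕ) :
    ∑ v ∈ Finset.Nat.antidiagonalTuple K n,
        ∏ i, ((ascPochhammer ℝ (v i)).eval (α i) * γ i ^ v i / ((v i).factorial : ℝ)) =
      hDef K α γ n := by
  rw [← VLK.key α γ n, VLK.coeff_prod_tuple]
  rfl
end

section
/- Simplex integral representation of complete homogeneous symmetric polynomials: Let K ≥ 2 be an integer, γ ∈ ℝ^K, and let n be a nonnegative integer. Then ∫_{S_K} (∑_{j=1}^K γ_j y_j)^n d^{K−1}y = (n! / (n+K−1)!) · h_n(γ), where h_n(γ) = ∑_{(n_1,…,n_K) ∈ ℕ^K, n_1+…+n_K = n} ∏_{i=1}^K γ_i^{n_i} is the complete homogeneous symmetric polynomial of degree n evaluated at γ. -/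
open MeasureTheory Real

section Aux
open Set Pointwise

lemma beta_nat (a b : ℕ) : ∫ x in (0:ℝ)..1, x ^ a * (1 - x) ^ b
    = (a.factorial * b.factorial : ℝ) / ((a + b + 1).factorial) := by
  induction b generalizing a with
  | zero =>
    simp [integral_pow, Nat.factorial_succ]
    rw [eq_div_iff (by positivity)]
    field_simp
  | succ b ih =>
    have hu : ∀ x ∈ uIcc (0:ℝ) 1, HasDerivAt (fun x : ℝ => (1 - x) ^ (b+1))
        (-((b+1 : ℝ) * (1 - x) ^ b)) x := by
      intro x _
      have : HasDerivAt (fun x : ℝ => 1 - x) (-1) x := by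
        simpa using (hasDerivAt_id x).const_sub 1
      simpa [mul_comm] using (this.fun_pow (b+1))
    have hv : ∀ x ∈ uIcc (0:ℝ) 1, HasDerivAt (fun x : ℝ => x ^ (a+1) / (a+1))
        (x ^ a) x := by
      intro x _
      have h := (hasDerivAt_pow (a+1) x).div_const (a+1 : ℝ)
      simpa [mul_comm, mul_div_assoc, Nat.cast_add, mul_div_cancel_left₀,
        (by positivity : (a:ℝ)+1 ≠ 0)] using h
    have hIu : IntervalIntegrable (fun x : ℝ => -((b+1 : ℝ) * (1 - x) ^ b)) volume 0 1 := by
      apply Continuous.intervalIntegrable; continuity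
    have hIv : IntervalIntegrable (fun x : ℝ => (x : ℝ) ^ a) volume 0 1 := by
      apply Continuous.intervalIntegrable; continuity
    have key := intervalIntegral.integral_mul_deriv_eq_deriv_mul hu hv hIu hIv
    simp only [one_pow, zero_pow, sub_zero, sub_self, Nat.succ_ne_zero, Ne,
      not_false_iff, Nat.add_eq_zero] at key
    have e1 : ∀ x : ℝ, -((b+1 : ℝ) * (1 - x) ^ b) * (x ^ (a+1) / (a+1))
        = (-((b+1 : ℝ)/(a+1))) * (x ^ (a+1) * (1 - x) ^ b) := by intro x; ring
    simp only [e1, intervalIntegral.integral_const_mul, ih (a+1)] at key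
    have e2 : ∀ x : ℝ, (1 - x) ^ (b+1) * x ^ a = x ^ a * (1 - x) ^ (b+1) := fun x => by ring
    simp only [e2] at key
    rw [key]
    have h1 : ((a+1) + b + 1) = (a + (b+1) + 1) := by ring
    rw [h1]
    have h2 : ((a + (b+1) + 1).factorial : ℝ) ≠ 0 := by positivity
    field_simp
    push_cast [Nat.factorial_succ]
    ring


/-- The open simplex in dimension `k` (with sum bound `c`). -/
def sSet' (k : ℕ) (c : ℝ) : Set (Fin k → ℝ) := {y | (∀ i, 0 < y i) ∧ ∑ i, y i < c}

noncomputable def extMap (k : ℕ) (y : Fin k → ℝ) : Fin (k+1) → ℝ :=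
  fun i => if h : (i : ℕ) < k then y ⟨(i : ℕ), h⟩ else 1 - ∑ j, y j

lemma isOpen_sSet' (k : ℕ) (c : ℝ) : IsOpen (sSet' k c) := by
  have h1 : IsOpen {y : Fin k → ℝ | ∀ i, 0 < y i} := by
    have : {y : Fin k → ℝ | ∀ i, 0 < y i} = ⋂ i, {y | 0 < y i} := by ext; simp
    rw [this]
    exact isOpen_iInter_of_finite fun i => isOpen_lt continuous_const (continuous_apply i)
  exact h1.inter (isOpen_lt (g := fun _ => c) (by continuity) continuous_const)

lemma sSet'_subset_box (k : ℕ) : sSet' k 1 ⊆ Set.pi univ (fun _ : Fin k => Icc (0:ℝ) 1) := by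
  rintro y ⟨h1, h2⟩ i -
  refine ⟨(h1 i).le, ?_⟩
  calc y i ≤ ∑ j, y j := Finset.single_le_sum (fun j _ => (h1 j).le) (Finset.mem_univ i)
  _ ≤ 1 := h2.le

lemma integrableOn_sSet' {k : ℕ} {f : (Fin k → ℝ) → ℝ} (hf : Continuous f) :
    IntegrableOn f (sSet' k 1) :=
  (hf.continuousOn.integrableOn_compact (isCompact_univ_pi fun _ => isCompact_Icc)).mono_set
    (sSet'_subset_box k)

lemma sSet'_eq_smul {k : ℕ} {c : ℝ} (hc : 0 < c) : sSet' k c = c • sSet' k 1 := by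
  ext z
  rw [mem_smul_set_iff_inv_smul_mem₀ hc.ne']
  simp only [sSet', mem_setOf_eq, Pi.smul_apply, smul_eq_mul, ← Finset.mul_sum]
  constructor
  · rintro ⟨h1, h2⟩
    refine ⟨fun i => mul_pos (inv_pos.2 hc) (h1 i), ?_⟩
    rw [inv_mul_lt_iff₀ hc, mul_one]; exact h2
  · rintro ⟨h1, h2⟩
    rw [inv_mul_lt_iff₀ hc, mul_one] at h2
    refine ⟨fun i => ?_, h2⟩
    have := h1 i
    nlinarith [h1 i, inv_pos.2 hc]

lemma sSet'_empty {k : ℕ} {c : ℝ} (hc : c ≤ 0) : sSet' k c = ∅ := by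
  ext z
  simp only [sSet', mem_setOf_eq, mem_empty_iff_false, iff_false, not_and]
  intro h1
  have : (0:ℝ) ≤ ∑ i, z i := Finset.sum_nonneg fun i _ => (h1 i).le
  intro h2; linarith


lemma continuous_extMap (k : ℕ) (i : Fin (k+1)) : Continuous fun y => extMap k y i := by
  unfold extMap
  rcases Nat.lt_or_ge (i : ℕ) k with h | h
  · simp only [dif_pos h]; exact continuous_apply _
  · simp only [dif_neg (Nat.not_lt.2 h)]
    exact continuous_const.sub (by continuity)

lemma continuous_prod_extMap (k : ℕ) (v : Fin (k+1) → ℕ) :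
    Continuous fun y => ∏ i, extMap k y i ^ v i :=
  continuous_finset_prod _ fun i _ => (continuous_extMap k i).pow _

lemma extMap_cons_zero (k : ℕ) (t : ℝ) (z : Fin k → ℝ) :
    extMap (k+1) (Fin.cons t z) 0 = t := by
  simp [extMap]

lemma extMap_cons_succ (k : ℕ) (t : ℝ) (w : Fin k → ℝ) (j : Fin (k+1)) :
    extMap (k+1) (Fin.cons t ((1-t) • w)) j.succ = (1-t) * extMap k w j := by
  unfold extMap
  rcases Nat.lt_or_ge (j : ℕ) k with h | h
  · have h' : ((j.succ : Fin (k+2)) : ℕ) < k + 1 := by simp [Fin.val_succ]; omega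
    rw [dif_pos h', dif_pos h]
    have : (⟨((j.succ : Fin (k+2)) : ℕ), h'⟩ : Fin (k+1)) = Fin.succ ⟨(j:ℕ), h⟩ := by
      ext; simp [Fin.val_succ]
    rw [this, Fin.cons_succ]
    simp
  · have h' : ¬ ((j.succ : Fin (k+2)) : ℕ) < k + 1 := by simp [Fin.val_succ]; omega
    rw [dif_neg h', dif_neg (Nat.not_lt.2 h)]
    rw [Fin.sum_cons]
    simp only [Pi.smul_apply, smul_eq_mul, ← Finset.mul_sum]
    ring

lemma dirichlet : ∀ (k : ℕ) (v : Fin (k+1) → ℕ),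
    ∫ y in sSet' k 1, ∏ i, (extMap k y i) ^ (v i)
      = (∏ i, ((v i).factorial : ℝ)) / (((∑ i, v i) + k).factorial) := by
  intro k
  induction k with
  | zero =>
    intro v
    have hS : sSet' 0 1 = univ := by
      ext y; simp [sSet']
    have hval : ∀ y : Fin 0 → ℝ, ∏ i, extMap 0 y i ^ v i = 1 := by
      intro y
      rw [Fin.prod_univ_one]
      simp [extMap]
    rw [hS, Measure.restrict_univ]
    simp only [hval, integral_const, smul_eq_mul]
    rw [Fin.prod_univ_one, Fin.sum_univ_one]
    rw [Nat.add_zero, div_self (by positivity)]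
    simp [volume_pi, Measure.pi_univ, measureReal_def]
  | succ k ih =>
    intro v
    classical
    set F : (Fin (k+1) → ℝ) → ℝ := fun y => ∏ i, extMap (k+1) y i ^ v i with hF
    have hFc : Continuous F := continuous_prod_extMap (k+1) v
    have hS : MeasurableSet (sSet' (k+1) 1) := (isOpen_sSet' _ _).measurableSet
    have hInt : IntegrableOn F (sSet' (k+1) 1) := integrableOn_sSet' hFc
    set G : (Fin (k+1) → ℝ) → ℝ := (sSet' (k+1) 1).indicator F with hG
    have hGint : Integrable G := (integrable_indicator_iff hS).2 hInt
    set e := MeasurableEquiv.piFinSuccAbove (fun _ : Fin (k+1) => ℝ) 0 with he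
    have hmp := volume_preserving_piFinSuccAbove (fun _ : Fin (k+1) => ℝ) 0
    have hes : ∀ (t : ℝ) (z : Fin k → ℝ), e.symm (t, z) = Fin.cons t z := by
      intro t z
      show (Fin.insertNthEquiv (fun _ : Fin (k+1) => ℝ) 0) (t, z) = Fin.cons t z
      simp [Fin.insertNthEquiv, Fin.insertNth_zero']
    set m : ℕ := ∑ j : Fin (k+1), v j.succ with hm
    set D : ℝ := ∫ w in sSet' k 1, ∏ j, extMap k w j ^ v j.succ with hD
    have hcons : ∀ (t : ℝ) (z : Fin k → ℝ),
        (Fin.cons t z ∈ sSet' (k+1) 1) ↔ (0 < t ∧ z ∈ sSet' k (1 - t)) := by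
      intro t z
      simp only [sSet', mem_setOf_eq, Fin.sum_cons, Fin.forall_fin_succ, Fin.cons_zero,
        Fin.cons_succ]
      constructor
      · rintro ⟨⟨h0, h1⟩, h2⟩; exact ⟨h0, h1, by linarith⟩
      · rintro ⟨h0, h1, h2⟩; exact ⟨⟨h0, h1⟩, by linarith⟩
    -- value of F on cons t ((1-t) • w)
    have hFval : ∀ (t : ℝ) (w : Fin k → ℝ),
        F (Fin.cons t ((1-t) • w)) = t ^ v 0 * ((1-t) ^ m * ∏ j, extMap k w j ^ v j.succ) := by
      intro t w
      have hsucc : ∀ j : Fin (k+1), extMap (k+1) (Fin.cons t ((1-t) • w)) j.succ ^ v j.succ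
          = (1-t) ^ v j.succ * extMap k w j ^ v j.succ := by
        intro j; rw [extMap_cons_succ, mul_pow]
      calc F (Fin.cons t ((1-t) • w))
          = extMap (k+1) (Fin.cons t ((1-t) • w)) 0 ^ v 0
            * ∏ j : Fin (k+1), extMap (k+1) (Fin.cons t ((1-t) • w)) j.succ ^ v j.succ :=
            Fin.prod_univ_succ _
        _ = t ^ v 0 * ∏ j : Fin (k+1), ((1-t) ^ v j.succ * extMap k w j ^ v j.succ) := by
            rw [extMap_cons_zero, Finset.prod_congr rfl fun j _ => hsucc j]
        _ = t ^ v 0 * ((1-t) ^ m * ∏ j, extMap k w j ^ v j.succ) := by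
            rw [Finset.prod_mul_distrib, Finset.prod_pow_eq_pow_sum]
    -- inner integral identity
    have hGin : ∀ t : ℝ, (∫ z : Fin k → ℝ, G (Fin.cons t z))
        = (Ioi (0:ℝ)).indicator (fun t => ∫ z in sSet' k (1-t), F (Fin.cons t z)) t := by
      intro t
      by_cases ht : 0 < t
      · rw [indicator_of_mem (mem_Ioi.mpr ht)]
        have hz : ∀ z, G (Fin.cons t z)
            = (sSet' k (1-t)).indicator (fun z => F (Fin.cons t z)) z := by
          intro z
          rw [hG, indicator_apply, indicator_apply]
          by_cases hzz : z ∈ sSet' k (1-t)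
          · rw [if_pos hzz, if_pos ((hcons t z).2 ⟨ht, hzz⟩)]
          · rw [if_neg hzz, if_neg (fun hc => hzz ((hcons t z).1 hc).2)]
        simp_rw [hz]
        exact integral_indicator (isOpen_sSet' _ _).measurableSet
      · rw [indicator_of_notMem (by simpa using ht)]
        have hz : ∀ z, G (Fin.cons t z) = 0 := by
          intro z
          apply indicator_of_notMem
          rw [hcons]
          tauto
        simp [hz]
    -- the inner set integral for 0 < t
    have hinner : ∀ t ∈ Ioi (0:ℝ),
        (∫ z in sSet' k (1-t), F (Fin.cons t z))
          = (Ioo (0:ℝ) 1).indicator (fun t => t ^ v 0 * (1-t) ^ (m + k) * D) t := by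
      intro t ht
      by_cases ht1 : t < 1
      · have hc : (0:ℝ) < 1 - t := by linarith
        rw [indicator_of_mem (mem_Ioo.mpr ⟨mem_Ioi.mp ht, ht1⟩)]
        rw [sSet'_eq_smul hc]
        have := Measure.setIntegral_comp_smul_of_pos volume
          (fun z => F (Fin.cons t z)) (sSet' k 1) hc
        rw [Module.finrank_fintype_fun_eq_card, Fintype.card_fin] at this
        have h2 : ∫ z in (1-t) • sSet' k 1, F (Fin.cons t z)
            = ((1-t) ^ k) • ∫ w in sSet' k 1, F (Fin.cons t ((1-t) • w)) := by
          rw [this, smul_smul]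
          rw [mul_inv_cancel₀ (by positivity), one_smul]
        rw [h2]
        simp_rw [hFval]
        rw [integral_const_mul, integral_const_mul, ← hD]
        simp only [smul_eq_mul]
        rw [pow_add]
        ring
      · rw [indicator_of_notMem (by simp [mem_Ioo]; intro; linarith)]
        rw [sSet'_empty (by linarith)]
        simp
    -- Now assemble
    calc
      ∫ y in sSet' (k+1) 1, F y = ∫ y, G y := (integral_indicator hS).symm
      _ = ∫ p : ℝ × (Fin k → ℝ), G (e.symm p) := by
          rw [← hmp.integral_comp e.measurableEmbedding (fun p => G (e.symm p))]
          congr 1; funext y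
          exact congrArg G ((e.symm_apply_apply y).symm)
      _ = ∫ t : ℝ, ∫ z : Fin k → ℝ, G (e.symm (t, z)) := by
          rw [Measure.volume_eq_prod]
          apply integral_prod
          rw [← Measure.volume_eq_prod]
          exact ((hmp.symm e).integrable_comp_emb e.symm.measurableEmbedding).2 hGint
      _ = ∫ t : ℝ, (Ioi (0:ℝ)).indicator
            (fun t => ∫ z in sSet' k (1-t), F (Fin.cons t z)) t := by
          congr 1; funext t
          simp_rw [hes]
          exact hGin t
      _ = ∫ t in Ioi (0:ℝ), ∫ z in sSet' k (1-t), F (Fin.cons t z) :=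
          integral_indicator measurableSet_Ioi
      _ = ∫ t in Ioi (0:ℝ), (Ioo (0:ℝ) 1).indicator
            (fun t => t ^ v 0 * (1-t) ^ (m + k) * D) t :=
          setIntegral_congr_fun measurableSet_Ioi hinner
      _ = ∫ t in Ioi (0:ℝ) ∩ Ioo (0:ℝ) 1, t ^ v 0 * (1-t) ^ (m + k) * D := by
          rw [setIntegral_indicator measurableSet_Ioo]
      _ = ∫ t in Ioo (0:ℝ) 1, t ^ v 0 * (1-t) ^ (m + k) * D := by
          rw [inter_eq_self_of_subset_right Ioo_subset_Ioi_self]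
      _ = (∫ t in Ioo (0:ℝ) 1, t ^ v 0 * (1-t) ^ (m + k)) * D := by
          rw [← integral_mul_const]
      _ = ((v 0).factorial * (m + k).factorial : ℝ) / ((v 0 + (m + k) + 1).factorial) * D := by
          rw [← integral_Ioc_eq_integral_Ioo, ← intervalIntegral.integral_of_le zero_le_one,
            beta_nat]
      _ = (∏ i, ((v i).factorial : ℝ)) / (((∑ i, v i) + (k+1)).factorial) := by
          have ihs := ih (fun j => v j.succ)
          rw [hD, ihs, ← hm]
          have hprod : (∏ i : Fin (k+1+1), ((v i).factorial : ℝ))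
              = ((v 0).factorial : ℝ) * ∏ j : Fin (k+1), ((v j.succ).factorial : ℝ) :=
            Fin.prod_univ_succ _
          have hsum : (∑ i : Fin (k+1+1), v i) = v 0 + m := by rw [Fin.sum_univ_succ, ← hm]
          rw [hprod, hsum]
          have hidx : (v 0 + m) + (k+1) = v 0 + (m + k) + 1 := by ring
          rw [hidx]
          have h1 : (((m + k).factorial : ℝ)) ≠ 0 := by positivity
          have h2 : ((v 0 + (m + k) + 1).factorial : ℝ) ≠ 0 := by positivity
          field_simp

end Aux
open Set Pointwise in
/-- Simplex integral representation of complete homogeneous symmetric polynomials. -/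
theorem simplex_integral_complete_homogeneous (K : ℕ) (hK : 2 ≤ K) (γ : Fin K → ℝ)
    (n : ℕ) :
    simplexIntegral K (fun y => (∑ j, γ j * y j) ^ n) =
      ((n.factorial : ℝ) / ((n + K - 1).factorial : ℝ)) *
        ∑ v ∈ Finset.Nat.antidiagonalTuple K n, ∏ i, γ i ^ v i := by
  classical
  obtain ⟨k, rfl⟩ : ∃ k, K = k + 1 := ⟨K - 1, by omega⟩
  have hidx : n + (k + 1) - 1 = n + k := by omega
  rw [hidx]
  rw [← Finset.piAntidiag_univ_fin_eq_antidiagonalTuple]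
  show (∫ y in sSet' k 1, (∑ j, γ j * extMap k y j) ^ n) = _
  calc (∫ y in sSet' k 1, (∑ j, γ j * extMap k y j) ^ n)
      = ∫ y in sSet' k 1, ∑ v ∈ Finset.piAntidiag Finset.univ n,
          (Nat.multinomial Finset.univ v : ℝ) * ∏ i, (γ i * extMap k y i) ^ v i := by
        congr 1; funext y
        exact Finset.sum_pow_eq_sum_piAntidiag Finset.univ (fun i => γ i * extMap k y i) n
    _ = ∑ v ∈ Finset.piAntidiag Finset.univ n,
          ∫ y in sSet' k 1,
            (Nat.multinomial Finset.univ v : ℝ) * ∏ i, (γ i * extMap k y i) ^ v i := by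
        apply integral_finset_sum
        intro v _
        apply Integrable.const_mul
        apply integrableOn_sSet'
        exact continuous_finset_prod _ fun i _ =>
          ((continuous_const.mul (continuous_extMap k i)).pow _)
    _ = ∑ v ∈ Finset.piAntidiag Finset.univ n,
          ((n.factorial : ℝ) / ((n + k).factorial : ℝ)) * ∏ i, γ i ^ v i := by
        apply Finset.sum_congr rfl
        intro v hv
        obtain ⟨hsum, -⟩ := Finset.mem_piAntidiag.1 hv
        have hsplit : ∀ y : Fin k → ℝ, ∏ i, (γ i * extMap k y i) ^ v i
            = (∏ i, γ i ^ v i) * ∏ i, extMap k y i ^ v i := by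
          intro y
          rw [← Finset.prod_mul_distrib]
          exact Finset.prod_congr rfl fun i _ => mul_pow _ _ _
        simp_rw [hsplit]
        rw [integral_const_mul, integral_const_mul, dirichlet k v, hsum]
        have hcast : (∏ i, ((v i).factorial : ℝ)) * (Nat.multinomial Finset.univ v : ℝ)
            = (n.factorial : ℝ) := by
          rw [← hsum]
          exact_mod_cast congrArg (Nat.cast (R := ℝ))
            (Nat.multinomial_spec Finset.univ v)
        have h2 : ((n + k).factorial : ℝ) ≠ 0 := by positivity
        field_simp
        linear_combination (∏ i, γ i ^ v i) * hcast
    _ = ((n.factorial : ℝ) / ((n + k).factorial : ℝ))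
          * ∑ v ∈ Finset.piAntidiag Finset.univ n, ∏ i, γ i ^ v i := by
        rw [Finset.mul_sum]
end

section
/- Normalization of the inverse Schlömilch distribution: Let K ≥ 2 be an integer, α, β ∈ ℝ^K with α_i > 0 and β_i > 0, and τ > 0. Then ∫_{S_K} (∏_{i=1}^K x_i^{−τ α_i − 1}) · (∑_{j=1}^K β_j x_j^{−τ})^{−α_+} d^{K−1}x = (∏_{i=1}^K Γ(α_i)) / (τ^{K−1} · Γ(α_+) · ∏_{i=1}^K β_i^{α_i}). -/
open MeasureTheory Real Set

namespace InvSchlomilchAux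

set_option linter.unusedVariables false

lemma measurable_rpow_const (c : ℝ) : Measurable fun x : ℝ => x ^ c := by
  have h : (fun x : ℝ => x ^ c) = fun x =>
      if x = 0 then (0:ℝ) ^ c
      else Real.exp (Real.log x * c) * if 0 ≤ x then 1 else Real.cos (c * π) := by
    funext x
    rcases lt_trichotomy x 0 with h | h | h
    · rw [if_neg h.ne, if_neg (not_le.2 h), Real.rpow_def_of_neg h, mul_comm c π]
    · simp [h]
    · rw [if_neg h.ne', if_pos h.le, mul_one, Real.rpow_def_of_pos h]
  rw [h]
  exact Measurable.ite (measurableSet_singleton 0) measurable_const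
    (((Real.measurable_log.mul measurable_const).exp).mul
      (Measurable.ite measurableSet_Ici measurable_const measurable_const))


section oneDim

variable {a b τ : ℝ}

noncomputable def gAux (a b τ : ℝ) : ℝ → ℝ := fun y => τ⁻¹ * (y ^ (a - 1) * Real.exp (-(b * y)))

lemma gAux_key (hτ : 0 < τ) : ∀ x ∈ Ioi (0:ℝ),
    (|(-τ)| * x ^ ((-τ) - 1)) • gAux a b τ (x ^ (-τ)) =
      x ^ (-(τ * a) - 1) * Real.exp (-(b * x ^ (-τ))) := by
  intro x hx
  have hx' : (0:ℝ) < x := hx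
  have habs : |(-τ)| = τ := by rw [abs_neg, abs_of_pos hτ]
  have h1 : (x ^ (-τ)) ^ (a - 1) = x ^ ((-τ) * (a - 1)) := (Real.rpow_mul hx'.le _ _).symm
  have h2 : x ^ ((-τ) - 1) * x ^ ((-τ) * (a - 1)) = x ^ (-(τ * a) - 1) := by
    rw [← Real.rpow_add hx']; ring_nf
  rw [gAux, smul_eq_mul, habs, h1, ← h2]
  field_simp

lemma gAux_integrableOn (ha : 0 < a) (hb : 0 < b) (hτ : 0 < τ) :
    IntegrableOn (gAux a b τ) (Ioi (0:ℝ)) := by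
  have h := integrableOn_rpow_mul_exp_neg_mul_rpow
    (show (-1:ℝ) < a - 1 by linarith) (show (0:ℝ) < 1 by norm_num) hb
  simp_rw [Real.rpow_one, neg_mul] at h
  exact h.const_mul τ⁻¹

lemma gAux_integral (ha : 0 < a) (hb : 0 < b) (hτ : 0 < τ) :
    ∫ y in Ioi (0:ℝ), gAux a b τ y = Real.Gamma a / (τ * b ^ a) := by
  have h := integral_rpow_mul_exp_neg_mul_rpow
    (show (0:ℝ) < 1 by norm_num) (show (-1:ℝ) < a - 1 by linarith) hb
  simp_rw [Real.rpow_one, neg_mul] at h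
  simp only [gAux]
  rw [integral_const_mul, h]
  have h1 : (a - 1 + 1) / 1 = a := by ring
  have h2 : -(a - 1 + 1) / 1 = -a := by ring
  rw [h1, h2, Real.rpow_neg hb.le]
  field_simp

lemma oneDim_integrableOn (ha : 0 < a) (hb : 0 < b) (hτ : 0 < τ) :
    IntegrableOn (fun x : ℝ => x ^ (-(τ * a) - 1) * Real.exp (-(b * x ^ (-τ)))) (Ioi 0) := by
  have h := (integrableOn_Ioi_comp_rpow_iff (gAux a b τ) (show (-τ) ≠ 0 by linarith)).2
    (gAux_integrableOn ha hb hτ)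
  exact h.congr_fun (gAux_key hτ) measurableSet_Ioi

lemma oneDim_integral (ha : 0 < a) (hb : 0 < b) (hτ : 0 < τ) :
    ∫ x in Ioi (0:ℝ), x ^ (-(τ * a) - 1) * Real.exp (-(b * x ^ (-τ)))
      = Real.Gamma a / (τ * b ^ a) := by
  rw [← setIntegral_congr_fun measurableSet_Ioi (gAux_key hτ),
    integral_comp_rpow_Ioi (gAux a b τ) (show (-τ) ≠ 0 by linarith), gAux_integral ha hb hτ]

lemma oneDim_lintegral (ha : 0 < a) (hb : 0 < b) (hτ : 0 < τ) :
    ∫⁻ x in Ioi (0:ℝ), ENNReal.ofReal (x ^ (-(τ * a) - 1) * Real.exp (-(b * x ^ (-τ))))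
      = ENNReal.ofReal (Real.Gamma a / (τ * b ^ a)) := by
  rw [← ofReal_integral_eq_lintegral_ofReal (oneDim_integrableOn ha hb hτ)
    ((ae_restrict_mem measurableSet_Ioi).mono fun x hx =>
      mul_nonneg (Real.rpow_nonneg (le_of_lt hx) _) (Real.exp_nonneg _)),
    oneDim_integral ha hb hτ]



end oneDim

section geom
variable {n : ℕ}

def simplexSet (n : ℕ) : Set (Fin n → ℝ) := {y | (∀ i, 0 < y i) ∧ ∑ i, y i < 1}

noncomputable def uMap (n : ℕ) (y : Fin n → ℝ) : Fin (n+1) → ℝ :=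
  fun i => if h : (i : ℕ) < n then y ⟨(i : ℕ), h⟩ else 1 - ∑ j, y j

lemma uMap_castSucc (y : Fin n → ℝ) (j : Fin n) : uMap n y (Fin.castSucc j) = y j := by
  simp [uMap, j.isLt]

lemma uMap_last (y : Fin n → ℝ) : uMap n y (Fin.last n) = 1 - ∑ j, y j := by
  simp [uMap]

lemma uMap_pos {y : Fin n → ℝ} (hy : y ∈ simplexSet n) : ∀ i, 0 < uMap n y i := by
  intro i
  refine Fin.lastCases ?_ (fun j => ?_) i
  · rw [uMap_last]; linarith [hy.2]
  · rw [uMap_castSucc]; exact hy.1 j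

noncomputable def coneMap (n : ℕ) (z : Fin (n+1) → ℝ) : Fin (n+1) → ℝ :=
  fun i => z (Fin.last n) * uMap n (fun j => z (Fin.castSucc j)) i

def M1 (z : Fin (n+1) → ℝ) : Matrix (Fin (n+1)) (Fin (n+1)) ℝ := fun i j =>
  if i = Fin.last n then (if j = Fin.last n then 1 else 0)
  else if j = i then z (Fin.last n) else if j = Fin.last n then z i else 0

def M2 (n : ℕ) : Matrix (Fin (n+1)) (Fin (n+1)) ℝ := fun i j =>
  if i = Fin.last n then (if j = Fin.last n then 1 else -1)
  else if j = i then 1 else 0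

lemma M1_det (z : Fin (n+1) → ℝ) : (M1 z).det = z (Fin.last n) ^ n := by
  rw [Matrix.det_of_upperTriangular (M := M1 z) ?ht]
  case ht =>
    intro i j hij
    simp only [id] at hij
    by_cases hi : i = Fin.last n
    · subst hi
      rw [M1, if_pos rfl, if_neg (hij.ne : j ≠ Fin.last n)]
    · rw [M1, if_neg hi, if_neg (hij.ne : j ≠ i), if_neg]
      intro hj; subst hj
      exact absurd (lt_of_lt_of_le hij (Fin.le_last i)) (lt_irrefl _)
  · rw [Fin.prod_univ_castSucc]
    simp [M1, (Fin.castSucc_lt_last _).ne, Finset.prod_const]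

lemma M2_det : (M2 n).det = 1 := by
  rw [Matrix.det_of_lowerTriangular (M2 n) ?ht]
  case ht =>
    intro i j hij
    simp only [OrderDual.toDual_lt_toDual] at hij
    have hi : i ≠ Fin.last n := by
      intro h; subst h
      exact absurd (lt_of_lt_of_le hij (Fin.le_last j)) (lt_irrefl _)
    rw [M2, if_neg hi, if_neg hij.ne']
  · simp [M2]

lemma M1_mulVec (z v : Fin (n+1) → ℝ) : (M1 z).mulVec v =
    fun i => if i = Fin.last n then v (Fin.last n)
      else z (Fin.last n) * v i + z i * v (Fin.last n) := by
  funext i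
  by_cases hi : i = Fin.last n
  · subst hi
    simp [Matrix.mulVec, dotProduct, M1, ite_mul, Finset.sum_ite_eq']
  · rw [if_neg hi, Matrix.mulVec, dotProduct]
    have key : ∀ j, M1 z i j * v j =
        (if j = i then z (Fin.last n) * v j else 0) + (if j = Fin.last n then z i * v j else 0) := by
      intro j
      rcases eq_or_ne j i with rfl | hji
      · rw [M1, if_neg hi, if_pos rfl, if_pos rfl, if_neg hi, add_zero]
      · rcases eq_or_ne j (Fin.last n) with rfl | hjl
        · rw [M1, if_neg hi, if_neg hji, if_pos rfl, if_neg hji, if_pos rfl, zero_add]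
        · rw [M1, if_neg hi, if_neg hji, if_neg hjl, if_neg hji, if_neg hjl, zero_mul, add_zero]
    simp_rw [key, Finset.sum_add_distrib, Finset.sum_ite_eq' Finset.univ,
      Finset.mem_univ, if_pos]

lemma M2_mulVec (w : Fin (n+1) → ℝ) : (M2 n).mulVec w =
    fun i => if i = Fin.last n then w (Fin.last n) - ∑ j : Fin n, w (Fin.castSucc j)
      else w i := by
  funext i
  by_cases hi : i = Fin.last n
  · subst hi
    rw [if_pos rfl, Matrix.mulVec, dotProduct, Fin.sum_univ_castSucc]
    have h1 : ∀ k : Fin n, M2 n (Fin.last n) (Fin.castSucc k) * w (Fin.castSucc k)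
        = -(w (Fin.castSucc k)) := fun k => by
      rw [M2, if_pos rfl, if_neg (Fin.castSucc_lt_last k).ne, neg_one_mul]
    have h2 : M2 n (Fin.last n) (Fin.last n) * w (Fin.last n) = w (Fin.last n) := by
      rw [M2, if_pos rfl, if_pos rfl, one_mul]
    rw [Finset.sum_congr rfl (fun k _ => h1 k), h2, Finset.sum_neg_distrib]
    ring
  · rw [if_neg hi]
    simp [Matrix.mulVec, dotProduct, M2, hi, ite_mul, Finset.sum_ite_eq']

noncomputable def Dcone (z : Fin (n+1) → ℝ) : (Fin (n+1) → ℝ) →L[ℝ] (Fin (n+1) → ℝ) :=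
  LinearMap.toContinuousLinearMap (Matrix.toLin' (M2 n * M1 z))

lemma Dcone_apply (z v : Fin (n+1) → ℝ) :
    Dcone z v = (M2 n).mulVec ((M1 z).mulVec v) := by
  rw [Dcone, LinearMap.coe_toContinuousLinearMap', Matrix.toLin'_apply, ← Matrix.mulVec_mulVec]

lemma Dcone_det (z : Fin (n+1) → ℝ) : (Dcone z).det = z (Fin.last n) ^ n := by
  rw [ContinuousLinearMap.det, Dcone, LinearMap.coe_toContinuousLinearMap,
    LinearMap.det_toLin', Matrix.det_mul, M1_det, M2_det, one_mul]


lemma hasFDerivAt_coneMap (z : Fin (n+1) → ℝ) :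
    HasFDerivAt (coneMap n) (Dcone z) z := by
  have hproj : ∀ i : Fin (n+1), HasFDerivAt (fun x : Fin (n+1) → ℝ => x i)
      ((ContinuousLinearMap.proj i).comp (ContinuousLinearMap.id ℝ (Fin (n+1) → ℝ))) z :=
    fun i => hasFDerivAt_pi'.1 (hasFDerivAt_id z) i
  apply hasFDerivAt_pi''
  intro i
  refine Fin.lastCases ?_ (fun j => ?_) i
  · have heq : (fun x : Fin (n+1) → ℝ => coneMap n x (Fin.last n))
        = fun x => x (Fin.last n) * (1 - ∑ j : Fin n, x (Fin.castSucc j)) := by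
      funext x; simp only [coneMap, uMap_last]
    have h2 : HasFDerivAt (fun x : Fin (n+1) → ℝ => 1 - ∑ j : Fin n, x (Fin.castSucc j))
        (-(∑ j : Fin n, (ContinuousLinearMap.proj (Fin.castSucc j)).comp
            (ContinuousLinearMap.id ℝ (Fin (n+1) → ℝ)))) z :=
      HasFDerivAt.const_sub (HasFDerivAt.fun_sum fun j _ => hproj (Fin.castSucc j)) 1
    have h3 := (hproj (Fin.last n)).mul h2
    have hclm : (ContinuousLinearMap.proj (Fin.last n)).comp (Dcone z)
        = z (Fin.last n) • (-(∑ j : Fin n, (ContinuousLinearMap.proj (Fin.castSucc j)).comp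
            (ContinuousLinearMap.id ℝ (Fin (n+1) → ℝ))))
          + (1 - ∑ j : Fin n, z (Fin.castSucc j)) • ((ContinuousLinearMap.proj (Fin.last n)).comp
            (ContinuousLinearMap.id ℝ (Fin (n+1) → ℝ))) := by
      ext v
      simp only [ContinuousLinearMap.comp_apply, ContinuousLinearMap.proj_apply,
        ContinuousLinearMap.add_apply, ContinuousLinearMap.smul_apply,
        ContinuousLinearMap.neg_apply, ContinuousLinearMap.coe_sum', Finset.sum_apply,
        ContinuousLinearMap.id_apply, smul_eq_mul]
      rw [Dcone_apply, M2_mulVec, M1_mulVec]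
      simp only [eq_self_iff_true, if_true]
      have hsum : ∀ j : Fin n,
          (if Fin.castSucc j = Fin.last n then v (Fin.last n)
            else z (Fin.last n) * v (Fin.castSucc j) + z (Fin.castSucc j) * v (Fin.last n))
          = z (Fin.last n) * v (Fin.castSucc j) + z (Fin.castSucc j) * v (Fin.last n) :=
        fun j => if_neg (Fin.castSucc_lt_last j).ne
      rw [Finset.sum_congr rfl fun j _ => hsum j, Finset.sum_add_distrib,
        ← Finset.mul_sum, ← Finset.sum_mul]
      ring
    rw [heq, hclm]
    exact h3
  · have heq : (fun x : Fin (n+1) → ℝ => coneMap n x (Fin.castSucc j))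
        = fun x => x (Fin.last n) * x (Fin.castSucc j) := by
      funext x; simp only [coneMap, uMap_castSucc]
    have h3 := (hproj (Fin.last n)).mul (hproj (Fin.castSucc j))
    have hclm : (ContinuousLinearMap.proj (Fin.castSucc j)).comp (Dcone z)
        = z (Fin.last n) • ((ContinuousLinearMap.proj (Fin.castSucc j)).comp
            (ContinuousLinearMap.id ℝ (Fin (n+1) → ℝ)))
          + z (Fin.castSucc j) • ((ContinuousLinearMap.proj (Fin.last n)).comp
            (ContinuousLinearMap.id ℝ (Fin (n+1) → ℝ))) := by
      ext v
      simp only [ContinuousLinearMap.comp_apply, ContinuousLinearMap.proj_apply,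
        ContinuousLinearMap.add_apply, ContinuousLinearMap.smul_apply,
        ContinuousLinearMap.id_apply, smul_eq_mul]
      rw [Dcone_apply, M2_mulVec, M1_mulVec]
      simp only [if_neg (Fin.castSucc_lt_last j).ne]
    rw [heq, hclm]
    exact h3

lemma measurable_sum_coords : Measurable fun y : Fin n → ℝ => ∑ i, y i :=
  Finset.measurable_sum _ (fun i _ => measurable_pi_apply i)

lemma simplexSet_measurable : MeasurableSet (simplexSet n) := by
  have h1 : {y : Fin n → ℝ | ∀ i, 0 < y i} = Set.pi Set.univ (fun _ => Ioi (0:ℝ)) := by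
    ext y; simp [Set.mem_pi]
  have : simplexSet n = ({y : Fin n → ℝ | ∀ i, 0 < y i}
      ∩ (fun y : Fin n → ℝ => ∑ i, y i) ⁻¹' Iio 1) := by
    ext y; simp [simplexSet, and_comm]
  rw [this, h1]
  exact (MeasurableSet.univ_pi fun _ => measurableSet_Ioi).inter
    (measurable_sum_coords measurableSet_Iio)

noncomputable def eEquiv (n : ℕ) : (Fin (n+1) → ℝ) ≃ᵐ ℝ × (Fin n → ℝ) := by
  have h : ∀ j : Fin n, (fun _ : Fin (n+1) => ℝ) ((Fin.last n).succAbove j) = ℝ := fun _ => rfl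
  exact (MeasurableEquiv.piFinSuccAbove (fun _ : Fin (n+1) => ℝ) (Fin.last n))

lemma eEquiv_apply (z : Fin (n+1) → ℝ) :
    eEquiv n z = (z (Fin.last n), fun j => z (Fin.castSucc j)) := by
  rw [eEquiv]
  ext
  · rfl
  · simp [MeasurableEquiv.piFinSuccAbove_apply, Fin.succAbove_last, Fin.init]

def coneDom (n : ℕ) : Set (Fin (n+1) → ℝ) := eEquiv n ⁻¹' ((Ioi (0:ℝ)) ×ˢ simplexSet n)

lemma coneDom_measurable : MeasurableSet (coneDom n) :=
  (eEquiv n).measurable (measurableSet_Ioi.prod simplexSet_measurable)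

lemma mem_coneDom (z : Fin (n+1) → ℝ) : z ∈ coneDom n ↔
    0 < z (Fin.last n) ∧ (fun j => z (Fin.castSucc j)) ∈ simplexSet n := by
  rw [coneDom, Set.mem_preimage, eEquiv_apply]
  simp [Set.mem_prod]

lemma coneMap_image : coneMap n '' coneDom n = {t : Fin (n+1) → ℝ | ∀ i, 0 < t i} := by
  ext t
  constructor
  · rintro ⟨z, hz, rfl⟩
    rw [mem_coneDom] at hz
    intro i
    exact mul_pos hz.1 (uMap_pos hz.2 i)
  · intro ht
    set S := ∑ i, t i with hS_def
    have hS : 0 < S := Finset.sum_pos (fun i _ => ht i) Finset.univ_nonempty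
    have hsplit : ∑ j : Fin n, t (Fin.castSucc j) = S - t (Fin.last n) := by
      rw [hS_def, Fin.sum_univ_castSucc]; ring
    have hcs : ∀ j : Fin n, ((Fin.castSucc j : Fin (n+1)) : ℕ) < n := fun j => by
      simpa using j.isLt
    have hni : ¬((Fin.last n : Fin (n+1)) : ℕ) < n := by simp
    refine ⟨fun i => if (i : ℕ) < n then t i / S else S, ?_, ?_⟩
    · rw [mem_coneDom]
      refine ⟨by simpa using hS, fun j => ?_, ?_⟩
      · simp only [hcs j, if_true]
        exact div_pos (ht _) hS
      · rw [Finset.sum_congr rfl fun j _ => if_pos (hcs j), ← Finset.sum_div, hsplit,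
          div_lt_one hS]
        linarith [ht (Fin.last n)]
    · funext i
      refine Fin.lastCases ?_ (fun j => ?_) i
      · rw [coneMap, uMap_last]
        rw [if_neg hni, Finset.sum_congr rfl fun j _ => if_pos (hcs j), ← Finset.sum_div, hsplit]
        field_simp
        ring
      · rw [coneMap, uMap_castSucc]
        rw [if_neg hni, if_pos (hcs j)]
        field_simp

lemma coneMap_injOn : Set.InjOn (coneMap n) (coneDom n) := by
  have hsum : ∀ w ∈ coneDom n, ∑ i, coneMap n w i = w (Fin.last n) := by
    intro w _
    rw [Fin.sum_univ_castSucc]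
    simp only [coneMap, uMap_castSucc, uMap_last]
    rw [← Finset.mul_sum]
    ring
  intro z hz z' hz' heq
  have hlast : z (Fin.last n) = z' (Fin.last n) := by
    rw [← hsum z hz, ← hsum z' hz', heq]
  have hzpos := ((mem_coneDom z).1 hz).1
  funext i
  refine Fin.lastCases hlast (fun j => ?_) i
  have h1 : coneMap n z (Fin.castSucc j) = coneMap n z' (Fin.castSucc j) := by rw [heq]
  rw [coneMap, coneMap, uMap_castSucc, uMap_castSucc, ← hlast] at h1
  exact mul_left_cancel₀ hzpos.ne' h1


lemma measurable_uMap {n : ℕ} (i : Fin (n+1)) : Measurable fun y : Fin n → ℝ => uMap n y i := by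
  by_cases h : (i : ℕ) < n
  · simp only [uMap, dif_pos h]
    exact measurable_pi_apply _
  · simp only [uMap, dif_neg h]
    exact measurable_const.sub measurable_sum_coords

def posOrthant (n : ℕ) : Set (Fin (n+1) → ℝ) := {t | ∀ i, 0 < t i}

lemma posOrthant_measurable {n : ℕ} : MeasurableSet (posOrthant n) := by
  have : posOrthant n = Set.pi Set.univ (fun _ : Fin (n+1) => Ioi (0:ℝ)) := by
    ext t; simp [posOrthant, Set.mem_pi]
  rw [this]
  exact MeasurableSet.univ_pi fun _ => measurableSet_Ioi

noncomputable def Gfun (n : ℕ) (α β : Fin (n+1) → ℝ) (τ : ℝ) : (Fin (n+1) → ℝ) → ℝ :=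
  fun t => ∏ i, (t i ^ (-(τ * α i) - 1) * Real.exp (-(β i * t i ^ (-τ))))

noncomputable def Ifun (n : ℕ) (α β : Fin (n+1) → ℝ) (τ : ℝ) : (Fin n → ℝ) → ℝ :=
  fun y => (∏ i, uMap n y i ^ (-(τ * α i) - 1))
    * (∑ j, β j * uMap n y j ^ (-τ)) ^ (-(∑ i, α i))

lemma prod_step {n : ℕ} {α β : Fin (n+1) → ℝ} {τ : ℝ}
    (hα : ∀ i, 0 < α i) (hβ : ∀ i, 0 < β i) (hτ : 0 < τ) :
    ∫⁻ t in posOrthant n, ENNReal.ofReal (Gfun n α β τ t)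
      = ENNReal.ofReal (∏ i, (Gamma (α i) / (τ * β i ^ (α i)))) := by
  set h' : Fin (n+1) → ℝ → ℝ := fun i x => x ^ (-(τ * α i) - 1) * Real.exp (-(β i * x ^ (-τ)))
    with hh_def
  have hint : ∀ i, Integrable ((Ioi (0:ℝ)).indicator (h' i)) :=
    fun i => (integrable_indicator_iff measurableSet_Ioi).2
      (oneDim_integrableOn (hα i) (hβ i) hτ)
  have hFint : Integrable (fun t : Fin (n+1) → ℝ => ∏ i, (Ioi (0:ℝ)).indicator (h' i) (t i)) :=
    Integrable.fintype_prod fun i => hint i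
  have hnn' : ∀ i, ∀ x : ℝ, 0 ≤ (Ioi (0:ℝ)).indicator (h' i) x := fun i x =>
    Set.indicator_nonneg (fun x hx =>
      mul_nonneg (Real.rpow_nonneg (le_of_lt hx) _) (Real.exp_nonneg _)) x
  have hFnn : 0 ≤ᵐ[volume] fun t : Fin (n+1) → ℝ => ∏ i, (Ioi (0:ℝ)).indicator (h' i) (t i) :=
    Filter.Eventually.of_forall fun t => Finset.prod_nonneg fun i _ => hnn' i (t i)
  have hind : ∀ t, (posOrthant n).indicator (fun t' => ENNReal.ofReal (Gfun n α β τ t')) t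
      = ENNReal.ofReal (∏ i, (Ioi (0:ℝ)).indicator (h' i) (t i)) := by
    intro t
    by_cases htP : t ∈ posOrthant n
    · rw [Set.indicator_of_mem htP]
      congr 1
      exact Finset.prod_congr rfl fun i _ =>
        (Set.indicator_of_mem (show t i ∈ Ioi (0:ℝ) from htP i) (h' i)).symm
    · rw [Set.indicator_of_notMem htP]
      have : ∃ i, ¬ (0 < t i) := by
        by_contra hcon
        push_neg at hcon
        exact htP fun i => hcon i
      obtain ⟨i, hi⟩ := this
      rw [Finset.prod_eq_zero (Finset.mem_univ i)
        (Set.indicator_of_notMem (fun h => hi h) (h' i)), ENNReal.ofReal_zero]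
  calc ∫⁻ t in posOrthant n, ENNReal.ofReal (Gfun n α β τ t)
      = ∫⁻ t, (posOrthant n).indicator (fun t' => ENNReal.ofReal (Gfun n α β τ t')) t := by
        rw [lintegral_indicator posOrthant_measurable]
    _ = ∫⁻ t, ENNReal.ofReal (∏ i, (Ioi (0:ℝ)).indicator (h' i) (t i)) :=
        lintegral_congr fun t => hind t
    _ = ENNReal.ofReal (∫ t : Fin (n+1) → ℝ, ∏ i, (Ioi (0:ℝ)).indicator (h' i) (t i)) :=
        (ofReal_integral_eq_lintegral_ofReal hFint hFnn).symm
    _ = ENNReal.ofReal (∏ i, ∫ x : ℝ, (Ioi (0:ℝ)).indicator (h' i) x) := by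
        exact congrArg ENNReal.ofReal (MeasureTheory.integral_fintype_prod_eq_prod
          (f := fun i (x : ℝ) => (Ioi (0:ℝ)).indicator (h' i) x))
    _ = ENNReal.ofReal (∏ i, (Gamma (α i) / (τ * β i ^ (α i)))) := by
        congr 1
        exact Finset.prod_congr rfl fun i _ => by
          rw [integral_indicator measurableSet_Ioi, hh_def]
          exact oneDim_integral (hα i) (hβ i) hτ

lemma hsum_exponents {n : ℕ} (α : Fin (n+1) → ℝ) (τ : ℝ) :
    ∑ i : Fin (n+1), (-(τ * α i) - 1) = -(τ * ∑ i, α i) - ((n:ℝ)+1) := by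
  rw [Finset.sum_sub_distrib, Finset.sum_neg_distrib, ← Finset.mul_sum, Finset.sum_const,
    Finset.card_univ, Fintype.card_fin, nsmul_eq_mul, mul_one]
  push_cast
  ring

lemma inner_step {n : ℕ} {α β : Fin (n+1) → ℝ} {τ : ℝ}
    (hα : ∀ i, 0 < α i) (hβ : ∀ i, 0 < β i) (hτ : 0 < τ) :
    ∀ y ∈ simplexSet n,
      (∫⁻ s in Ioi (0:ℝ), ENNReal.ofReal (s ^ n * Gfun n α β τ (fun i => s * uMap n y i)))
        = ENNReal.ofReal (Gamma (∑ i, α i) / τ) * ENNReal.ofReal (Ifun n α β τ y) := by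
  intro y hy
  have hupos := uMap_pos hy
  have hA : 0 < ∑ i, α i := Finset.sum_pos (fun i _ => hα i) Finset.univ_nonempty
  set A : ℝ := ∑ i, α i with hA_def
  set B : ℝ := ∑ j, β j * uMap n y j ^ (-τ) with hB_def
  set C : ℝ := ∏ i, uMap n y i ^ (-(τ * α i) - 1) with hC_def
  have hB : 0 < B :=
    Finset.sum_pos (fun j _ => mul_pos (hβ j) (Real.rpow_pos_of_pos (hupos j) _))
      Finset.univ_nonempty
  have hC : 0 ≤ C := Finset.prod_nonneg fun i _ => Real.rpow_nonneg (hupos i).le _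
  have hpt : ∀ s ∈ Ioi (0:ℝ), s ^ n * Gfun n α β τ (fun i => s * uMap n y i)
      = C * (s ^ (-(τ * A) - 1) * Real.exp (-(B * s ^ (-τ)))) := by
    intro s hs
    have hs' : (0:ℝ) < s := hs
    have hfac : ∀ i : Fin (n+1),
        (s * uMap n y i) ^ (-(τ * α i) - 1) * Real.exp (-(β i * (s * uMap n y i) ^ (-τ)))
        = (s ^ (-(τ * α i) - 1) * uMap n y i ^ (-(τ * α i) - 1))
          * Real.exp (-(β i * (s ^ (-τ) * uMap n y i ^ (-τ)))) := fun i => by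
      rw [Real.mul_rpow hs'.le (hupos i).le, Real.mul_rpow hs'.le (hupos i).le]
    have hexp : ∑ i : Fin (n+1), -(β i * (s ^ (-τ) * uMap n y i ^ (-τ))) = -(B * s ^ (-τ)) := by
      rw [Finset.sum_neg_distrib]
      congr 1
      rw [hB_def, Finset.sum_mul]
      exact Finset.sum_congr rfl fun i _ => by ring
    have hpow : (s:ℝ) ^ n * s ^ (-(τ * A) - ((n:ℝ)+1)) = s ^ (-(τ * A) - 1) := by
      rw [← Real.rpow_natCast s n, ← Real.rpow_add hs']
      congr 1
      ring
    rw [Gfun, Finset.prod_congr rfl fun i _ => hfac i, Finset.prod_mul_distrib,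
      Finset.prod_mul_distrib, ← Real.rpow_sum_of_pos hs', ← Real.exp_sum, hexp,
      hsum_exponents, ← hA_def, ← hC_def, ← hpow]
    ring
  calc (∫⁻ s in Ioi (0:ℝ), ENNReal.ofReal (s ^ n * Gfun n α β τ (fun i => s * uMap n y i)))
      = ∫⁻ s in Ioi (0:ℝ),
          ENNReal.ofReal C * ENNReal.ofReal (s ^ (-(τ * A) - 1) * Real.exp (-(B * s ^ (-τ)))) := by
        refine setLIntegral_congr_fun measurableSet_Ioi ?_
        intro s hs
        beta_reduce
        rw [hpt s hs, ENNReal.ofReal_mul hC]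
    _ = ENNReal.ofReal C * ENNReal.ofReal (Gamma A / (τ * B ^ A)) := by
        rw [lintegral_const_mul' _ _ ENNReal.ofReal_ne_top, oneDim_lintegral hA hB hτ]
    _ = ENNReal.ofReal (Gamma A / τ) * ENNReal.ofReal (Ifun n α β τ y) := by
        rw [← ENNReal.ofReal_mul hC,
          ← ENNReal.ofReal_mul (div_nonneg (Real.Gamma_pos_of_pos hA).le hτ.le)]
        congr 1
        rw [Ifun, ← hB_def, ← hC_def, ← hA_def, Real.rpow_neg hB.le]
        have hBA : (0:ℝ) < B ^ A := Real.rpow_pos_of_pos hB A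
        field_simp

lemma measurable_Gfun {n : ℕ} (α β : Fin (n+1) → ℝ) (τ : ℝ) : Measurable (Gfun n α β τ) :=
  Finset.measurable_prod _ fun i _ =>
    (((measurable_rpow_const _).comp (measurable_pi_apply i)).mul
      ((Real.measurable_exp).comp
        ((measurable_const.mul ((measurable_rpow_const _).comp (measurable_pi_apply i))).neg)))

lemma measurable_Ifun {n : ℕ} (α β : Fin (n+1) → ℝ) (τ : ℝ) : Measurable (Ifun n α β τ) :=
  (Finset.measurable_prod _ fun i _ =>
      (measurable_rpow_const _).comp (measurable_uMap i)).mul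
    ((measurable_rpow_const _).comp
      (Finset.measurable_sum _ fun j _ =>
        measurable_const.mul ((measurable_rpow_const _).comp (measurable_uMap j))))

lemma geom_step {n : ℕ} {α β : Fin (n+1) → ℝ} {τ : ℝ}
    (hα : ∀ i, 0 < α i) (hβ : ∀ i, 0 < β i) (hτ : 0 < τ) :
    ∫⁻ t in posOrthant n, ENNReal.ofReal (Gfun n α β τ t)
      = ENNReal.ofReal (Gamma (∑ i, α i) / τ)
        * ∫⁻ y in simplexSet n, ENNReal.ofReal (Ifun n α β τ y) := by
  set Fp : ℝ × (Fin n → ℝ) → ENNReal :=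
    fun p => ENNReal.ofReal (p.1 ^ n * Gfun n α β τ (fun i => p.1 * uMap n p.2 i)) with hFp_def
  have hFpmeas : Measurable Fp := by
    apply Measurable.ennreal_ofReal
    exact (measurable_fst.pow_const n).mul
      ((measurable_Gfun α β τ).comp (measurable_pi_lambda _ fun i =>
        measurable_fst.mul ((measurable_uMap i).comp measurable_snd)))
  have h_img := lintegral_image_eq_lintegral_abs_det_fderiv_mul (volume) coneDom_measurable
    (fun z _ => (hasFDerivAt_coneMap z).hasFDerivWithinAt) coneMap_injOn
    (fun t => ENNReal.ofReal (Gfun n α β τ t))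
  rw [coneMap_image] at h_img
  have h_fp : ∀ z ∈ coneDom n,
      ENNReal.ofReal |(Dcone z).det| * ENNReal.ofReal (Gfun n α β τ (coneMap n z))
        = Fp (eEquiv n z) := by
    intro z hz
    rw [mem_coneDom] at hz
    rw [Dcone_det, abs_of_nonneg (pow_nonneg hz.1.le n), eEquiv_apply,
      ← ENNReal.ofReal_mul (pow_nonneg hz.1.le n)]
    rfl
  rw [setLIntegral_congr_fun coneDom_measurable h_fp] at h_img
  have hmp : MeasurePreserving (eEquiv n) volume volume :=
    volume_preserving_piFinSuccAbove (fun _ : Fin (n+1) => ℝ) (Fin.last n)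
  rw [show coneDom n = eEquiv n ⁻¹' ((Ioi (0:ℝ)) ×ˢ simplexSet n) from rfl,
    hmp.setLIntegral_comp_preimage_emb (MeasurableEquiv.measurableEmbedding _) Fp _] at h_img
  rw [Measure.volume_eq_prod, ← Measure.prod_restrict, lintegral_prod_symm Fp hFpmeas.aemeasurable]
    at h_img
  rw [posOrthant, h_img, ← lintegral_const_mul' _ _ ENNReal.ofReal_ne_top]
  exact setLIntegral_congr_fun simplexSet_measurable
    (fun y hy => inner_step hα hβ hτ y hy)

end geom

end InvSchlomilchAux

open InvSchlomilchAux

/-- Normalization of the inverse Schlömilch distribution. -/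
theorem inverse_schlomilch_normalization (K : ℕ) (hK : 2 ≤ K) (α β : Fin K → ℝ)
    (hα : ∀ i, 0 < α i) (hβ : ∀ i, 0 < β i) (τ : ℝ) (hτ : 0 < τ) :
    simplexIntegral K (fun x =>
        (∏ i, x i ^ (-(τ * α i) - 1)) * (∑ j, β j * x j ^ (-τ)) ^ (-(∑ i, α i))) =
      (∏ i, Gamma (α i)) / (τ ^ (K - 1) * Gamma (∑ i, α i) * ∏ i, β i ^ (α i)) := by
  obtain ⟨n, rfl⟩ : ∃ n, K = n + 1 := ⟨K - 1, by omega⟩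
  have hA : 0 < ∑ i, α i := Finset.sum_pos (fun i _ => hα i) Finset.univ_nonempty
  have hΓA : 0 < Gamma (∑ i, α i) := Real.Gamma_pos_of_pos hA
  have hsimp : simplexIntegral (n+1) (fun x =>
      (∏ i, x i ^ (-(τ * α i) - 1)) * (∑ j, β j * x j ^ (-τ)) ^ (-(∑ i, α i)))
      = ∫ y in simplexSet n, Ifun n α β τ y := rfl
  rw [hsimp]
  have hmain := (prod_step hα hβ hτ).symm.trans (geom_step hα hβ hτ)
  have hc : 0 < Gamma (∑ i, α i) / τ := div_pos hΓA hτ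
  have hPb : 0 ≤ ∏ i, (Gamma (α i) / (τ * β i ^ (α i))) :=
    Finset.prod_nonneg fun i _ => div_nonneg (Real.Gamma_pos_of_pos (hα i)).le
      (mul_nonneg hτ.le (Real.rpow_nonneg (hβ i).le _))
  have hJval : (∫⁻ y in simplexSet n, ENNReal.ofReal (Ifun n α β τ y))
      = ENNReal.ofReal ((Gamma (∑ i, α i) / τ)⁻¹ * ∏ i, (Gamma (α i) / (τ * β i ^ (α i)))) := by
    calc (∫⁻ y in simplexSet n, ENNReal.ofReal (Ifun n α β τ y))
        = (ENNReal.ofReal (Gamma (∑ i, α i) / τ))⁻¹ * (ENNReal.ofReal (Gamma (∑ i, α i) / τ)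
            * ∫⁻ y in simplexSet n, ENNReal.ofReal (Ifun n α β τ y)) := by
          rw [← mul_assoc, ENNReal.inv_mul_cancel (ENNReal.ofReal_pos.2 hc).ne'
            ENNReal.ofReal_ne_top, one_mul]
      _ = (ENNReal.ofReal (Gamma (∑ i, α i) / τ))⁻¹
            * ENNReal.ofReal (∏ i, (Gamma (α i) / (τ * β i ^ (α i)))) := by rw [← hmain]
      _ = ENNReal.ofReal (Gamma (∑ i, α i) / τ)⁻¹
            * ENNReal.ofReal (∏ i, (Gamma (α i) / (τ * β i ^ (α i)))) := by
          rw [ENNReal.ofReal_inv_of_pos hc]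
      _ = ENNReal.ofReal ((Gamma (∑ i, α i) / τ)⁻¹
            * ∏ i, (Gamma (α i) / (τ * β i ^ (α i)))) :=
          (ENNReal.ofReal_mul (inv_nonneg.2 hc.le)).symm
  have hnnI : 0 ≤ᵐ[volume.restrict (simplexSet n)] Ifun n α β τ :=
    (ae_restrict_mem simplexSet_measurable).mono fun y hy =>
      mul_nonneg (Finset.prod_nonneg fun i _ => Real.rpow_nonneg (uMap_pos hy i).le _)
        (Real.rpow_nonneg (Finset.sum_nonneg fun j _ =>
          mul_nonneg (hβ j).le (Real.rpow_nonneg (uMap_pos hy j).le _)) _)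
  rw [integral_eq_lintegral_of_nonneg_ae hnnI (measurable_Ifun α β τ).aestronglyMeasurable,
    hJval, ENNReal.toReal_ofReal (mul_nonneg (inv_nonneg.2 hc.le) hPb)]
  have hβprod : 0 < ∏ i, β i ^ (α i) := Finset.prod_pos fun i _ =>
    Real.rpow_pos_of_pos (hβ i) _
  have hτ0 : τ ≠ 0 := hτ.ne'
  have hΓA0 : Gamma (∑ i, α i) ≠ 0 := hΓA.ne'
  have hβ0 : (∏ i, β i ^ (α i)) ≠ 0 := hβprod.ne'
  rw [Finset.prod_div_distrib, Finset.prod_mul_distrib, Finset.prod_const, Finset.card_univ,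
    Fintype.card_fin]
  simp only [Nat.add_sub_cancel]
  rw [inv_div, pow_succ]
  field_simp
end

section
/- Positive definiteness of the Hankel matrix of complete homogeneous symmetric means: Let K ≥ 2 be an integer and X ∈ ℝ^K such that the X_i are not all equal. For a nonnegative integer n define q_n(X) = (K−1)! · ∫_{S_K} (∑_{j=1}^K X_j y_j)^n d^{K−1}y. Then for every nonnegative integer N, the (N+1)×(N+1) real symmetric matrix Q with entries Q_{mn} = q_{m+n}(X), for 0 ≤ m, n ≤ N, is positive definite; that is, ∑_{m=0}^N ∑_{n=0}^N q_{m+n}(X) c_m c_n > 0 for every nonzero vector (c_0,…,c_N) ∈ ℝ^{N+1}. -/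
open MeasureTheory Real

section

variable (K : ℕ) (hK : 2 ≤ K) (X : Fin K → ℝ)

-- the affine map
noncomputable def Fmap (y : Fin (K-1) → ℝ) : ℝ :=
  ∑ j : Fin K, X j * (if h : (j:ℕ) < K - 1 then y ⟨(j:ℕ), h⟩ else 1 - ∑ i, y i)

lemma Fmap_cont : Continuous (Fmap K X) := by
  apply continuous_finset_sum
  intro j _
  by_cases h : (j:ℕ) < K - 1
  · simp only [dif_pos h]; fun_prop
  · simp only [dif_neg h]; fun_prop

lemma Fmap_add (y z : Fin (K-1) → ℝ) : Fmap K X (y + z) + Fmap K X 0 = Fmap K X y + Fmap K X z := by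
  simp only [Fmap]
  rw [← Finset.sum_add_distrib, ← Finset.sum_add_distrib]
  refine Finset.sum_congr rfl fun j _ => ?_
  by_cases h : (j:ℕ) < K - 1
  · simp only [dif_pos h, Pi.add_apply, Pi.zero_apply]; ring
  · simp only [dif_neg h, Pi.add_apply, Pi.zero_apply, Finset.sum_add_distrib,
      Finset.sum_const_zero]; ring

lemma Fmap_smul (a : ℝ) (y : Fin (K-1) → ℝ) :
    Fmap K X (a • y) + a * Fmap K X 0 = a * Fmap K X y + Fmap K X 0 := by
  simp only [Fmap, Finset.mul_sum, ← Finset.sum_add_distrib]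
  refine Finset.sum_congr rfl fun j _ => ?_
  by_cases h : (j:ℕ) < K - 1
  · simp only [dif_pos h, Pi.smul_apply, Pi.zero_apply, smul_eq_mul]; ring
  · simp only [dif_neg h, Pi.smul_apply, Pi.zero_apply, smul_eq_mul, ← Finset.mul_sum,
      Finset.sum_const_zero]; ring

noncomputable def linF : (Fin (K-1) → ℝ) →ₗ[ℝ] ℝ where
  toFun y := Fmap K X y - Fmap K X 0
  map_add' y z := by have := Fmap_add K X y z; ring_nf; ring_nf at this; linarith
  map_smul' a y := by have := Fmap_smul K X a y; simp only [smul_eq_mul, RingHom.id_apply]; linarith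

end

lemma Fmap_zero (K : ℕ) (X : Fin K → ℝ) (hK : 2 ≤ K) : Fmap K X 0 = X ⟨K-1, by omega⟩ := by
  have : ∀ j : Fin K, X j * (if h : (j:ℕ) < K - 1 then (0 : Fin (K-1) → ℝ) ⟨(j:ℕ), h⟩
      else 1 - ∑ i, (0 : Fin (K-1) → ℝ) i) = if j = ⟨K-1, by omega⟩ then X ⟨K-1, by omega⟩ else 0 := by
    intro j
    by_cases h : (j:ℕ) < K - 1
    · have : j ≠ ⟨K-1, by omega⟩ := by intro e; rw [e] at h; simp at h
      simp [dif_pos h, this]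
    · have : j = ⟨K-1, by omega⟩ := by ext; simp; have := j.isLt; omega
      simp [dif_neg h, this]
  simp only [Fmap, this, Finset.sum_ite_eq', Finset.mem_univ, if_pos]

lemma Fmap_single (K : ℕ) (X : Fin K → ℝ) (hK : 2 ≤ K) (k : Fin (K-1)) :
    Fmap K X (Pi.single k 1) = X ⟨(k:ℕ), k.isLt.trans_le (Nat.sub_le K 1)⟩ := by
  have hsum : ∑ i, (Pi.single k 1 : Fin (K-1) → ℝ) i = 1 := by
    simp [Pi.single_apply]
  have : ∀ j : Fin K, X j * (if h : (j:ℕ) < K - 1 then (Pi.single k 1 : Fin (K-1) → ℝ) ⟨(j:ℕ), h⟩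
      else 1 - ∑ i, (Pi.single k 1 : Fin (K-1) → ℝ) i)
      = if j = ⟨(k:ℕ), k.isLt.trans_le (Nat.sub_le K 1)⟩ then X ⟨(k:ℕ), k.isLt.trans_le (Nat.sub_le K 1)⟩ else 0 := by
    intro j
    by_cases h : (j:ℕ) < K - 1
    · by_cases hjk : (j : ℕ) = (k : ℕ)
      · have hj : j = ⟨(k:ℕ), k.isLt.trans_le (Nat.sub_le K 1)⟩ := by ext; exact hjk
        have : (⟨(j:ℕ), h⟩ : Fin (K-1)) = k := by ext; exact hjk
        simp [dif_pos h, this, hj, Pi.single_apply]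
      · have hj : j ≠ ⟨(k:ℕ), k.isLt.trans_le (Nat.sub_le K 1)⟩ := by intro e; apply hjk; rw [e]
        have : (⟨(j:ℕ), h⟩ : Fin (K-1)) ≠ k := by intro e; apply hjk; rw [← e]
        simp [dif_pos h, this, hj, Pi.single_apply]
    · have hj : j ≠ ⟨(k:ℕ), k.isLt.trans_le (Nat.sub_le K 1)⟩ := by
        intro e; apply h; rw [e]; exact k.isLt
      simp [dif_neg h, hsum, hj]
  simp only [Fmap, this, Finset.sum_ite_eq', Finset.mem_univ, if_pos]

lemma Fmap_level_null (K : ℕ) (X : Fin K → ℝ) (hK : 2 ≤ K) (hX : ¬ ∀ i j, X i = X j) (t : ℝ) :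
    volume {y : Fin (K-1) → ℝ | Fmap K X y = t} = 0 := by
  -- find k with X ⟨k⟩ ≠ X last
  have hk : ∃ k : Fin (K-1), X ⟨(k:ℕ), k.isLt.trans_le (Nat.sub_le K 1)⟩ ≠ X ⟨K-1, by omega⟩ := by
    by_contra hcon
    push_neg at hcon
    apply hX
    have hall : ∀ i : Fin K, X i = X ⟨K-1, by omega⟩ := by
      intro i
      by_cases h : (i:ℕ) < K - 1
      · have : i = (⟨(((⟨(i:ℕ), h⟩ : Fin (K-1)) : ℕ)), by omega⟩ : Fin K) := by ext; rfl
        rw [this]; exact hcon ⟨(i:ℕ), h⟩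
      · have : i = ⟨K-1, by omega⟩ := by ext; simp; have := i.isLt; omega
        rw [this]
    intro i j; rw [hall i, hall j]
  obtain ⟨k, hkne⟩ := hk
  have hlinv : linF K X (Pi.single k 1) ≠ 0 := by
    simp only [linF, LinearMap.coe_mk, AddHom.coe_mk, Fmap_single K X hK, Fmap_zero K X hK]
    exact sub_ne_zero_of_ne hkne
  set b := Fmap K X 0 with hb
  have hset : {y : Fin (K-1) → ℝ | Fmap K X y = t}
      = (AffineSubspace.comap (linF K X).toAffineMap
          (AffineSubspace.mk' (t - b) (⊥ : Submodule ℝ ℝ)) : Set (Fin (K-1) → ℝ)) := by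
    ext y
    simp only [Set.mem_setOf_eq, SetLike.mem_coe, AffineSubspace.mem_comap,
      AffineSubspace.mem_mk', Submodule.mem_bot, vsub_eq_sub,
      LinearMap.coe_toAffineMap, linF, LinearMap.coe_mk, AddHom.coe_mk, sub_eq_zero]
    constructor
    · intro h; rw [h]
    · intro h; linarith
  rw [hset]
  apply Measure.addHaar_affineSubspace
  intro htop
  have : ∃ y : Fin (K-1) → ℝ, linF K X y = t - b + 1 := by
    refine ⟨((t - b + 1) / linF K X (Pi.single k 1)) • (Pi.single k 1 : Fin (K-1) → ℝ), ?_⟩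
    rw [LinearMap.map_smul, smul_eq_mul, div_mul_cancel₀ _ hlinv]
  obtain ⟨y, hy⟩ := this
  have : y ∈ AffineSubspace.comap (linF K X).toAffineMap
      (AffineSubspace.mk' (t - b) (⊥ : Submodule ℝ ℝ)) := htop ▸ AffineSubspace.mem_top ℝ _ y
  rw [AffineSubspace.mem_comap, AffineSubspace.mem_mk'] at this
  simp only [Submodule.mem_bot, vsub_eq_sub, sub_eq_zero, LinearMap.coe_toAffineMap] at this
  rw [hy] at this
  linarith



/-- Positive definiteness of the Hankel matrix of complete homogeneous symmetric means. -/
theorem hankel_positive_definite (K : ℕ) (hK : 2 ≤ K) (X : Fin K → ℝ)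
    (hX : ¬ ∀ i j, X i = X j)
    (q : ℕ → ℝ)
    (hq : ∀ n : ℕ, q n = ((K - 1).factorial : ℝ) *
      simplexIntegral K (fun y => (∑ j, X j * y j) ^ n))
    (N : ℕ) (c : Fin (N + 1) → ℝ) (hc : c ≠ 0) :
    0 < ∑ m : Fin (N + 1), ∑ n : Fin (N + 1), q ((m : ℕ) + (n : ℕ)) * c m * c n := by
  classical
  set Δ : Set (Fin (K-1) → ℝ) := {y | (∀ i, 0 < y i) ∧ ∑ i, y i < 1} with hΔdef
  set F : (Fin (K-1) → ℝ) → ℝ := Fmap K X with hFdef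
  have hq' : ∀ n, q n = ((K-1).factorial : ℝ) * ∫ y in Δ, F y ^ n := by
    intro n; rw [hq n]; rfl
  have hFcont : Continuous F := Fmap_cont K X
  -- topology of Δ
  have hΔopen : IsOpen Δ := by
    have h1 : IsOpen {y : Fin (K-1) → ℝ | ∀ i, 0 < y i} := by
      have : {y : Fin (K-1) → ℝ | ∀ i, 0 < y i} = ⋂ i, {y | 0 < y i} := by ext; simp
      rw [this]
      exact isOpen_iInter_of_finite fun i => isOpen_lt continuous_const (continuous_apply i)
    have h2 : IsOpen {y : Fin (K-1) → ℝ | ∑ i, y i < 1} :=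
      isOpen_lt (by fun_prop) continuous_const
    exact h1.inter h2
  have hcomp : IsCompact (closure Δ) := by
    apply IsCompact.closure_of_subset (isCompact_Icc (a := (0 : Fin (K-1) → ℝ)) (b := 1))
    rintro y ⟨h1, h2⟩
    refine ⟨fun i => (h1 i).le, fun i => ?_⟩
    calc y i ≤ ∑ j, y j := Finset.single_le_sum (fun j _ => (h1 j).le) (Finset.mem_univ i)
    _ ≤ 1 := h2.le
  have hint : ∀ g : (Fin (K-1) → ℝ) → ℝ, Continuous g → IntegrableOn g Δ volume := fun g hg =>
    (hg.continuousOn.integrableOn_compact hcomp).mono_set subset_closure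
  -- key identity
  have key : ∑ m : Fin (N + 1), ∑ n : Fin (N + 1), q ((m : ℕ) + (n : ℕ)) * c m * c n
      = ((K-1).factorial : ℝ) * ∫ y in Δ, (∑ m : Fin (N+1), c m * F y ^ (m:ℕ)) ^ 2 := by
    have hswap : ∀ y, (∑ m : Fin (N+1), c m * F y ^ (m:ℕ)) ^ 2
        = ∑ m : Fin (N+1), ∑ n : Fin (N+1), (c m * c n) * F y ^ ((m:ℕ) + (n:ℕ)) := by
      intro y
      rw [sq, Finset.sum_mul_sum]
      exact Finset.sum_congr rfl fun m _ => Finset.sum_congr rfl fun n _ => by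
        rw [pow_add]; ring
    have e1 : ∫ y in Δ, (∑ m : Fin (N+1), c m * F y ^ (m:ℕ)) ^ 2
        = ∑ m : Fin (N+1), ∑ n : Fin (N+1), (c m * c n) * ∫ y in Δ, F y ^ ((m:ℕ)+(n:ℕ)) := by
      simp_rw [hswap]
      rw [integral_finset_sum _ (fun (m : Fin (N+1)) _ => integrable_finset_sum _
        (fun (n : Fin (N+1)) _ => ((hint (fun y => F y ^ ((m:ℕ)+(n:ℕ))) (hFcont.pow _)).const_mul _)))]
      refine Finset.sum_congr rfl fun m _ => ?_
      rw [integral_finset_sum _ (fun (n : Fin (N+1)) _ => ((hint (fun y => F y ^ ((m:ℕ)+(n:ℕ))) (hFcont.pow _)).const_mul _))]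
      exact Finset.sum_congr rfl fun n _ => integral_const_mul _ _
    calc ∑ m : Fin (N + 1), ∑ n : Fin (N + 1), q ((m : ℕ) + (n : ℕ)) * c m * c n
        = ∑ m : Fin (N + 1), ∑ n : Fin (N + 1),
            (c m * c n) * (((K-1).factorial : ℝ) * ∫ y in Δ, F y ^ ((m:ℕ)+(n:ℕ))) := by
          refine Finset.sum_congr rfl fun m _ => Finset.sum_congr rfl fun n _ => ?_
          rw [hq']; ring
      _ = ((K-1).factorial : ℝ) * ∑ m : Fin (N+1), ∑ n : Fin (N+1),
            (c m * c n) * ∫ y in Δ, F y ^ ((m:ℕ)+(n:ℕ)) := by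
          rw [Finset.mul_sum]
          refine Finset.sum_congr rfl fun m _ => ?_
          rw [Finset.mul_sum]
          exact Finset.sum_congr rfl fun n _ => by ring
      _ = ((K-1).factorial : ℝ) * ∫ y in Δ, (∑ m : Fin (N+1), c m * F y ^ (m:ℕ)) ^ 2 := by
          rw [e1]
  rw [key]
  refine mul_pos (by positivity) ?_
  -- positivity of the integral
  set G : (Fin (K-1) → ℝ) → ℝ := fun y => (∑ m : Fin (N+1), c m * F y ^ (m:ℕ)) ^ 2 with hGdef
  have hGcont : Continuous G :=
    (continuous_finset_sum _ fun m _ => continuous_const.mul (hFcont.pow _)).pow 2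
  -- polynomial
  set P : Polynomial ℝ := ∑ m : Fin (N+1), Polynomial.C (c m) * Polynomial.X ^ (m:ℕ) with hPdef
  have heval : ∀ t : ℝ, P.eval t = ∑ m : Fin (N+1), c m * t ^ (m:ℕ) := by
    intro t
    simp [hPdef, Polynomial.eval_finset_sum]
  have hPne : P ≠ 0 := by
    obtain ⟨m0, hm0⟩ : ∃ m0, c m0 ≠ 0 := by
      by_contra hcon; push_neg at hcon; exact hc (funext hcon)
    intro hP0
    apply hm0
    have : P.coeff (m0 : ℕ) = c m0 := by
      simp only [hPdef, Polynomial.finset_sum_coeff, Polynomial.coeff_C_mul,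
        Polynomial.coeff_X_pow]
      rw [Finset.sum_eq_single m0]
      · simp
      · intro n _ hne
        have : ((m0:ℕ) = (n:ℕ)) = False := by
          simp only [eq_iff_iff, iff_false]; exact fun h => hne (Fin.ext h.symm)
        simp [this]
      · simp
    rw [hP0] at this
    simp at this
    exact this.symm
  have hZfin : Set.Finite {t : ℝ | P.IsRoot t} := P.finite_setOf_isRoot hPne
  have hnull : volume {y : Fin (K-1) → ℝ | P.eval (F y) = 0} = 0 := by
    have hsub : {y : Fin (K-1) → ℝ | P.eval (F y) = 0}
        ⊆ ⋃ t ∈ {t : ℝ | P.IsRoot t}, {y | F y = t} := by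
      intro y hy
      simp only [Set.mem_iUnion, Set.mem_setOf_eq]
      exact ⟨F y, hy, rfl⟩
    refine measure_mono_null hsub ?_
    refine (measure_biUnion_null_iff hZfin.countable).mpr fun t _ => ?_
    exact Fmap_level_null K X hK hX t
  -- Δ has positive measure
  have hΔpos : 0 < volume Δ := by
    apply hΔopen.measure_pos volume
    have hK1 : (0:ℝ) < (K:ℝ) - 1 := by
      have h2 : (2:ℝ) ≤ (K:ℝ) := by exact_mod_cast hK
      linarith
    refine ⟨fun _ => 1 / (2 * ((K:ℝ) - 1)), fun i => by positivity, ?_⟩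
    rw [Finset.sum_const, Finset.card_univ, Fintype.card_fin, nsmul_eq_mul]
    have hcast : ((K-1:ℕ):ℝ) = (K:ℝ) - 1 := by
      have h1 : 1 ≤ K := by omega
      push_cast [Nat.cast_sub h1]; ring
    rw [hcast]
    have : ((K:ℝ)-1) * (1/(2*((K:ℝ)-1))) = 1/2 := by field_simp
    rw [this]; norm_num
  have hsup : volume Δ ≤ volume (Function.support G ∩ Δ) := by
    have hsub2 : Δ ⊆ (Function.support G ∩ Δ) ∪ {y | P.eval (F y) = 0} := by
      intro y hy
      by_cases hG : G y = 0
      · right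
        have : (∑ m : Fin (N+1), c m * F y ^ (m:ℕ)) = 0 := by
          have := hG
          rw [hGdef] at this
          exact pow_eq_zero_iff (n := 2) (by norm_num) |>.mp this
        simpa [heval] using this
      · exact Or.inl ⟨hG, hy⟩
    calc volume Δ ≤ volume ((Function.support G ∩ Δ) ∪ {y | P.eval (F y) = 0}) :=
          measure_mono hsub2
      _ ≤ volume (Function.support G ∩ Δ) + volume {y | P.eval (F y) = 0} :=
          measure_union_le _ _
      _ = volume (Function.support G ∩ Δ) := by rw [hnull, add_zero]
  rw [setIntegral_pos_iff_support_of_nonneg_ae ?_ ?_]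
  · exact lt_of_lt_of_le hΔpos hsup
  · filter_upwards with y
    exact sq_nonneg _
  · exact hint G hGcont
end

section
/- Nonnegativity of even-degree complete homogeneous symmetric polynomials: Let K ≥ 1 be an integer, X ∈ ℝ^K, and n a positive integer. Then the complete homogeneous symmetric polynomial of degree 2n evaluated at X, h_{2n}(X) = ∑_{(n_1,…,n_K) ∈ ℕ^K, n_1+…+n_K = 2n} ∏_{i=1}^K X_i^{n_i}, satisfies h_{2n}(X) ≥ 0, with h_{2n}(X) = 0 if and only if X_i = 0 for all i. -/
open MeasureTheory Real Set Finset Nat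

/-- The `m`-th moment integrand of the exponential distribution, as a global function. -/
noncomputable def expMoment (m : ℕ) : ℝ → ℝ :=
  (Set.Ioi (0:ℝ)).indicator (fun t => t ^ m * Real.exp (-t))

lemma expMoment_integrable (m : ℕ) : Integrable (expMoment m) := by
  rw [expMoment, integrable_indicator_iff measurableSet_Ioi]
  have := Real.GammaIntegral_convergent (s := (m:ℝ) + 1) (by positivity)
  refine this.congr_fun (fun x hx => ?_) measurableSet_Ioi
  dsimp only
  rw [add_sub_cancel_right, Real.rpow_natCast, mul_comm]

lemma expMoment_integral (m : ℕ) : ∫ t, expMoment m t = (m ! : ℝ) := by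
  rw [expMoment, integral_indicator measurableSet_Ioi]
  have h1 : Real.Gamma ((m:ℝ) + 1) = ∫ x in Set.Ioi 0, Real.exp (-x) * x ^ (((m:ℝ)+1) - 1) :=
    Real.Gamma_eq_integral (by positivity)
  rw [Real.Gamma_nat_eq_factorial] at h1
  have h2 : ∫ x in Set.Ioi (0:ℝ), x ^ m * Real.exp (-x)
      = ∫ x in Set.Ioi (0:ℝ), Real.exp (-x) * x ^ (((m:ℝ)+1) - 1) := by
    refine setIntegral_congr_fun measurableSet_Ioi (fun x hx => ?_)
    rw [add_sub_cancel_right, Real.rpow_natCast, mul_comm]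
  rw [h2, ← h1]

lemma expMoment_mul (m : ℕ) (t : ℝ) : t ^ m * expMoment 0 t = expMoment m t := by
  unfold expMoment
  by_cases ht : t ∈ Set.Ioi (0:ℝ)
  · simp [Set.indicator_of_mem ht]
  · simp [Set.indicator_of_notMem ht]

lemma expMoment_nonneg (m : ℕ) (t : ℝ) : 0 ≤ expMoment m t := by
  unfold expMoment
  by_cases ht : t ∈ Set.Ioi (0:ℝ)
  · rw [Set.indicator_of_mem ht]
    have : (0:ℝ) < t := ht
    positivity
  · rw [Set.indicator_of_notMem ht]

/-- Nonnegativity of even-degree complete homogeneous symmetric polynomials: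
`h_{2n}(X) ≥ 0`, with equality iff all `X_i = 0`. -/
theorem even_complete_homogeneous_nonneg (K : ℕ) (hK : 1 ≤ K) (X : Fin K → ℝ)
    (n : ℕ) (hn : 0 < n) :
    0 ≤ ∑ v ∈ Finset.Nat.antidiagonalTuple K (2 * n), ∏ i, X i ^ v i ∧
      ((∑ v ∈ Finset.Nat.antidiagonalTuple K (2 * n), ∏ i, X i ^ v i) = 0 ↔
        ∀ i, X i = 0) := by
  set h : ℝ := ∑ v ∈ Finset.Nat.antidiagonalTuple K (2 * n), ∏ i, X i ^ v i with hh
  -- The key integrand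
  set F : (Fin K → ℝ) → ℝ :=
    fun g => (∑ i, X i * g i) ^ (2 * n) * ∏ i, expMoment 0 (g i) with hF
  -- the two antidiagonal finsets coincide
  have hsets : Finset.Nat.antidiagonalTuple K (2 * n)
      = Finset.piAntidiag (Finset.univ : Finset (Fin K)) (2 * n) := by
    ext v
    simp [Finset.Nat.mem_antidiagonalTuple, Finset.mem_piAntidiag]
  -- pointwise expansion of F
  have hFsum : F = fun g => ∑ v ∈ Finset.Nat.antidiagonalTuple K (2 * n),
      ((Nat.multinomial Finset.univ v : ℝ) * ∏ i, X i ^ v i) *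
        ∏ i, expMoment (v i) (g i) := by
    funext g
    rw [hF]
    simp only [Finset.sum_pow_eq_sum_piAntidiag, ← hsets, Finset.sum_mul]
    refine Finset.sum_congr rfl (fun v hv => ?_)
    have key : (∏ i, g i ^ v i) * ∏ i, expMoment 0 (g i) = ∏ i, expMoment (v i) (g i) := by
      rw [← Finset.prod_mul_distrib]
      exact Finset.prod_congr rfl (fun i _ => expMoment_mul (v i) (g i))
    simp only [mul_pow, Finset.prod_mul_distrib]
    rw [mul_assoc, mul_assoc, key, ← mul_assoc]
  -- integrability of F
  have hint : Integrable F := by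
    rw [hFsum]
    refine integrable_finset_sum _ (fun v hv => ?_)
    exact (Integrable.fintype_prod (fun i => expMoment_integrable (v i))).const_mul _
  -- the integral of F equals (2n)! * h
  have hI : ∫ g : Fin K → ℝ, F g = ((2 * n)! : ℝ) * h := by
    rw [hFsum, integral_finset_sum _
      (fun v _ => (Integrable.fintype_prod (fun i => expMoment_integrable (v i))).const_mul _),
      hh, Finset.mul_sum]
    refine Finset.sum_congr rfl (fun v hv => ?_)
    rw [integral_const_mul, MeasureTheory.integral_fintype_prod_volume_eq_prod
      (f := fun i x => expMoment (v i) x)]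
    have hsum : ∑ i, v i = 2 * n := (Finset.Nat.mem_antidiagonalTuple.mp hv)
    have hspec : (∏ i, (v i)!) * Nat.multinomial Finset.univ v = (2 * n)! := by
      rw [Nat.multinomial_spec, hsum]
    simp only [expMoment_integral]
    have : (∏ i, ((v i)! : ℝ)) * (Nat.multinomial Finset.univ v : ℝ) = ((2 * n)! : ℝ) := by
      rw [← Nat.cast_prod, ← Nat.cast_mul, hspec]
    linear_combination (∏ i, X i ^ v i) * this
  -- F is nonnegative
  have hFnn : 0 ≤ F := by
    intro g
    rw [hF]
    have h1 : (0:ℝ) ≤ (∑ i, X i * g i) ^ (2 * n) := (even_two_mul n).pow_nonneg _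
    exact mul_nonneg h1 (Finset.prod_nonneg fun i _ => expMoment_nonneg 0 (g i))
  have hInn : 0 ≤ ∫ g : Fin K → ℝ, F g := integral_nonneg hFnn
  have hfactpos : (0:ℝ) < ((2 * n)! : ℝ) := by positivity
  have h0le : 0 ≤ h := by
    nlinarith [hI, hInn]
  refine ⟨h0le, ?_, ?_⟩
  · -- h = 0 → all X i = 0
    intro hzero
    by_contra hx
    push_neg at hx
    obtain ⟨j, hj⟩ := hx
    -- the support of F has positive measure
    have hIpos : 0 < ∫ g : Fin K → ℝ, F g := by
      rw [integral_pos_iff_support_of_nonneg hFnn hint]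
      -- the orthant minus the hyperplane lies in the support
      set Z : Set (Fin K → ℝ) := {g | ∑ i, X i * g i = 0} with hZ
      set U : Set (Fin K → ℝ) := Set.pi Set.univ (fun _ => Set.Ioi (0:ℝ)) with hU
      have hsub : U \ Z ⊆ Function.support F := by
        intro g hg
        obtain ⟨hgU, hgZ⟩ := hg
        have hpos : ∀ i, 0 < g i := fun i => hgU i (Set.mem_univ i)
        have h1 : (0:ℝ) < (∑ i, X i * g i) ^ (2 * n) := by
          have : (∑ i, X i * g i) ≠ 0 := hgZ
          exact (even_two_mul n).pow_pos this
        have h2 : (0:ℝ) < ∏ i, expMoment 0 (g i) := by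
          refine Finset.prod_pos (fun i _ => ?_)
          have hmem : g i ∈ Set.Ioi (0:ℝ) := hpos i
          rw [expMoment, Set.indicator_of_mem hmem]
          positivity
        simp only [Function.mem_support, hF]
        positivity
      -- Z has measure zero
      have hZnull : volume Z = 0 := by
        set ℓ : (Fin K → ℝ) →ₗ[ℝ] ℝ := ∑ i, X i • LinearMap.proj i with hℓ
        have happ : ∀ g, ℓ g = ∑ i, X i * g i := by
          intro g
          simp [hℓ, LinearMap.sum_apply, LinearMap.smul_apply, smul_eq_mul]
        have hker : Z ⊆ (LinearMap.ker ℓ : Submodule ℝ (Fin K → ℝ)) := by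
          intro g hg
          simp only [SetLike.mem_coe, LinearMap.mem_ker, happ]
          exact hg
        have hne : LinearMap.ker ℓ ≠ ⊤ := by
          intro htop
          have : ℓ (Pi.single j 1) = 0 := by
            rw [← LinearMap.mem_ker, htop]; trivial
          rw [happ] at this
          simp only [Pi.single_apply] at this
          rw [Finset.sum_eq_single j (fun i _ hij => by simp [if_neg hij])
            (fun hj' => absurd (Finset.mem_univ j) hj')] at this
          simp at this
          exact hj this
        refine measure_mono_null hker ?_
        exact Measure.addHaar_submodule volume _ hne
      have hUopen : IsOpen U := isOpen_set_pi Set.finite_univ (fun i _ => isOpen_Ioi)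
      have hUne : U.Nonempty := ⟨fun _ => 1, fun i _ => by norm_num⟩
      have hUpos : 0 < volume U := hUopen.measure_pos volume hUne
      calc (0 : ENNReal) < volume U := hUpos
        _ = volume (U \ Z) := (measure_diff_null hZnull).symm
        _ ≤ volume (Function.support F) := measure_mono hsub
    rw [hI, hzero, mul_zero] at hIpos
    exact lt_irrefl 0 hIpos
  · -- all X i = 0 → h = 0
    intro hX
    rw [hh]
    refine Finset.sum_eq_zero (fun v hv => ?_)
    have hsum : ∑ i, v i = 2 * n := Finset.Nat.mem_antidiagonalTuple.mp hv
    have : ∃ i, v i ≠ 0 := by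
      by_contra hall
      push_neg at hall
      simp [hall] at hsum
      omega
    obtain ⟨i, hi⟩ := this
    refine Finset.prod_eq_zero (Finset.mem_univ i) ?_
    rw [hX i, zero_pow hi]
end
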